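/- arXiv:1401.2257 — 10 statements merged into one kernel-verified Lean document; each statement's English description precedes it below -/
import Mathlib

section
/- Let X be a paracompact Hausdorff topological space, B a real Banach space, and F a multivalued mapping from X to B which is lower semicontinuous and such that for every x ∈ X the value F(x) is a nonempty closed convex subset of B. Then F admits a continuous singlevalued selection, i.e. a continuous map f : X → B with f(x) ∈ F(x) for every x ∈ X. -/
/-!
A partition of unity subordinate to the cover `{x | (F x ∩ ball z δ).Nonempty}` glues constants
into a continuous map that is a `δ`-approximate selection of any lower hemicontinuous convex-valued
map. Applied to `x ↦ F x ∩ ball (gₙ x) 2⁻ⁿ`, which is again lower hemicontinuous, this refines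
a `2⁻ⁿ`-approximate selection `gₙ` to a `2⁻⁽ⁿ⁺¹⁾`-approximate one `gₙ₊₁` that stays within
`2⁻ⁿ + 2⁻⁽ⁿ⁺¹⁾` of `gₙ`. The sequence `gₙ` converges uniformly, and its limit is continuous and
lies in the closed sets `F x`.
-/

open Set Metric Filter Topology

theorem hasOpenCGraph_ball {X B : Type*} [TopologicalSpace X] [PseudoMetricSpace B]
    {g : X → B} (hg : Continuous g) (ε : ℝ) : HasOpenCGraph fun x => ball (g x) ε :=
  isOpen_lt (continuous_snd.dist (hg.comp continuous_fst)) continuous_const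

theorem exists_tendstoUniformly_of_dist_le_geometric {X B : Type*} [PseudoMetricSpace B]
    [CompleteSpace B] {f : ℕ → X → B} {C r : ℝ} (hr₀ : 0 ≤ r) (hr₁ : r < 1)
    (hf : ∀ n x, dist (f n x) (f (n + 1) x) ≤ C * r ^ n) :
    ∃ φ : X → B, TendstoUniformly f φ atTop := by
  choose φ hφ using fun x => cauchySeq_tendsto_of_complete
    (cauchySeq_of_le_geometric r C hr₁ (hf · x))
  refine ⟨φ, Metric.tendstoUniformly_iff.2 fun ε hε => ?_⟩
  have hbound : Tendsto (fun n => C * r ^ n / (1 - r)) atTop (𝓝 0) := by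
    simpa using ((tendsto_pow_atTop_nhds_zero_of_lt_one hr₀ hr₁).const_mul C).div_const (1 - r)
  filter_upwards [hbound.eventually (gt_mem_nhds hε)] with n hn x
  rw [dist_comm]
  exact (dist_le_of_le_geometric_of_tendsto r C hr₁ (hf · x) (hφ x) n).trans_lt hn

theorem IsClosed.mem_of_tendsto_of_mem_thickening {ι B : Type*} [PseudoMetricSpace B]
    {s : Set B} (hs : IsClosed s) {l : Filter ι} [l.NeBot] {u : ι → B} {ε : ι → ℝ} {a : B}
    (hu : Tendsto u l (𝓝 a)) (hε : Tendsto ε l (𝓝 0)) (h : ∀ i, u i ∈ thickening (ε i) s) :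
    a ∈ s := by
  choose z hzs hz using fun i => mem_thickening_iff.1 (h i)
  have hdist : Tendsto (fun i => dist (u i) (z i)) l (𝓝 0) :=
    squeeze_zero (fun _ => dist_nonneg) (fun i => (hz i).le) hε
  exact hs.mem_of_tendsto (hu.congr_dist hdist) (Eventually.of_forall hzs)

namespace LowerHemicontinuous

variable {X B : Type*} [TopologicalSpace X] [NormalSpace X] [ParacompactSpace X]
  [SeminormedAddCommGroup B] [NormedSpace ℝ B] {F : X → Set B}

theorem exists_continuous_mem_thickening (hF : LowerHemicontinuous F)
    (hne : ∀ x, (F x).Nonempty) (hconv : ∀ x, Convex ℝ (F x)) {δ : ℝ} (hδ : 0 < δ) :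
    ∃ g : C(X, B), ∀ x, g x ∈ thickening δ (F x) := by
  refine exists_continuous_forall_mem_convex_of_local_const (fun x => (hconv x).thickening δ)
    fun x => ?_
  obtain ⟨z, hz⟩ := hne x
  refine ⟨z, ?_⟩
  filter_upwards [lowerHemicontinuousAt_iff.1 (hF x) (ball z δ) isOpen_ball
    ⟨z, hz, mem_ball_self hδ⟩] with y ⟨w, hwF, hwz⟩
  exact mem_thickening_iff.2 ⟨w, hwF, by rwa [dist_comm, ← mem_ball]⟩

theorem exists_continuous_mem_thickening_dist_lt (hF : LowerHemicontinuous F)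
    (hconv : ∀ x, Convex ℝ (F x)) {ε δ : ℝ} (hδ : 0 < δ) (g : C(X, B))
    (hg : ∀ x, g x ∈ thickening ε (F x)) :
    ∃ g' : C(X, B), ∀ x, g' x ∈ thickening δ (F x) ∧ dist (g' x) (g x) < ε + δ := by
  have hne : ∀ x, (F x ∩ ball (g x) ε).Nonempty := fun x => by
    obtain ⟨z, hzF, hz⟩ := mem_thickening_iff.1 (hg x)
    exact ⟨z, hzF, by rwa [mem_ball, dist_comm]⟩
  obtain ⟨g', hg'⟩ := (hF.inter_hasOpenCGraph (hasOpenCGraph_ball g.continuous ε))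
    |>.exists_continuous_mem_thickening hne
      (fun x => (hconv x).inter (convex_ball _ _)) hδ
  refine ⟨g', fun x => ⟨thickening_subset_of_subset δ inter_subset_left (hg' x), ?_⟩⟩
  obtain ⟨z, ⟨-, hzg⟩, hz⟩ := mem_thickening_iff.1 (hg' x)
  calc dist (g' x) (g x) ≤ dist (g' x) z + dist z (g x) := dist_triangle _ _ _
    _ < δ + ε := add_lt_add hz hzg
    _ = ε + δ := add_comm δ ε

theorem exists_seq_continuous_mem_thickening (hF : LowerHemicontinuous F)
    (hne : ∀ x, (F x).Nonempty) (hconv : ∀ x, Convex ℝ (F x)) :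
    ∃ g : ℕ → C(X, B), (∀ n x, g n x ∈ thickening ((1 / 2) ^ n) (F x)) ∧
      ∀ n x, dist (g n x) (g (n + 1) x) ≤ 2 * (1 / 2) ^ n := by
  obtain ⟨g₀, hg₀⟩ := hF.exists_continuous_mem_thickening hne hconv one_pos
  choose! next hnext using fun (n : ℕ) (g : C(X, B)) =>
    hF.exists_continuous_mem_thickening_dist_lt hconv
      (ε := (1 / 2) ^ n) (δ := (1 / 2) ^ (n + 1)) (by positivity) g
  let g : ℕ → C(X, B) := fun n => Nat.rec g₀ next n
  have hg : ∀ n x, g n x ∈ thickening ((1 / 2) ^ n) (F x) := by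
    intro n
    induction n with
    | zero => rw [pow_zero]; exact hg₀
    | succ n ih => exact fun x => (hnext n (g n) ih x).1
  refine ⟨g, hg, fun n x => ?_⟩
  rw [dist_comm]
  calc dist (g (n + 1) x) (g n x) ≤ (1 / 2) ^ n + (1 / 2) ^ (n + 1) :=
        (hnext n (g n) (hg n) x).2.le
    _ ≤ 2 * (1 / 2) ^ n := by rw [pow_succ]; linarith [pow_pos (one_half_pos (α := ℝ)) n]

end LowerHemicontinuous

/-- Michael's convexvalued selection theorem: every lower semicontinuous
multivalued mapping from a paracompact Hausdorff space into a real Banach space,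
with nonempty closed convex values, admits a continuous singlevalued selection. -/
theorem michael_convexvalued_selection
    {X B : Type*} [TopologicalSpace X] [ParacompactSpace X] [T2Space X]
    [NormedAddCommGroup B] [NormedSpace ℝ B] [CompleteSpace B]
    (F : X → Set B)
    (hLSC : ∀ U : Set B, IsOpen U → IsOpen {x : X | (F x ∩ U).Nonempty})
    (hne : ∀ x : X, (F x).Nonempty)
    (hclosed : ∀ x : X, IsClosed (F x))
    (hconv : ∀ x : X, Convex ℝ (F x)) :
    ∃ f : X → B, Continuous f ∧ ∀ x : X, f x ∈ F x := by
  have hF : LowerHemicontinuous F := lowerHemicontinuous_iff_isOpen_inter_nonempty.2 hLSC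
  obtain ⟨g, hgF, hgdist⟩ := hF.exists_seq_continuous_mem_thickening hne hconv
  obtain ⟨f, hf⟩ := exists_tendstoUniformly_of_dist_le_geometric (f := fun n => ⇑(g n))
    (by norm_num) (by norm_num) hgdist
  refine ⟨f, hf.continuous (Frequently.of_forall fun n => (g n).continuous), fun x => ?_⟩
  exact (hclosed x).mem_of_tendsto_of_mem_thickening (hf.tendsto_at x)
    (tendsto_pow_atTop_nhds_zero_of_lt_one (by norm_num) (by norm_num)) (hgF · x)
end

section
/- Let X be a paracompact Hausdorff space which is zero-dimensional in the covering-dimension sense, meaning that every open cover of X admits a refinement consisting of pairwise disjoint open sets. Let (Y,d) be a complete metric space and let F be a lower semicontinuous multivalued mapping from X to Y such that every value F(x) is a nonempty closed subset of Y. Then F admits a continuous singlevalued selection. -/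
/-!
In a zero-dimensional space, a relation `P x y` whose fibres `{x | P x y}` are open and cover `X`
is witnessed by a locally constant map: refine the cover to a disjoint open one and pick one `y`
per piece. By lower semicontinuity, `{x | (F x ∩ ball y 2⁻ⁿ⁻¹).Nonempty ∧ dist (gₙ x) y < 2⁻ⁿ}` is
open, so from a continuous `gₙ` with `F x ∩ ball (gₙ x) 2⁻ⁿ ≠ ∅` we get such a `gₙ₊₁` within `2⁻ⁿ`
of `gₙ`. The `gₙ` converge uniformly by completeness, and the limit lies in the closed sets `F x`.
-/

open Metric Filter Topology

def CoveringDimZero (X : Type*) [TopologicalSpace X] : Prop :=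
  ∀ 𝒰 : Set (Set X), (∀ U ∈ 𝒰, IsOpen U) → ⋃₀ 𝒰 = Set.univ →
    ∃ 𝒱 : Set (Set X), (∀ V ∈ 𝒱, IsOpen V) ∧
      𝒱.Pairwise Disjoint ∧ ⋃₀ 𝒱 = Set.univ ∧ ∀ V ∈ 𝒱, ∃ U ∈ 𝒰, V ⊆ U

theorem CoveringDimZero.exists_isLocallyConstant_forall {X Y : Type*} [TopologicalSpace X]
    (hX : CoveringDimZero X) (P : X → Y → Prop) (hP : ∀ y, IsOpen {x | P x y})
    (hex : ∀ x, ∃ y, P x y) : ∃ f : X → Y, IsLocallyConstant f ∧ ∀ x, P x (f x) := by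
  obtain ⟨𝒱, h𝒱open, h𝒱disj, h𝒱cover, h𝒱refine⟩ :=
    hX (Set.range fun y => {x | P x y}) (Set.forall_mem_range.2 hP)
      (Set.eq_univ_of_forall fun x => Set.mem_sUnion.2 ⟨_, ⟨_, rfl⟩, (hex x).choose_spec⟩)
  have hpiece : ∀ V : 𝒱, ∃ y, ∀ x ∈ (V : Set X), P x y := fun ⟨V, hV⟩ => by
    obtain ⟨_, ⟨y, rfl⟩, hVy⟩ := h𝒱refine V hV
    exact ⟨y, hVy⟩
  choose y hy using hpiece
  have hcover : ∀ x, ∃ V ∈ 𝒱, x ∈ V := fun x => Set.mem_sUnion.1 (h𝒱cover ▸ Set.mem_univ x)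
  choose V hV𝒱 hxV using hcover
  have hV_eq : ∀ {x x'}, x' ∈ V x → V x' = V x := fun {x x'} hx' => by
    by_contra hne
    exact Set.disjoint_left.1 (h𝒱disj (hV𝒱 x') (hV𝒱 x) hne) (hxV x') hx'
  refine ⟨fun x => y ⟨V x, hV𝒱 x⟩, ?_, fun x => hy _ x (hxV x)⟩
  refine IsLocallyConstant.iff_exists_open _ |>.2 fun x => ⟨V x, h𝒱open _ (hV𝒱 x), hxV x, ?_⟩
  intro x' hx'
  simp only [hV_eq hx']

theorem exists_tendstoUniformly_of_dist_le_geometric_two {X Y : Type*} [PseudoMetricSpace Y]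
    [CompleteSpace Y] (g : ℕ → X → Y) (C : ℝ)
    (hg : ∀ n x, dist (g n x) (g (n + 1) x) ≤ C / 2 / 2 ^ n) :
    ∃ f : X → Y, TendstoUniformly g f atTop := by
  choose f hf using fun x =>
    cauchySeq_tendsto_of_complete (cauchySeq_of_le_geometric_two (fun n => hg n x))
  refine ⟨f, Metric.tendstoUniformly_iff.2 fun ε hε => ?_⟩
  have hC : Tendsto (fun n : ℕ => C / 2 ^ n) atTop (𝓝 0) :=
    (tendsto_pow_atTop_atTop_of_one_lt one_lt_two).const_div_atTop C
  filter_upwards [hC.eventually (gt_mem_nhds hε)] with n hn x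
  rw [dist_comm]
  exact (dist_le_of_le_geometric_two_of_tendsto (fun n => hg n x) (hf x) n).trans_lt hn

section Selection

variable {X Y : Type*} [TopologicalSpace X] [MetricSpace Y] {F : X → Set Y}

theorem exists_continuous_selection_of_seq_approx [CompleteSpace Y] (hclosed : ∀ x, IsClosed (F x))
    (g : ℕ → X → Y) (hg : ∀ n, Continuous (g n))
    (hgF : ∀ n x, (F x ∩ ball (g n x) (1 / 2 ^ n)).Nonempty)
    (hstep : ∀ n x, dist (g n x) (g (n + 1) x) < 1 / 2 ^ n) :
    ∃ f : X → Y, Continuous f ∧ ∀ x, f x ∈ F x := by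
  obtain ⟨f, hf⟩ := exists_tendstoUniformly_of_dist_le_geometric_two g 2 fun n x => by
    simpa using (hstep n x).le
  refine ⟨f, hf.continuous (Eventually.of_forall hg).frequently, fun x => ?_⟩
  choose z hzF hz using fun n => hgF n x
  have hdist : Tendsto (fun n => dist (g n x) (z n)) atTop (𝓝 0) :=
    squeeze_zero (fun _ => dist_nonneg) (fun n => (mem_ball'.1 (hz n)).le)
      ((tendsto_pow_atTop_atTop_of_one_lt one_lt_two).const_div_atTop 1)
  exact (hclosed x).mem_of_tendsto ((hf.tendsto_at x).congr_dist hdist) (Eventually.of_forall hzF)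

variable (hX : CoveringDimZero X) (hLSC : ∀ U : Set Y, IsOpen U → IsOpen {x | (F x ∩ U).Nonempty})
include hX hLSC

theorem exists_continuous_nonempty_inter_ball (hne : ∀ x, (F x).Nonempty) {δ : ℝ} (hδ : 0 < δ) :
    ∃ g : X → Y, Continuous g ∧ ∀ x, (F x ∩ ball (g x) δ).Nonempty := by
  obtain ⟨g, hg, hgF⟩ := hX.exists_isLocallyConstant_forall
    (fun x y => (F x ∩ ball y δ).Nonempty) (fun y => hLSC _ isOpen_ball)
    fun x => (hne x).imp fun z hz => ⟨z, hz, mem_ball_self hδ⟩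
  exact ⟨g, hg.continuous, hgF⟩

theorem exists_continuous_nonempty_inter_ball_of_dist_lt {g : X → Y} (hg : Continuous g) {ε δ : ℝ}
    (hgF : ∀ x, (F x ∩ ball (g x) ε).Nonempty) (hδ : 0 < δ) :
    ∃ g' : X → Y, Continuous g' ∧ (∀ x, (F x ∩ ball (g' x) δ).Nonempty) ∧
      ∀ x, dist (g x) (g' x) < ε := by
  obtain ⟨g', hg', hg'F⟩ := hX.exists_isLocallyConstant_forall
    (fun x y => (F x ∩ ball y δ).Nonempty ∧ dist (g x) y < ε)
    (fun y => (hLSC _ isOpen_ball).inter (isOpen_lt (hg.dist continuous_const) continuous_const))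
    fun x => (hgF x).imp fun z ⟨hzF, hz⟩ => ⟨⟨z, hzF, mem_ball_self hδ⟩, mem_ball'.1 hz⟩
  exact ⟨g', hg'.continuous, fun x => (hg'F x).1, fun x => (hg'F x).2⟩

theorem exists_seq_continuous_nonempty_inter_ball (hne : ∀ x, (F x).Nonempty) :
    ∃ g : ℕ → X → Y, ∀ n, Continuous (g n) ∧ (∀ x, (F x ∩ ball (g n x) (1 / 2 ^ n)).Nonempty) ∧
      ∀ x, dist (g n x) (g (n + 1) x) < 1 / 2 ^ n := by
  let Approx (n : ℕ) (g : X → Y) : Prop :=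
    Continuous g ∧ ∀ x, (F x ∩ ball (g x) (1 / 2 ^ n)).Nonempty
  obtain ⟨g₀, hg₀⟩ := exists_continuous_nonempty_inter_ball hX hLSC hne (δ := 1) one_pos
  have hnext : ∀ n g, ∃ g', Approx n g →
      Approx (n + 1) g' ∧ ∀ x, dist (g x) (g' x) < 1 / 2 ^ n := fun n g => by
    by_cases hg : Approx n g
    · obtain ⟨g', hg', hg'F, hdist⟩ := exists_continuous_nonempty_inter_ball_of_dist_lt hX hLSC
        hg.1 hg.2 (δ := 1 / 2 ^ (n + 1)) (by positivity)
      exact ⟨g', fun _ => ⟨⟨hg', hg'F⟩, hdist⟩⟩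
    · exact ⟨g, fun h => absurd h hg⟩
  choose next hnext using hnext
  let g : ℕ → X → Y := fun n => Nat.rec g₀ next n
  have hg : ∀ n, Approx n (g n) := fun n => by
    induction n with
    | zero => simpa [Approx, g] using hg₀
    | succ n ih => exact (hnext n _ ih).1
  exact ⟨g, fun n => ⟨(hg n).1, (hg n).2, (hnext n _ (hg n)).2⟩⟩

end Selection

theorem michael_zero_dimensional_selection_general
    {X Y : Type*} [TopologicalSpace X]
    [MetricSpace Y] [CompleteSpace Y]
    (hdim : ∀ 𝒰 : Set (Set X), (∀ U ∈ 𝒰, IsOpen U) → ⋃₀ 𝒰 = Set.univ →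
      ∃ 𝒱 : Set (Set X), (∀ V ∈ 𝒱, IsOpen V) ∧
        𝒱.Pairwise Disjoint ∧ ⋃₀ 𝒱 = Set.univ ∧ ∀ V ∈ 𝒱, ∃ U ∈ 𝒰, V ⊆ U)
    (F : X → Set Y)
    (hLSC : ∀ U : Set Y, IsOpen U → IsOpen {x : X | (F x ∩ U).Nonempty})
    (hne : ∀ x : X, (F x).Nonempty)
    (hclosed : ∀ x : X, IsClosed (F x)) :
    ∃ f : X → Y, Continuous f ∧ ∀ x : X, f x ∈ F x := by
  obtain ⟨g, hg⟩ := exists_seq_continuous_nonempty_inter_ball hdim hLSC hne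
  exact exists_continuous_selection_of_seq_approx hclosed g (fun n => (hg n).1) (fun n => (hg n).2.1)
    fun n => (hg n).2.2

/-- Michael's zero-dimensional selection theorem: every lower semicontinuous
closed-valued multivalued mapping from a zero-dimensional (in the covering sense)
paracompact Hausdorff space into a complete metric space admits a continuous
singlevalued selection. -/
theorem michael_zero_dimensional_selection
    {X Y : Type*} [TopologicalSpace X] [ParacompactSpace X] [T2Space X]
    [MetricSpace Y] [CompleteSpace Y]
    (hdim : ∀ 𝒰 : Set (Set X), (∀ U ∈ 𝒰, IsOpen U) → ⋃₀ 𝒰 = Set.univ →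
      ∃ 𝒱 : Set (Set X), (∀ V ∈ 𝒱, IsOpen V) ∧
        𝒱.Pairwise Disjoint ∧ ⋃₀ 𝒱 = Set.univ ∧ ∀ V ∈ 𝒱, ∃ U ∈ 𝒰, V ⊆ U)
    (F : X → Set Y)
    (hLSC : ∀ U : Set Y, IsOpen U → IsOpen {x : X | (F x ∩ U).Nonempty})
    (hne : ∀ x : X, (F x).Nonempty)
    (hclosed : ∀ x : X, IsClosed (F x)) :
    ∃ f : X → Y, Continuous f ∧ ∀ x : X, f x ∈ F x :=
  michael_zero_dimensional_selection_general hdim F hLSC hne hclosed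
end

section
/- Let X be a paracompact Hausdorff space, (Y,d) a complete metric space, and F a lower semicontinuous multivalued mapping from X to Y such that every value F(x) is a nonempty closed subset of Y. Then there exist multivalued mappings G and H from X to Y such that for every x ∈ X the sets G(x) and H(x) are nonempty compact, G(x) ⊆ H(x) ⊆ F(x), G is lower semicontinuous, and H is upper semicontinuous. -/
/-!
At level `n` choose a locally finite open cover of `X` indexed by tuples `ν ∈ Y^{n+1}`, whose
`ν`-th member only contains points `x` for which `F x` meets every ball `B(νᵢ, 2⁻ⁱ)`, together with
a shrinking of it, and refine each shrunk set at level `n + 1` along the last coordinate. If the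
prefixes of a sequence `τ` eventually keep `x` in the shrunk sets, then `τ` is Cauchy and its limit
lies in `F x`; `G x` is the closure of the set of these limits. `H x` is the intersection over `n`
of the finitely many balls `B̄(νₙ, 3⋅2⁻ⁿ)` with `x` in the closure of the `ν`-th member: it is
closed, totally bounded, lies in `F x` and contains `G x`. Local finiteness makes `H` upper
semicontinuous and openness of the shrunk sets makes `G` lower semicontinuous.
-/

open Set Metric Topology Filter

theorem LocallyFinite.uncurry_of_subset {ι κ X : Type*} [TopologicalSpace X] {f : ι → Set X}
    {g : ι → κ → Set X} (hf : LocallyFinite f) (hg : ∀ i, LocallyFinite (g i))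
    (hgf : ∀ i k, g i k ⊆ f i) : LocallyFinite (Function.uncurry g) := by
  intro x
  obtain ⟨V, hV, hVf⟩ := hf x
  choose W hW hWg using fun i => hg i x
  refine ⟨V ∩ ⋂ i ∈ {i | (f i ∩ V).Nonempty}, W i,
    inter_mem hV ((biInter_mem hVf).2 fun i _ => hW i), ?_⟩
  refine (hVf.biUnion fun i _ => (finite_singleton i).prod (hWg i)).subset ?_
  rintro ⟨i, k⟩ ⟨y, hyg, hyV, hyW⟩
  have hi : (f i ∩ V).Nonempty := ⟨y, hgf i k hyg, hyV⟩
  exact mem_biUnion hi ⟨rfl, y, hyg, mem_iInter₂.1 hyW i hi⟩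

theorem exists_locallyFinite_shrinking {ι X : Type*} [TopologicalSpace X] [ParacompactSpace X]
    [NormalSpace X] {s : Set X} (hs : IsClosed s) {u : ι → Set X} (hu : ∀ i, IsOpen (u i))
    (hsu : s ⊆ ⋃ i, u i) :
    ∃ v w : ι → Set X, (∀ i, IsOpen (v i)) ∧ (∀ i, IsOpen (w i)) ∧ LocallyFinite v ∧
      (∀ i, closure (v i) ⊆ u i) ∧ (∀ i, closure (w i) ⊆ v i) ∧ s ⊆ ⋃ i, w i := by
  obtain ⟨v₀, hv₀, hsv₀, hv₀f, hv₀u⟩ := precise_refinement_set hs u hu hsu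
  obtain ⟨v, hsv, hv, hvv₀⟩ :=
    exists_subset_iUnion_closure_subset hs hv₀ (fun x _ => hv₀f.point_finite x) hsv₀
  have hvf : LocallyFinite v := hv₀f.subset fun i => subset_closure.trans (hvv₀ i)
  obtain ⟨w, hsw, hw, hwv⟩ :=
    exists_subset_iUnion_closure_subset hs hv (fun x _ => hvf.point_finite x) hsv
  exact ⟨v, w, hv, hw, hvf, fun i => (hvv₀ i).trans (hv₀u i), hwv, hsw⟩

namespace MichaelSelection

section Prefix

variable {α : Type*}

def pref (τ : ℕ → α) (n : ℕ) : Fin (n + 1) → α := fun i => τ i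

@[simp]
theorem pref_apply (τ : ℕ → α) (n : ℕ) (i : Fin (n + 1)) : pref τ n i = τ i := rfl

theorem pref_succ (τ : ℕ → α) (n : ℕ) : pref τ (n + 1) = Fin.snoc (pref τ n) (τ (n + 1)) := by
  funext i
  refine Fin.lastCases ?_ (fun i => ?_) i <;> simp

theorem exists_pref_eq_forall_ge (P : ∀ n, (Fin (n + 1) → α) → Prop)
    (hP : ∀ n σ, P n σ → ∃ a, P (n + 1) (Fin.snoc σ a)) {k : ℕ} {ν : Fin (k + 1) → α}
    (hν : P k ν) : ∃ τ : ℕ → α, pref τ k = ν ∧ ∀ n ≥ k, P n (pref τ n) := by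
  choose next hnext using hP
  let node : ∀ m, {σ : Fin (k + m + 1) → α // P (k + m) σ} := fun m =>
    Nat.rec ⟨ν, hν⟩ (fun m σ => ⟨Fin.snoc σ.1 (next _ σ.1 σ.2), hnext _ σ.1 σ.2⟩) m
  have node_le : ∀ m m', m ≤ m' → ∀ i (hi : i < k + m + 1) (hi' : i < k + m' + 1),
      (node m').1 ⟨i, hi'⟩ = (node m).1 ⟨i, hi⟩ := by
    intro m m' hmm'
    induction m', hmm' using Nat.le_induction with
    | base => exact fun _ _ _ => rfl
    | succ m' _ ih =>
      intro i hi hi'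
      exact (Fin.snoc_castSucc (α := fun _ => α) _ _ ⟨i, by omega⟩).trans (ih i hi (by omega))
  let τ : ℕ → α := fun j => (node j).1 ⟨j, by omega⟩
  have hτ : ∀ m, pref τ (k + m) = (node m).1 := by
    intro m
    funext ⟨i, hi⟩
    rcases le_total i m with him | hmi
    · exact (node_le i m him i _ hi).symm
    · exact node_le m i hmi i hi _
  refine ⟨τ, hτ 0, fun n hn => ?_⟩
  obtain ⟨m, rfl⟩ := Nat.exists_eq_add_of_le hn
  exact hτ m ▸ (node m).2

end Prefix

noncomputable def radius (n : ℕ) : ℝ := (2 ^ n)⁻¹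

theorem radius_pos (n : ℕ) : 0 < radius n := by
  unfold radius
  positivity

theorem eventually_mul_radius_lt (C : ℝ) {ε : ℝ} (hε : 0 < ε) :
    ∀ᶠ n in atTop, C * radius n < ε := by
  have h : Tendsto radius atTop (𝓝 0) :=
    tendsto_inv_atTop_zero.comp (tendsto_pow_atTop_atTop_of_one_lt one_lt_two)
  simpa using (h.const_mul C).eventually (gt_mem_nhds (by simpa using hε))

variable {X Y : Type*} [PseudoMetricSpace Y]

theorem mem_closure_of_forall_exists_dist_le {s : Set Y} {z : Y} {C : ℝ}
    (h : ∀ n, ∃ p ∈ s, dist z p ≤ C * radius n) : z ∈ closure s := by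
  refine Metric.mem_closure_iff.2 fun ε hε => ?_
  obtain ⟨n, hn⟩ := (eventually_mul_radius_lt C hε).exists
  obtain ⟨p, hp, hzp⟩ := h n
  exact ⟨p, hp, hzp.trans_lt hn⟩

theorem exists_biInter_subset_of_iInter_subset [CompleteSpace Y] {A : ℕ → Set Y}
    (hA : ∀ n, IsClosed (A n))
    (hcov : ∀ ε > 0, ∃ n, ∃ t : Set Y, t.Finite ∧ A n ⊆ ⋃ y ∈ t, ball y ε)
    {U : Set Y} (hU : IsOpen U) (hAU : ⋂ n, A n ⊆ U) : ∃ n, ⋂ m ≤ n, A m ⊆ U := by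
  by_contra! h
  choose z hzA hzU using fun n => not_subset.1 (h n)
  have hz : TotallyBounded (range z) := by
    refine Metric.totallyBounded_iff.2 fun ε hε => ?_
    obtain ⟨N, t, ht, hNt⟩ := hcov ε hε
    refine ⟨t ∪ z '' Iio N, ht.union ((finite_Iio N).image z), ?_⟩
    rintro _ ⟨j, rfl⟩
    rcases lt_or_ge j N with hj | hj
    · exact mem_biUnion (mem_union_right _ (mem_image_of_mem z hj)) (mem_ball_self hε)
    · obtain ⟨y, hy, hzy⟩ := mem_iUnion₂.1 (hNt (mem_iInter₂.1 (hzA j) N hj))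
      exact mem_biUnion (mem_union_left _ hy) hzy
  obtain ⟨w, -, φ, hφ, hw⟩ := (hz.closure.isCompact_of_isClosed isClosed_closure).tendsto_subseq
    fun j => subset_closure (mem_range_self j)
  have hwA : w ∈ ⋂ n, A n := mem_iInter.2 fun m => (hA m).mem_of_tendsto hw <|
    (hφ.tendsto_atTop.eventually_ge_atTop m).mono fun j hj => mem_iInter₂.1 (hzA (φ j)) m hj
  exact hU.isClosed_compl.mem_of_tendsto hw (.of_forall fun j => hzU (φ j)) (hAU hwA)

def admissible (F : X → Set Y) {n : ℕ} (ν : Fin (n + 1) → Y) : Set X :=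
  {x | ∃ p ∈ F x, ∀ i, dist p (ν i) < radius i}

theorem exists_snoc_mem_admissible {F : X → Set Y} {n : ℕ} {σ : Fin (n + 1) → Y} {x : X}
    (hx : x ∈ admissible F σ) : ∃ y, x ∈ admissible F (Fin.snoc σ y : Fin (n + 2) → Y) := by
  obtain ⟨p, hp, hpσ⟩ := hx
  refine ⟨p, p, hp, Fin.lastCases ?_ fun i => ?_⟩
  · simpa using radius_pos (n + 1)
  · simpa using hpσ i

variable [TopologicalSpace X]

theorem isOpen_admissible {F : X → Set Y}
    (hF : ∀ U : Set Y, IsOpen U → IsOpen {x : X | (F x ∩ U).Nonempty}) {n : ℕ}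
    (ν : Fin (n + 1) → Y) : IsOpen (admissible F ν) := by
  convert hF _ (isOpen_iInter_of_finite fun i => isOpen_ball (x := ν i) (ε := radius i))
  simp [admissible, Set.Nonempty]

structure Level (F : X → Set Y) (n : ℕ) where
  outer : (Fin (n + 1) → Y) → Set X
  inner : (Fin (n + 1) → Y) → Set X
  isOpen_outer : ∀ ν, IsOpen (outer ν)
  isOpen_inner : ∀ ν, IsOpen (inner ν)
  locallyFinite_outer : LocallyFinite outer
  closure_outer_subset : ∀ ν, closure (outer ν) ⊆ admissible F ν
  closure_inner_subset : ∀ ν, closure (inner ν) ⊆ outer ν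

structure Tower (F : X → Set Y) where
  level : ∀ n, Level F n
  outer_snoc_subset : ∀ n σ y, (level (n + 1)).outer (Fin.snoc σ y) ⊆ (level n).outer σ
  closure_inner_subset_iUnion :
    ∀ n σ, closure ((level n).inner σ) ⊆ ⋃ y, (level (n + 1)).inner (Fin.snoc σ y)
  iUnion_inner_zero : ⋃ ν, (level 0).inner ν = univ

section Construction

variable [ParacompactSpace X] [NormalSpace X] {F : X → Set Y}

theorem exists_level_zero (hF : ∀ U : Set Y, IsOpen U → IsOpen {x : X | (F x ∩ U).Nonempty})
    (hne : ∀ x, (F x).Nonempty) :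
    ∃ L : Level F 0, ⋃ ν, L.inner ν = univ := by
  have hcov : univ ⊆ ⋃ ν : Fin 1 → Y, admissible F ν := fun x _ =>
    let ⟨p, hp⟩ := hne x
    mem_iUnion.2 ⟨fun _ => p, p, hp, fun i => by simpa using radius_pos i⟩
  obtain ⟨v, w, hv, hw, hvf, hvu, hwv, hw_univ⟩ :=
    exists_locallyFinite_shrinking isClosed_univ (isOpen_admissible hF) hcov
  exact ⟨⟨v, w, hv, hw, hvf, hvu, hwv⟩, univ_subset_iff.1 hw_univ⟩

theorem exists_level_succ (hF : ∀ U : Set Y, IsOpen U → IsOpen {x : X | (F x ∩ U).Nonempty})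
    {n : ℕ} (L : Level F n) :
    ∃ L' : Level F (n + 1), (∀ σ y, L'.outer (Fin.snoc σ y) ⊆ L.outer σ) ∧
      ∀ σ, closure (L.inner σ) ⊆ ⋃ y, L'.inner (Fin.snoc σ y) := by
  have hcov : ∀ σ, closure (L.inner σ) ⊆ ⋃ y, admissible F (Fin.snoc σ y) ∩ L.outer σ := by
    intro σ x hx
    have hxσ := L.closure_inner_subset σ hx
    obtain ⟨y, hy⟩ := exists_snoc_mem_admissible (L.closure_outer_subset σ (subset_closure hxσ))
    exact mem_iUnion.2 ⟨y, hy, hxσ⟩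
  choose v w hv hw hvf hvu hwv hw_cov using fun σ => exists_locallyFinite_shrinking
    isClosed_closure (fun y => (isOpen_admissible hF _).inter (L.isOpen_outer σ)) (hcov σ)
  have hv_outer : ∀ σ y, v σ y ⊆ L.outer σ := fun σ y =>
    subset_closure.trans ((hvu σ y).trans inter_subset_right)
  have hsplit : Function.Injective fun ν : Fin (n + 2) → Y => (Fin.init ν, ν (Fin.last _)) :=
    Prod.swap_injective.comp (Fin.snocEquiv fun _ => Y).symm.injective
  refine ⟨⟨fun ν => v (Fin.init ν) (ν (Fin.last _)), fun ν => w (Fin.init ν) (ν (Fin.last _)),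
    fun ν => hv _ _, fun ν => hw _ _,
    (L.locallyFinite_outer.uncurry_of_subset hvf hv_outer).comp_injective hsplit,
    fun ν => ?_, fun ν => hwv _ _⟩, fun σ y => ?_, fun σ => ?_⟩
  · simpa only [Fin.snoc_init_self] using
      (hvu (Fin.init ν) (ν (Fin.last _))).trans inter_subset_left
  · simpa using hv_outer σ y
  · simpa using hw_cov σ

theorem Tower.nonempty (hF : ∀ U : Set Y, IsOpen U → IsOpen {x : X | (F x ∩ U).Nonempty})
    (hne : ∀ x, (F x).Nonempty) : Nonempty (Tower F) := by
  obtain ⟨L₀, hL₀⟩ := exists_level_zero hF hne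
  choose next hnext_outer hnext_inner using fun n (L : Level F n) => exists_level_succ hF L
  exact ⟨⟨fun n => Nat.rec L₀ next n, fun n => hnext_outer n _, fun n => hnext_inner n _, hL₀⟩⟩

end Construction

section Selections

variable {F : X → Set Y} (tw : Tower F)

def IsBranch (x : X) (τ : ℕ → Y) : Prop :=
  ∀ᶠ n in atTop, x ∈ closure ((tw.level n).inner (pref τ n))

theorem exists_isBranch {k : ℕ} {ν : Fin (k + 1) → Y} {x : X}
    (hx : x ∈ closure ((tw.level k).inner ν)) : ∃ τ, pref τ k = ν ∧ IsBranch tw x τ := by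
  obtain ⟨τ, hτν, hτ⟩ := exists_pref_eq_forall_ge (fun n σ => x ∈ closure ((tw.level n).inner σ))
    (fun n σ hσ => (mem_iUnion.1 (tw.closure_inner_subset_iUnion n σ hσ)).imp
      fun _ hy => subset_closure hy) hx
  exact ⟨τ, hτν, eventually_atTop.2 ⟨k, hτ⟩⟩

theorem antitone_outer_pref (τ : ℕ → Y) : Antitone fun n => (tw.level n).outer (pref τ n) :=
  antitone_nat_of_succ_le fun n => by
    simpa only [pref_succ] using tw.outer_snoc_subset n (pref τ n) (τ (n + 1))

variable {tw}

theorem IsBranch.mem_outer {x : X} {τ : ℕ → Y} (hτ : IsBranch tw x τ) (n : ℕ) :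
    x ∈ (tw.level n).outer (pref τ n) := by
  obtain ⟨k, hk⟩ := eventually_atTop.1 hτ
  exact antitone_outer_pref tw τ (le_max_left n k)
    ((tw.level _).closure_inner_subset _ (hk _ (le_max_right n k)))

theorem IsBranch.mem_admissible {x : X} {τ : ℕ → Y} (hτ : IsBranch tw x τ) (n : ℕ) :
    x ∈ admissible F (pref τ n) :=
  (tw.level n).closure_outer_subset _ (subset_closure (hτ.mem_outer n))

theorem IsBranch.dist_succ_le {x : X} {τ : ℕ → Y} (hτ : IsBranch tw x τ) (n : ℕ) :
    dist (τ n) (τ (n + 1)) ≤ 3 / 2 / 2 ^ n := by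
  obtain ⟨p, -, hp⟩ := hτ.mem_admissible (n + 1)
  have hn := hp (Fin.castSucc (Fin.last n))
  have hn' := hp (Fin.last (n + 1))
  simp only [pref_apply, Fin.val_castSucc, Fin.val_last, radius] at hn hn'
  calc dist (τ n) (τ (n + 1)) ≤ dist p (τ n) + dist p (τ (n + 1)) := dist_triangle_left _ _ _
    _ ≤ (2 ^ n)⁻¹ + (2 ^ (n + 1))⁻¹ := by linarith
    _ = 3 / 2 / 2 ^ n := by field_simp; ring

theorem IsBranch.cauchySeq {x : X} {τ : ℕ → Y} (hτ : IsBranch tw x τ) : CauchySeq τ :=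
  cauchySeq_of_le_geometric_two hτ.dist_succ_le

theorem IsBranch.dist_le_of_tendsto {x : X} {τ : ℕ → Y} {z : Y} (hτ : IsBranch tw x τ)
    (hz : Tendsto τ atTop (𝓝 z)) (n : ℕ) : dist (τ n) z ≤ 3 * radius n :=
  (dist_le_of_le_geometric_two_of_tendsto hτ.dist_succ_le hz n).trans_eq (div_eq_mul_inv _ _)

variable (tw)

def nearNodes (n : ℕ) (x : X) : Set (Fin (n + 1) → Y) :=
  {ν | x ∈ closure ((tw.level n).outer ν)}

theorem finite_nearNodes (n : ℕ) (x : X) : (nearNodes tw n x).Finite :=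
  (tw.level n).locallyFinite_outer.closure.point_finite x

theorem eventually_nearNodes_subset (n : ℕ) (x₀ : X) :
    ∀ᶠ x in 𝓝 x₀, nearNodes tw n x ⊆ nearNodes tw n x₀ :=
  (tw.level n).locallyFinite_outer.closure.eventually_subset (fun _ => isClosed_closure) x₀

def approx (n : ℕ) (x : X) : Set Y :=
  ⋃ ν ∈ nearNodes tw n x, closedBall (ν (Fin.last n)) (3 * radius n)

theorem isClosed_approx (n : ℕ) (x : X) : IsClosed (approx tw n x) :=
  (finite_nearNodes tw n x).isClosed_biUnion fun _ _ => isClosed_closedBall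

theorem exists_approx_subset_iUnion_ball (x : X) {ε : ℝ} (hε : 0 < ε) :
    ∃ n, ∃ t : Set Y, t.Finite ∧ approx tw n x ⊆ ⋃ y ∈ t, ball y ε := by
  obtain ⟨n, hn⟩ := (eventually_mul_radius_lt 3 hε).exists
  refine ⟨n, (· (Fin.last n)) '' nearNodes tw n x, (finite_nearNodes tw n x).image _, ?_⟩
  rw [biUnion_image]
  exact biUnion_mono subset_rfl fun _ _ => closedBall_subset_ball hn

theorem exists_dist_le_of_mem_approx {n : ℕ} {x : X} {z : Y} (hz : z ∈ approx tw n x) :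
    ∃ p ∈ F x, dist z p ≤ 4 * radius n := by
  obtain ⟨ν, hν, hzν⟩ := mem_iUnion₂.1 hz
  obtain ⟨p, hp, hpν⟩ := (tw.level n).closure_outer_subset ν hν
  refine ⟨p, hp, ?_⟩
  have hp_last := hpν (Fin.last n)
  rw [Fin.val_last, dist_comm] at hp_last
  linarith [dist_triangle z (ν (Fin.last n)) p, mem_closedBall.1 hzν]

def uscSelection (x : X) : Set Y := ⋂ n, approx tw n x

def branchLimits (x : X) : Set Y := {z | ∃ τ, IsBranch tw x τ ∧ Tendsto τ atTop (𝓝 z)}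

def lscSelection (x : X) : Set Y := closure (branchLimits tw x)

theorem uscSelection_subset (hclosed : ∀ x, IsClosed (F x)) (x : X) : uscSelection tw x ⊆ F x :=
  fun _ hz => (hclosed x).closure_subset <| mem_closure_of_forall_exists_dist_le fun n =>
    exists_dist_le_of_mem_approx tw (mem_iInter.1 hz n)

theorem isClosed_uscSelection (x : X) : IsClosed (uscSelection tw x) :=
  isClosed_iInter fun n => isClosed_approx tw n x

theorem isCompact_uscSelection [CompleteSpace Y] (x : X) : IsCompact (uscSelection tw x) := by
  refine TotallyBounded.isCompact_of_isClosed (Metric.totallyBounded_iff.2 fun ε hε => ?_)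
    (isClosed_uscSelection tw x)
  obtain ⟨n, t, ht, hcov⟩ := exists_approx_subset_iUnion_ball tw x hε
  exact ⟨t, ht, (iInter_subset _ n).trans hcov⟩

theorem branchLimits_subset_uscSelection (x : X) : branchLimits tw x ⊆ uscSelection tw x := by
  rintro z ⟨τ, hτ, hz⟩
  refine mem_iInter.2 fun n => mem_iUnion₂.2 ⟨pref τ n, ?_, ?_⟩
  · exact subset_closure (hτ.mem_outer n)
  · simpa [dist_comm] using hτ.dist_le_of_tendsto hz n

theorem lscSelection_subset_uscSelection (x : X) : lscSelection tw x ⊆ uscSelection tw x :=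
  closure_minimal (branchLimits_subset_uscSelection tw x) (isClosed_uscSelection tw x)

theorem branchLimits_nonempty [CompleteSpace Y] (x : X) : (branchLimits tw x).Nonempty := by
  obtain ⟨ν, hν⟩ := mem_iUnion.1 (tw.iUnion_inner_zero ▸ mem_univ x)
  obtain ⟨τ, -, hτ⟩ := exists_isBranch tw (subset_closure hν)
  obtain ⟨z, hz⟩ := cauchySeq_tendsto_of_complete hτ.cauchySeq
  exact ⟨z, τ, hτ, hz⟩

theorem isOpen_setOf_branchLimits_inter_nonempty [CompleteSpace Y] {U : Set Y} (hU : IsOpen U) :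
    IsOpen {x | (branchLimits tw x ∩ U).Nonempty} := by
  refine isOpen_iff_mem_nhds.2 ?_
  rintro x₀ ⟨z, ⟨τ, hτ, hz⟩, hzU⟩
  obtain ⟨ε, hε, hball⟩ := Metric.isOpen_iff.1 hU z hzU
  obtain ⟨n, hx₀, hn⟩ := (hτ.and (eventually_mul_radius_lt 6 hε)).exists
  obtain ⟨y, hy⟩ := mem_iUnion.1 (tw.closure_inner_subset_iUnion n _ hx₀)
  filter_upwards [((tw.level (n + 1)).isOpen_inner _).mem_nhds hy] with x hx
  obtain ⟨ρ, hρ, hρx⟩ := exists_isBranch tw (subset_closure hx)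
  obtain ⟨z', hz'⟩ := cauchySeq_tendsto_of_complete hρx.cauchySeq
  have hρτ : ρ n = τ n := by simpa using congrFun hρ (Fin.castSucc (Fin.last n))
  refine ⟨z', ⟨ρ, hρx, hz'⟩, hball ?_⟩
  calc dist z' z ≤ dist (ρ n) z' + dist (τ n) z := hρτ ▸ dist_triangle_left _ _ _
    _ ≤ 3 * radius n + 3 * radius n :=
      add_le_add (hρx.dist_le_of_tendsto hz' n) (hτ.dist_le_of_tendsto hz n)
    _ < ε := by linarith

theorem isOpen_setOf_lscSelection_inter_nonempty [CompleteSpace Y] (U : Set Y) (hU : IsOpen U) :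
    IsOpen {x | (lscSelection tw x ∩ U).Nonempty} := by
  simpa only [lscSelection, closure_inter_open_nonempty_iff hU] using
    isOpen_setOf_branchLimits_inter_nonempty tw hU

theorem isOpen_setOf_uscSelection_subset [CompleteSpace Y] (U : Set Y) (hU : IsOpen U) :
    IsOpen {x | uscSelection tw x ⊆ U} := by
  refine isOpen_iff_mem_nhds.2 fun x₀ hx₀ => ?_
  obtain ⟨n, hn⟩ := exists_biInter_subset_of_iInter_subset (isClosed_approx tw · x₀)
    (fun _ => exists_approx_subset_iUnion_ball tw x₀) hU hx₀
  filter_upwards [(finite_Iic n).eventually_all.2 fun m _ => eventually_nearNodes_subset tw m x₀]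
    with x hx z hz
  exact hn (mem_iInter₂.2 fun m hm => biUnion_subset_biUnion_left (hx m hm) (mem_iInter.1 hz m))

end Selections

end MichaelSelection

open MichaelSelection

/-- Michael's compactvalued selection theorem: every lower semicontinuous
closed-valued multivalued mapping from a paracompact Hausdorff space into a
complete metric space admits a compactvalued upper semicontinuous selection `H`,
which in turn admits a compactvalued lower semicontinuous selection `G`. -/
theorem michael_compactvalued_selection
    {X Y : Type*} [TopologicalSpace X] [ParacompactSpace X] [T2Space X]
    [MetricSpace Y] [CompleteSpace Y]
    (F : X → Set Y)
    (hLSC : ∀ U : Set Y, IsOpen U → IsOpen {x : X | (F x ∩ U).Nonempty})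
    (hne : ∀ x : X, (F x).Nonempty)
    (hclosed : ∀ x : X, IsClosed (F x)) :
    ∃ G H : X → Set Y,
      (∀ x : X, (G x).Nonempty ∧ IsCompact (G x)) ∧
      (∀ x : X, (H x).Nonempty ∧ IsCompact (H x)) ∧
      (∀ x : X, G x ⊆ H x) ∧ (∀ x : X, H x ⊆ F x) ∧
      (∀ U : Set Y, IsOpen U → IsOpen {x : X | (G x ∩ U).Nonempty}) ∧
      (∀ U : Set Y, IsOpen U → IsOpen {x : X | H x ⊆ U}) := by
  obtain ⟨tw⟩ := Tower.nonempty hLSC hne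
  refine ⟨lscSelection tw, uscSelection tw, fun x => ⟨?_, ?_⟩,
    fun x => ⟨?_, isCompact_uscSelection tw x⟩, lscSelection_subset_uscSelection tw,
    uscSelection_subset tw hclosed, isOpen_setOf_lscSelection_inter_nonempty tw,
    isOpen_setOf_uscSelection_subset tw⟩
  · exact (branchLimits_nonempty tw x).mono subset_closure
  · exact (isCompact_uscSelection tw x).of_isClosed_subset isClosed_closure
      (lscSelection_subset_uscSelection tw x)
  · exact (branchLimits_nonempty tw x).mono (branchLimits_subset_uscSelection tw x)
end

section
/- Localization Principle: let X be a paracompact Hausdorff space, Y a topological vector space over ℝ (addition and scalar multiplication continuous), and F a multivalued mapping from X to Y all of whose values F(x) are nonempty convex subsets of Y. Suppose there exists an open cover 𝒰 of X such that for every U ∈ 𝒰 there is a continuous map s_U : U → Y with s_U(x) ∈ F(x) for all x ∈ U. Then there exists a continuous map f : X → Y with f(x) ∈ F(x) for all x ∈ X. -/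
theorem localization_principle_general
    {X Y : Type*} [TopologicalSpace X] [ParacompactSpace X] [T2Space X]
    [AddCommGroup Y] [Module ℝ Y] [TopologicalSpace Y]
    [IsTopologicalAddGroup Y] [ContinuousSMul ℝ Y]
    (F : X → Set Y)
    (hconv : ∀ x : X, Convex ℝ (F x))
    (𝒰 : Set (Set X))
    (hopen : ∀ U ∈ 𝒰, IsOpen U)
    (hcover : ⋃₀ 𝒰 = Set.univ)
    (hloc : ∀ U ∈ 𝒰, ∃ s : X → Y, ContinuousOn s U ∧ ∀ x ∈ U, s x ∈ F x) :
    ∃ f : X → Y, Continuous f ∧ ∀ x : X, f x ∈ F x := by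
  have hlocal : ∀ x : X, ∃ U ∈ nhds x, ∃ s : X → Y, ContinuousOn s U ∧ ∀ y ∈ U, s y ∈ F y := by
    intro x
    obtain ⟨U, hU, hxU⟩ := Set.mem_sUnion.1 (hcover ▸ Set.mem_univ x)
    exact ⟨U, (hopen U hU).mem_nhds hxU, hloc U hU⟩
  obtain ⟨f, hf⟩ := exists_continuous_forall_mem_convex_of_local hconv hlocal
  exact ⟨f, f.continuous, hf⟩

/-- Localization Principle: if a convexvalued multivalued mapping from a paracompact
Hausdorff space into a real topological vector space admits a continuous singlevalued
selection over each member of some open cover of the domain, then it admits a global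
continuous singlevalued selection. -/
theorem localization_principle
    {X Y : Type*} [TopologicalSpace X] [ParacompactSpace X] [T2Space X]
    [AddCommGroup Y] [Module ℝ Y] [TopologicalSpace Y]
    [IsTopologicalAddGroup Y] [ContinuousSMul ℝ Y]
    (F : X → Set Y)
    (hne : ∀ x : X, (F x).Nonempty)
    (hconv : ∀ x : X, Convex ℝ (F x))
    (𝒰 : Set (Set X))
    (hopen : ∀ U ∈ 𝒰, IsOpen U)
    (hcover : ⋃₀ 𝒰 = Set.univ)
    (hloc : ∀ U ∈ 𝒰, ∃ s : X → Y, ContinuousOn s U ∧ ∀ x ∈ U, s x ∈ F x) :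
    ∃ f : X → Y, Continuous f ∧ ∀ x : X, f x ∈ F x :=
  localization_principle_general F hconv 𝒰 hopen hcover hloc
end

section
/- Let B be a real Banach space, G ⊆ B an open subset, and C ⊆ G a convex subset which is closed in G (that is, C = closure(C) ∩ G). Then for every compact subset K ⊆ C, the closure of the convex hull of K (taken in B) is contained in C. -/
/-!
Cover `K` by finitely many pieces `K ∩ closedBall k (δ / 2)`, with `δ` so small that the
`δ`-thickening of `K` stays in `G`. The closed convex hull of each piece is compact and lies in its
closed ball, hence in `closure C ∩ G = C`. The convex hull of these finitely many compact convex
sets is compact, hence closed; it contains `K` and lies in `C`, so it contains the closed convex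
hull of `K`.
-/

open Set Metric

section ConvexJoin

variable {E : Type*} [AddCommGroup E] [Module ℝ E]

theorem convexJoin_eq_image (s t : Set E) :
    convexJoin ℝ s t =
      (fun p : ℝ × E × E ↦ (1 - p.1) • p.2.1 + p.1 • p.2.2) '' (Icc 0 1 ×ˢ s ×ˢ t) := by
  ext z
  simp only [mem_convexJoin, segment_eq_image, mem_image, mem_prod, Prod.exists]
  constructor
  · rintro ⟨x, hx, y, hy, θ, hθ, rfl⟩
    exact ⟨θ, x, y, ⟨hθ, hx, hy⟩, rfl⟩
  · rintro ⟨θ, x, y, ⟨hθ, hx, hy⟩, rfl⟩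
    exact ⟨x, hx, y, hy, θ, hθ, rfl⟩

variable [TopologicalSpace E]

theorem Convex.closure_convexHull_subset {C G S : Set E} (hC : Convex ℝ C)
    (hCG : C = closure C ∩ G) (hSC : S ⊆ C) (hSG : closure (convexHull ℝ S) ⊆ G) :
    closure (convexHull ℝ S) ⊆ C := by
  rw [hCG]
  exact subset_inter (closure_mono (convexHull_min hSC hC)) hSG

variable [ContinuousAdd E] [ContinuousSMul ℝ E]

theorem IsCompact.convexJoin {s t : Set E} (hs : IsCompact s) (ht : IsCompact t) :
    IsCompact (convexJoin ℝ s t) := by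
  rw [convexJoin_eq_image]
  exact (isCompact_Icc.prod (hs.prod ht)).image (by fun_prop)

theorem Set.Finite.isCompact_convexHull_biUnion {ι : Type*} {T : Set ι} (hT : T.Finite)
    {D : ι → Set E} (hcpt : ∀ i ∈ T, IsCompact (D i)) (hconv : ∀ i ∈ T, Convex ℝ (D i)) :
    IsCompact (convexHull ℝ (⋃ i ∈ T, D i)) := by
  induction T, hT using Set.Finite.induction_on with
  | empty => simp
  | @insert a T _ _ ih =>
    rw [biUnion_insert]
    have ih := ih (fun i hi ↦ hcpt i (mem_insert_of_mem a hi))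
      (fun i hi ↦ hconv i (mem_insert_of_mem a hi))
    have hDa := hcpt a (mem_insert a T)
    rcases (D a).eq_empty_or_nonempty with hDa₀ | hDa₀
    · rwa [hDa₀, empty_union]
    rcases (⋃ i ∈ T, D i).eq_empty_or_nonempty with hU₀ | hU₀
    · rwa [hU₀, union_empty, (hconv a (mem_insert a T)).convexHull_eq]
    rw [convexHull_union hDa₀ hU₀, (hconv a (mem_insert a T)).convexHull_eq]
    exact hDa.convexJoin ih

end ConvexJoin

theorem IsCompact.closure_convexHull {E : Type*} [AddCommGroup E] [Module ℝ E] [UniformSpace E]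
    [IsUniformAddGroup E] [LocallyConvexSpace ℝ E] [ContinuousSMul ℝ E] [CompleteSpace E]
    {K : Set E} (hK : IsCompact K) : IsCompact (closure (convexHull ℝ K)) :=
  (totallyBounded_convexHull.2 hK.totallyBounded).closure.isCompact_of_isClosed isClosed_closure

theorem closure_convexHull_subset_closedBall {E : Type*} [SeminormedAddCommGroup E]
    [NormedSpace ℝ E] {S : Set E} {k : E} {r : ℝ} (hS : S ⊆ closedBall k r) :
    closure (convexHull ℝ S) ⊆ closedBall k r :=
  closure_minimal (convexHull_min hS (convex_closedBall k r)) isClosed_closedBall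

/-- For any compact subset `K` of a convex subset `C` which is closed in an open
subset `G` of a Banach space `B`, the closed (in `B`) convex hull of `K` also
lies in `C`. -/
theorem closed_convexHull_of_compact_subset
    {B : Type*} [NormedAddCommGroup B] [NormedSpace ℝ B] [CompleteSpace B]
    (G : Set B) (hG : IsOpen G)
    (C : Set B) (hCconv : Convex ℝ C) (hCG : C ⊆ G)
    (hCclosed : C = closure C ∩ G)
    (K : Set B) (hK : IsCompact K) (hKC : K ⊆ C) :
    closure (convexHull ℝ K) ⊆ C := by
  obtain ⟨δ, hδ, hδG⟩ := hK.exists_thickening_subset_open hG (hKC.trans hCG)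
  obtain ⟨t, htK, ht, hKt⟩ := hK.finite_cover_balls (half_pos hδ)
  set D : B → Set B := fun k ↦ closure (convexHull ℝ (K ∩ closedBall k (δ / 2)))
  have hDC : ∀ k ∈ t, D k ⊆ C := fun k hk ↦
    hCconv.closure_convexHull_subset hCclosed (inter_subset_left.trans hKC)
      ((closure_convexHull_subset_closedBall inter_subset_right).trans
        ((closedBall_subset_ball (half_lt_self hδ)).trans
          ((ball_subset_thickening (htK hk) δ).trans hδG)))
  have hKD : K ⊆ ⋃ k ∈ t, D k := fun x hx ↦ by
    obtain ⟨k, hk, hxk⟩ := mem_iUnion₂.1 (hKt hx)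
    exact mem_biUnion hk
      (subset_closure (subset_convexHull ℝ _ ⟨hx, ball_subset_closedBall hxk⟩))
  have hM : IsCompact (convexHull ℝ (⋃ k ∈ t, D k)) :=
    ht.isCompact_convexHull_biUnion
      (fun _ _ ↦ (hK.inter_right isClosed_closedBall).closure_convexHull)
      (fun _ _ ↦ (convex_convexHull ℝ _).closure)
  calc closure (convexHull ℝ K)
      ⊆ convexHull ℝ (⋃ k ∈ t, D k) := closure_minimal (convexHull_mono hKD) hM.isClosed
    _ ⊆ C := convexHull_min (iUnion₂_subset hDC) hCconv
end

section
/- Let X be a paracompact Hausdorff space, B a real Banach space, (G_n)_{n∈ℕ} a sequence of open convex subsets of B, and Y = ⋂_{n∈ℕ} G_n. Let F be a lower semicontinuous multivalued mapping from X to B such that every value F(x) is a nonempty convex subset of Y which is closed in Y (that is, F(x) = closure(F(x)) ∩ Y). Then F admits a continuous singlevalued selection f : X → B with f(x) ∈ F(x) for all x ∈ X. -/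
/-!
Approximate selections in the sense of Michael: for a continuous `Φ` that is concave and positive
on the convex set `Y`, a partition of unity gives a continuous `f` with values in `Y` and
`dist (f x, F x) < Φ (f x)`, because `{w ∈ Y | dist (w, F x) < Φ w}` is convex. Iterating with
`Φₙ = 2⁻ⁿ/8 · min (1, d₀, …, dₙ)`, where `dₖ` is the distance to the complement of `Gₖ`, and
restricting `F` each time to a ball around the previous approximation, produces a uniformly Cauchy
sequence. Its limit lies in `closure (F x)`; and since each step moves by at most a fraction
`2⁻ⁿ/8` of the current `dₖ` (for `n ≥ k`), the values `dₖ` along the sequence never drop below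
half their value at step `k`, so the limit stays in every `Gₖ`, i.e. in `Y`.
-/

open Metric Set Filter Topology

def LowerSemicontinuousMultifunction {X B : Type*} [TopologicalSpace X] [TopologicalSpace B]
    (F : X → Set B) : Prop :=
  ∀ U : Set B, IsOpen U → IsOpen {x | (F x ∩ U).Nonempty}

section DistCompl

variable {α : Type*} [PseudoMetricSpace α] {G : Set α} {y : α}

/-- `infDist · Gᶜ`, except for `G = univ`, where `infDist · ∅` would be the junk value `0`. -/
noncomputable def distCompl (G : Set α) : α → ℝ :=
  open Classical in if G = univ then fun _ => 1 else (infDist · Gᶜ)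

lemma lipschitzWith_distCompl (G : Set α) : LipschitzWith 1 (distCompl G) := by
  unfold distCompl
  split_ifs
  exacts [LipschitzWith.const' 1, lipschitz_infDist_pt _]

lemma continuous_distCompl (G : Set α) : Continuous (distCompl G) :=
  (lipschitzWith_distCompl G).continuous

lemma distCompl_nonneg (G : Set α) (y : α) : 0 ≤ distCompl G y := by
  unfold distCompl
  split_ifs
  exacts [zero_le_one, infDist_nonneg]

lemma distCompl_pos (hG : IsOpen G) (hy : y ∈ G) : 0 < distCompl G y := by
  unfold distCompl
  split_ifs with h
  · exact one_pos
  · exact (hG.isClosed_compl.notMem_iff_infDist_pos (nonempty_compl.2 h)).1 (not_not.2 hy)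

lemma mem_of_distCompl_pos (h : 0 < distCompl G y) : y ∈ G := by
  by_contra hy
  unfold distCompl at h
  split_ifs at h with hG
  · exact hy (hG ▸ mem_univ y)
  · exact h.ne' (infDist_zero_of_mem hy)

end DistCompl

section Concavity

variable {E : Type*} [NormedAddCommGroup E] [NormedSpace ℝ E] {G : Set E}

lemma le_norm_of_add_smul_notMem {y w : E} {R : ℝ} (hR : 0 < R) (hy : y ∈ G)
    (h : y + (infDist y Gᶜ / R) • w ∉ G) : R ≤ ‖w‖ := by
  have hr : infDist y Gᶜ ≤ infDist y Gᶜ / R * ‖w‖ := by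
    simpa [norm_smul, abs_of_nonneg infDist_nonneg, abs_of_pos hR] using
      infDist_le_dist_of_mem (x := y) (s := Gᶜ) h
  have hr0 : 0 < infDist y Gᶜ := by
    refine infDist_nonneg.lt_of_ne fun h0 => h ?_
    simpa [← h0] using hy
  rwa [div_mul_eq_mul_div, le_div_iff₀ hR, mul_le_mul_iff_right₀ hr0] at hr

/-- If `z ∉ G` were closer to `a • y₀ + b • y₁` than `a r₀ + b r₁` (with `rᵢ = infDist yᵢ Gᶜ`),
moving `yᵢ` by `rᵢ / (a r₀ + b r₁)` times `z - (a • y₀ + b • y₁)` would give two points of `G`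
whose combination is `z`. -/
theorem Convex.concaveOn_infDist_compl (hG : Convex ℝ G) : ConcaveOn ℝ G (infDist · Gᶜ) := by
  refine ⟨hG, fun y₀ h₀ y₁ h₁ a b ha hb hab => ?_⟩
  simp only [smul_eq_mul]
  rcases Gᶜ.eq_empty_or_nonempty with hc | hc
  · simp [hc]
  set R := a * infDist y₀ Gᶜ + b * infDist y₁ Gᶜ
  by_contra! hlt
  obtain ⟨z, hz, hzR⟩ := (infDist_lt_iff hc).1 hlt
  have hR : 0 < R := dist_nonneg.trans_lt hzR
  set w := z - (a • y₀ + b • y₁)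
  have hw : ‖w‖ < R := by rwa [← dist_eq_norm, dist_comm]
  have hcomb : a • (y₀ + (infDist y₀ Gᶜ / R) • w) + b • (y₁ + (infDist y₁ Gᶜ / R) • w) = z := by
    have hsum : a * (infDist y₀ Gᶜ / R) + b * (infDist y₁ Gᶜ / R) = 1 := by
      rw [mul_div_assoc', mul_div_assoc', ← add_div, div_self hR.ne']
    calc _ = a • y₀ + b • y₁ + (a * (infDist y₀ Gᶜ / R) + b * (infDist y₁ Gᶜ / R)) • w := by
          module
      _ = z := by rw [hsum, one_smul, add_sub_cancel]
  by_cases hz₀ : y₀ + (infDist y₀ Gᶜ / R) • w ∈ G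
  · by_cases hz₁ : y₁ + (infDist y₁ Gᶜ / R) • w ∈ G
    · exact hz (hcomb ▸ hG hz₀ hz₁ ha hb hab)
    · exact hw.not_ge (le_norm_of_add_smul_notMem hR h₁ hz₁)
  · exact hw.not_ge (le_norm_of_add_smul_notMem hR h₀ hz₀)

lemma concaveOn_distCompl (hG : Convex ℝ G) : ConcaveOn ℝ G (distCompl G) := by
  unfold distCompl
  split_ifs
  exacts [concaveOn_const 1 hG, hG.concaveOn_infDist_compl]

end Concavity

section Precision

variable {α : Type*} [PseudoMetricSpace α] {G : ℕ → Set α} {y y' : α} {n k : ℕ}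

noncomputable def minDistCompl (G : ℕ → Set α) : ℕ → α → ℝ
  | 0 => 1 ⊓ distCompl (G 0)
  | n + 1 => minDistCompl G n ⊓ distCompl (G (n + 1))

lemma continuous_minDistCompl (G : ℕ → Set α) (n : ℕ) : Continuous (minDistCompl G n) := by
  induction n with
  | zero => exact continuous_const.inf (continuous_distCompl _)
  | succ n ih => exact ih.inf (continuous_distCompl _)

lemma minDistCompl_pos (hG : ∀ k, IsOpen (G k)) (hy : ∀ k, y ∈ G k) (n : ℕ) :
    0 < minDistCompl G n y := by
  induction n with
  | zero => exact lt_min one_pos (distCompl_pos (hG 0) (hy 0))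
  | succ n ih => exact lt_min ih (distCompl_pos (hG _) (hy _))

lemma minDistCompl_nonneg (G : ℕ → Set α) (n : ℕ) (y : α) : 0 ≤ minDistCompl G n y := by
  induction n with
  | zero => exact le_min zero_le_one (distCompl_nonneg _ _)
  | succ n ih => exact le_min ih (distCompl_nonneg _ _)

lemma minDistCompl_le_one (G : ℕ → Set α) (n : ℕ) (y : α) : minDistCompl G n y ≤ 1 := by
  induction n with
  | zero => exact min_le_left _ _
  | succ n ih => exact (min_le_left _ _).trans ih

lemma minDistCompl_succ_le (G : ℕ → Set α) (n : ℕ) (y : α) :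
    minDistCompl G (n + 1) y ≤ minDistCompl G n y :=
  min_le_left _ _

lemma minDistCompl_le_distCompl (hkn : k ≤ n) : minDistCompl G n y ≤ distCompl (G k) y := by
  induction n, hkn using Nat.le_induction with
  | base => cases k <;> exact min_le_right _ _
  | succ n _ ih => exact (minDistCompl_succ_le G n y).trans ih

lemma concaveOn_minDistCompl {E : Type*} [NormedAddCommGroup E] [NormedSpace ℝ E]
    {G : ℕ → Set E} (hG : ∀ k, Convex ℝ (G k)) (n : ℕ) :
    ConcaveOn ℝ (⋂ k, G k) (minDistCompl G n) := by
  have hY := convex_iInter hG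
  have hd : ∀ k, ConcaveOn ℝ (⋂ k, G k) (distCompl (G k)) := fun k =>
    (concaveOn_distCompl (hG k)).subset (iInter_subset G k) hY
  induction n with
  | zero => exact (concaveOn_const 1 hY).inf (hd 0)
  | succ n ih => exact ih.inf (hd _)

noncomputable def precision (G : ℕ → Set α) (n : ℕ) (y : α) : ℝ :=
  2⁻¹ ^ n / 8 * minDistCompl G n y

lemma continuous_precision (G : ℕ → Set α) (n : ℕ) : Continuous (precision G n) :=
  continuous_const.mul (continuous_minDistCompl G n)

lemma precision_pos (hG : ∀ k, IsOpen (G k)) (hy : ∀ k, y ∈ G k) (n : ℕ) :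
    0 < precision G n y :=
  mul_pos (by positivity) (minDistCompl_pos hG hy n)

lemma precision_le (G : ℕ → Set α) (n : ℕ) (y : α) : precision G n y ≤ 2⁻¹ ^ n := by
  have := minDistCompl_le_one G n y
  unfold precision
  nlinarith [pow_pos (by norm_num : (0 : ℝ) < 2⁻¹) n]

lemma concaveOn_precision {E : Type*} [NormedAddCommGroup E] [NormedSpace ℝ E]
    {G : ℕ → Set E} (hG : ∀ k, Convex ℝ (G k)) (n : ℕ) :
    ConcaveOn ℝ (⋂ k, G k) (precision G n) :=
  (concaveOn_minDistCompl hG n).smul (c := 2⁻¹ ^ n / 8) (by positivity)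

lemma dist_le_of_lt_precision_add (h : dist y' y < precision G n y + precision G (n + 1) y') :
    dist y y' ≤ 2⁻¹ ^ n / 8 * (minDistCompl G n y + minDistCompl G n y') := by
  have hsucc : precision G (n + 1) y' ≤ 2⁻¹ ^ n / 8 * minDistCompl G n y' := by
    unfold precision
    have := minDistCompl_nonneg G (n + 1) y'
    have := minDistCompl_succ_le G n y'
    rw [pow_succ]
    nlinarith [pow_pos (by norm_num : (0 : ℝ) < 2⁻¹) n]
  rw [dist_comm]
  unfold precision at h hsucc
  linarith

lemma dist_le_geometric_of_lt_precision_add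
    (h : dist y' y < precision G n y + precision G (n + 1) y') :
    dist y y' ≤ 4⁻¹ * 2⁻¹ ^ n := by
  have := dist_le_of_lt_precision_add h
  have := minDistCompl_le_one G n y
  have := minDistCompl_le_one G n y'
  nlinarith [pow_pos (by norm_num : (0 : ℝ) < 2⁻¹) n]

end Precision

lemma half_le_of_le_succ_add_geometric {a : ℕ → ℝ} {k : ℕ} (ha : ∀ n, 0 ≤ a n)
    (h : ∀ n, k ≤ n → a n ≤ a (n + 1) + 2⁻¹ ^ n / 8 * (a n + a (n + 1))) {n : ℕ} (hkn : k ≤ n) :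
    a k / 2 ≤ a n := by
  have hpow : ∀ m, 0 < (2⁻¹ : ℝ) ^ m ∧ (2⁻¹ : ℝ) ^ m ≤ 1 := fun m =>
    ⟨by positivity, pow_le_one₀ (by norm_num) (by norm_num)⟩
  -- `a (n + 1) ≥ (1 - 2⁻ⁿ/4) a n`, and `∏ₙ₌ₖ (1 - 2⁻ⁿ/4) ≥ 1 - ∑ₙ₌ₖ 2⁻ⁿ/4 = 1 - 2⁻ᵏ/2 ≥ 1/2`.
  suffices key : ∀ n, k ≤ n → a k * (1 - (2⁻¹ ^ k - 2⁻¹ ^ n) / 2) ≤ a n by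
    nlinarith [key n hkn, ha k, hpow k, hpow n]
  intro n hkn
  induction n, hkn using Nat.le_induction with
  | base => simp
  | succ n hkn ih =>
    have hn := h n hkn
    have hmono : (2⁻¹ : ℝ) ^ n ≤ 2⁻¹ ^ k := pow_le_pow_of_le_one (by norm_num) (by norm_num) hkn
    obtain ⟨ht, ht1⟩ := hpow n
    rw [pow_succ]
    set t : ℝ := 2⁻¹ ^ n
    have hstep : a n * (1 - t / 4) ≤ a (n + 1) := by
      refine le_of_mul_le_mul_right (a := 1 + t / 8) ?_ (by positivity)
      nlinarith [mul_nonneg (ha n) (sq_nonneg t)]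
    have hih := mul_le_mul_of_nonneg_right ih (show 0 ≤ 1 - t / 4 by linarith)
    nlinarith [mul_nonneg (ha k) (mul_nonneg ht.le (show 0 ≤ 2⁻¹ ^ k - t by linarith))]

section Limits

variable {α : Type*} [PseudoMetricSpace α]

lemma mem_closure_of_tendsto_of_dist_le {y v : ℕ → α} {p : α} {S : Set α} {ε : ℕ → ℝ}
    (hy : Tendsto y atTop (𝓝 p)) (hε : Tendsto ε atTop (𝓝 0)) (hv : ∀ n, v n ∈ S)
    (hyv : ∀ n, dist (y n) (v n) ≤ ε n) : p ∈ closure S :=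
  mem_closure_of_tendsto (hy.congr_dist (squeeze_zero (fun _ => dist_nonneg) hyv hε))
    (Eventually.of_forall hv)

lemma mem_of_tendsto_of_dist_lt_precision {G : ℕ → Set α} (hG : ∀ k, IsOpen (G k))
    {y : ℕ → α} {p : α} (hy : Tendsto y atTop (𝓝 p))
    (hstep : ∀ n, dist (y (n + 1)) (y n) < precision G n (y n) + precision G (n + 1) (y (n + 1)))
    {k : ℕ} (hk : y k ∈ G k) : p ∈ G k := by
  set a : ℕ → ℝ := fun n => distCompl (G k) (y n)
  have hrec : ∀ n, k ≤ n → a n ≤ a (n + 1) + 2⁻¹ ^ n / 8 * (a n + a (n + 1)) := fun n hn =>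
    calc a n ≤ a (n + 1) + dist (y n) (y (n + 1)) := by
          simpa using (lipschitzWith_distCompl (G k)).le_add_mul (y n) (y (n + 1))
      _ ≤ a (n + 1) + 2⁻¹ ^ n / 8 * (a n + a (n + 1)) := by
          grw [dist_le_of_lt_precision_add (hstep n), minDistCompl_le_distCompl hn,
            minDistCompl_le_distCompl hn]
  have hlim : Tendsto a atTop (𝓝 (distCompl (G k) p)) :=
    ((continuous_distCompl _).tendsto p).comp hy
  have hhalf : a k / 2 ≤ distCompl (G k) p :=
    ge_of_tendsto hlim <| (eventually_ge_atTop k).mono fun n hn =>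
      half_le_of_le_succ_add_geometric (fun n => distCompl_nonneg _ _) hrec hn
  exact mem_of_distCompl_pos (by linarith [distCompl_pos (hG k) hk])

lemma exists_continuous_tendsto_of_dist_le_geometric {X : Type*} [TopologicalSpace X]
    [CompleteSpace α] {u : ℕ → X → α} (hu : ∀ n, Continuous (u n)) {C r : ℝ} (hr₀ : 0 ≤ r)
    (hr : r < 1) (h : ∀ n x, dist (u n x) (u (n + 1) x) ≤ C * r ^ n) :
    ∃ f : X → α, Continuous f ∧ ∀ x, Tendsto (fun n => u n x) atTop (𝓝 (f x)) := by
  choose f hf using fun x =>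
    cauchySeq_tendsto_of_complete (cauchySeq_of_le_geometric r C hr (h · x))
  have hbound : Tendsto (fun n => C * r ^ n / (1 - r)) atTop (𝓝 0) := by
    simpa using ((tendsto_pow_atTop_nhds_zero_of_lt_one hr₀ hr).const_mul C).div_const (1 - r)
  have huniform : TendstoUniformly u f atTop := by
    rw [Metric.tendstoUniformly_iff]
    intro ε hε
    filter_upwards [hbound.eventually (gt_mem_nhds hε)] with n hn x
    rw [dist_comm]
    exact (dist_le_of_le_geometric_of_tendsto r C hr (h · x) (hf x) n).trans_lt hn
  exact ⟨f, huniform.continuous (Frequently.of_forall hu), hf⟩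

end Limits

lemma LowerSemicontinuousMultifunction.inter_ball {X α : Type*} [TopologicalSpace X]
    [PseudoMetricSpace α] {F : X → Set α} (hF : LowerSemicontinuousMultifunction F)
    {g : X → α} (hg : Continuous g) {r : X → ℝ} (hr : Continuous r) :
    LowerSemicontinuousMultifunction fun x => F x ∩ ball (g x) (r x) := by
  intro U hU
  rw [isOpen_iff_mem_nhds]
  rintro x₀ ⟨z, ⟨hzF, hzg⟩, hzU⟩
  obtain ⟨ε, hε, hεr⟩ : ∃ ε > 0, dist z (g x₀) + ε < r x₀ :=
    ⟨(r x₀ - dist z (g x₀)) / 2, by linarith [mem_ball.1 hzg], by linarith [mem_ball.1 hzg]⟩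
  have hnear : IsOpen {x | dist z (g x) + ε < r x} := isOpen_lt (by fun_prop) hr
  filter_upwards [(hF _ (hU.inter isOpen_ball)).mem_nhds ⟨z, hzF, hzU, mem_ball_self hε⟩,
    hnear.mem_nhds hεr] with x ⟨v, hvF, hvU, hvz⟩ hx
  exact ⟨v, ⟨hvF, mem_ball.2 (by linarith [dist_triangle v z (g x), mem_ball.1 hvz])⟩, hvU⟩

section ApproxSelection

variable {X E : Type*} [TopologicalSpace X] [NormedAddCommGroup E] [NormedSpace ℝ E]
  {F : X → Set E} {Y : Set E}

def IsApproxSelection (F : X → Set E) (Y : Set E) (Φ : E → ℝ) (f : X → E) : Prop :=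
  Continuous f ∧ ∀ x, f x ∈ Y ∧ ∃ v ∈ F x, dist (f x) v < Φ (f x)

variable [ParacompactSpace X] [T2Space X]

lemma exists_isApproxSelection (hF : LowerSemicontinuousMultifunction F)
    (hne : ∀ x, (F x).Nonempty) (hconv : ∀ x, Convex ℝ (F x)) (hsub : ∀ x, F x ⊆ Y)
    {Φ : E → ℝ} (hΦ : ConcaveOn ℝ Y Φ) (hΦpos : ∀ y ∈ Y, 0 < Φ y) :
    ∃ f, IsApproxSelection F Y Φ f := by
  set t : X → Set E := fun x => {w | w ∈ Y ∧ ∃ v ∈ F x, dist w v < Φ w}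
  have ht : ∀ x, Convex ℝ (t x) := by
    intro x
    refine convex_iff_forall_pos.2 ?_
    rintro w₀ ⟨hw₀, v₀, hv₀, h₀⟩ w₁ ⟨hw₁, v₁, hv₁, h₁⟩ a b ha hb hab
    refine ⟨hΦ.1 hw₀ hw₁ ha.le hb.le hab, a • v₀ + b • v₁, hconv x hv₀ hv₁ ha.le hb.le hab, ?_⟩
    calc dist (a • w₀ + b • w₁) (a • v₀ + b • v₁)
        ≤ dist (a • w₀) (a • v₀) + dist (b • w₁) (b • v₁) := dist_add_add_le _ _ _ _
      _ = a * dist w₀ v₀ + b * dist w₁ v₁ := by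
          rw [dist_smul₀, dist_smul₀, Real.norm_of_nonneg ha.le, Real.norm_of_nonneg hb.le]
      _ < a * Φ w₀ + b * Φ w₁ := by gcongr
      _ ≤ Φ (a • w₀ + b • w₁) := hΦ.2 hw₀ hw₁ ha.le hb.le hab
  have hlocal : ∀ x, ∃ c, ∀ᶠ x' in 𝓝 x, c ∈ t x' := by
    intro x
    obtain ⟨z, hz⟩ := hne x
    refine ⟨z, ?_⟩
    filter_upwards [(hF _ isOpen_ball).mem_nhds ⟨z, hz, mem_ball_self (hΦpos z (hsub x hz))⟩]
      with x' ⟨v, hv, hvz⟩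
    exact ⟨hsub x hz, v, hv, mem_ball'.1 hvz⟩
  obtain ⟨f, hf⟩ := exists_continuous_forall_mem_convex_of_local_const ht hlocal
  exact ⟨f, f.continuous, hf⟩

lemma IsApproxSelection.exists_near {Φ Ψ : E → ℝ} {g : X → E}
    (hg : IsApproxSelection F Y Φ g) (hΦ : Continuous Φ) (hF : LowerSemicontinuousMultifunction F)
    (hconv : ∀ x, Convex ℝ (F x)) (hsub : ∀ x, F x ⊆ Y) (hΨ : ConcaveOn ℝ Y Ψ)
    (hΨpos : ∀ y ∈ Y, 0 < Ψ y) :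
    ∃ g', IsApproxSelection F Y Ψ g' ∧ ∀ x, dist (g' x) (g x) < Φ (g x) + Ψ (g' x) := by
  obtain ⟨f, hfc, hf⟩ := exists_isApproxSelection (F := fun x => F x ∩ ball (g x) (Φ (g x)))
    (hF.inter_ball hg.1 (hΦ.comp hg.1))
    (fun x => let ⟨_, v, hv, hgv⟩ := hg.2 x; ⟨v, hv, mem_ball'.2 hgv⟩)
    (fun x => (hconv x).inter (convex_ball _ _)) (fun x => inter_subset_left.trans (hsub x))
    hΨ hΨpos
  refine ⟨f, ⟨hfc, fun x => ?_⟩, fun x => ?_⟩ <;> obtain ⟨hfY, v, ⟨hvF, hvg⟩, hfv⟩ := hf x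
  · exact ⟨hfY, v, hvF, hfv⟩
  · linarith [dist_triangle (f x) v (g x), mem_ball.1 hvg]

lemma exists_seq_isApproxSelection (hF : LowerSemicontinuousMultifunction F)
    (hne : ∀ x, (F x).Nonempty) (hconv : ∀ x, Convex ℝ (F x)) (hsub : ∀ x, F x ⊆ Y)
    {Φ : ℕ → E → ℝ} (hΦc : ∀ n, Continuous (Φ n)) (hΦ : ∀ n, ConcaveOn ℝ Y (Φ n))
    (hΦpos : ∀ n, ∀ y ∈ Y, 0 < Φ n y) :
    ∃ u : ℕ → X → E, ∀ n, IsApproxSelection F Y (Φ n) (u n) ∧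
      ∀ x, dist (u (n + 1) x) (u n x) < Φ n (u n x) + Φ (n + 1) (u (n + 1) x) := by
  obtain ⟨u₀, hu₀⟩ := exists_isApproxSelection hF hne hconv hsub (hΦ 0) (hΦpos 0)
  choose! next hnext hnext_dist using fun n (g : X → E) (hg : IsApproxSelection F Y (Φ n) g) =>
    hg.exists_near (hΦc n) hF hconv hsub (hΦ (n + 1)) (hΦpos (n + 1))
  let u : ℕ → X → E := fun n => Nat.rec u₀ next n
  have hu : ∀ n, IsApproxSelection F Y (Φ n) (u n) := fun n =>
    Nat.rec hu₀ (fun n ih => hnext n _ ih) n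
  exact ⟨u, fun n => ⟨hu n, hnext_dist n _ (hu n)⟩⟩

end ApproxSelection

/-- Selection theorem for a countable intersection of open convex subsets of
a Banach space: every lower semicontinuous mapping of a paracompact Hausdorff
space with nonempty convex values lying in `Y = ⋂ₙ Gₙ` and closed in `Y`
admits a continuous singlevalued selection. -/
theorem selection_into_countable_intersection_of_open_convex
    {X B : Type*} [TopologicalSpace X] [ParacompactSpace X] [T2Space X]
    [NormedAddCommGroup B] [NormedSpace ℝ B] [CompleteSpace B]
    (G : ℕ → Set B) (hGopen : ∀ n, IsOpen (G n)) (hGconv : ∀ n, Convex ℝ (G n))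
    (Y : Set B) (hY : Y = ⋂ n, G n)
    (F : X → Set B)
    (hLSC : ∀ U : Set B, IsOpen U → IsOpen {x : X | (F x ∩ U).Nonempty})
    (hne : ∀ x : X, (F x).Nonempty)
    (hconv : ∀ x : X, Convex ℝ (F x))
    (hsub : ∀ x : X, F x ⊆ Y)
    (hclosed : ∀ x : X, F x = closure (F x) ∩ Y) :
    ∃ f : X → B, Continuous f ∧ ∀ x : X, f x ∈ F x := by
  subst hY
  obtain ⟨u, hu⟩ := exists_seq_isApproxSelection hLSC hne hconv hsub (continuous_precision G)
    (concaveOn_precision hGconv) fun n y hy => precision_pos hGopen (mem_iInter.1 hy) n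
  obtain ⟨f, hfc, hf⟩ := exists_continuous_tendsto_of_dist_le_geometric (fun n => (hu n).1.1)
    (by norm_num) (by norm_num) fun n x => dist_le_geometric_of_lt_precision_add ((hu n).2 x)
  refine ⟨f, hfc, fun x => ?_⟩
  choose v hvF hv using fun n => ((hu n).1.2 x).2
  rw [hclosed x]
  refine ⟨mem_closure_of_tendsto_of_dist_le (hf x)
      (tendsto_pow_atTop_nhds_zero_of_lt_one (by norm_num) (by norm_num)) hvF
      fun n => (hv n).le.trans (precision_le G n _), mem_iInter.2 fun k => ?_⟩
  exact mem_of_tendsto_of_dist_lt_precision hGopen (hf x) (fun n => (hu n).2 x)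
    (mem_iInter.1 ((hu k).1.2 x).1 k)
end

section
/- Dobrowolski–van Mill selection theorem: let E be a real topological vector space whose topology is induced by a metric (not necessarily locally convex), Y ⊆ E a convex subset, and X a metrizable topological space. Let F be a lower semicontinuous multivalued mapping from X to Y such that every value F(x) is a nonempty compact convex subset of Y, and suppose there is N ∈ ℕ such that for every x ∈ X the linear span of the set of differences of points of F(x) (equivalently, the vector span of F(x)) has dimension at most N. Then F admits a continuous singlevalued selection f : X → E with f(x) ∈ F(x) for all x ∈ X. -/
/-!
The proof follows Michael's scheme for convex-valued selections. Given a lower hemicontinuous `G`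
with nonempty compact convex values of dimension at most `N` and a neighbourhood `V` of `0`, pick
`z c ∈ G c` and a small open neighbourhood `O` of `0`; the open sets `{y | G y meets z c + O}`
cover `X`, and gluing the pieces `y ↦ conv (closure (G y ∩ (z c + O)))` with a subordinate
partition of unity gives a map `G' ⊆ G` of the same kind all of whose values have differences
in `V`.

Local convexity of `E` is replaced by the dimension bound: by Carathéodory every point of the
convex hull of a set of dimension at most `N` is a convex combination of `N + 1` of its points, so
the convex hull of a set close to a point stays close to it (balanced neighbourhoods absorb the
weights, and `N + 1`-fold sums of small vectors are small), and the convex hull of a compact set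
is compact.

Iterating along a countable basis of neighbourhoods of `0` gives nested maps whose compact values
shrink; any choice from their intersections is continuous, because each stage is lower
hemicontinuous with uniformly small values.
-/

open Set Filter Topology Pointwise

section ConvexCombinations

variable {E : Type*} [AddCommGroup E] [Module ℝ E]

theorem Set.mem_finsetSum_smul_iff {ι : Type*} (s : Finset ι) (a : ι → ℝ) (S : ι → Set E)
    {y : E} :
    y ∈ ∑ i ∈ s, a i • S i ↔ ∃ z : ι → E, (∀ i ∈ s, z i ∈ S i) ∧ ∑ i ∈ s, a i • z i = y := by
  classical
  rw [mem_finsetSum]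
  constructor
  · rintro ⟨g, hg, rfl⟩
    choose! z hz hgz using fun i (hi : i ∈ s) => mem_smul_set.1 (hg hi)
    exact ⟨z, hz, Finset.sum_congr rfl hgz⟩
  · rintro ⟨z, hz, rfl⟩
    exact ⟨fun i => a i • z i, fun hi => smul_mem_smul_set (hz _ hi), rfl⟩

theorem convexHull_eq_iUnion_sum_smul (D : Set E) :
    convexHull ℝ D = ⋃ (n : ℕ) (w ∈ stdSimplex ℝ (Fin n)), ∑ i, w i • D := by
  ext y
  simp only [mem_iUnion, mem_finsetSum_smul_iff, Finset.mem_univ, true_implies, exists_prop]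
  constructor
  · intro hy
    obtain ⟨ι, _, w, z, hw₀, hw₁, hz, rfl⟩ := mem_convexHull_iff_exists_fintype.1 hy
    let e := Fintype.equivFin ι
    refine ⟨Fintype.card ι, w ∘ e.symm, ⟨fun i => hw₀ _, ?_⟩, z ∘ e.symm, fun i => hz _, ?_⟩
    · rw [← hw₁]
      exact Fintype.sum_equiv e.symm _ _ fun _ => rfl
    · exact Fintype.sum_equiv e.symm _ _ fun _ => rfl
  · rintro ⟨n, w, ⟨hw₀, hw₁⟩, z, hz, rfl⟩
    exact mem_convexHull_of_exists_fintype w z hw₀ hw₁ hz rfl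

theorem vectorSpan_le_of_subset {D : Set E} {P : Submodule ℝ E} (h : D ⊆ P) :
    vectorSpan ℝ D ≤ P :=
  Submodule.span_le.2 <| by
    rintro _ ⟨a, ha, b, hb, rfl⟩
    exact P.sub_mem (h ha) (h hb)

theorem exists_fin_sum_smul_eq_of_card_le {ι : Type*} [Fintype ι] {n : ℕ}
    (hn : Fintype.card ι ≤ n) {w : ι → ℝ} (hw : w ∈ stdSimplex ℝ ι) (z : ι → E) :
    ∃ w' ∈ stdSimplex ℝ (Fin n), ∃ z' : Fin n → E, range z' ⊆ range z ∧
      ∑ i, w' i • z' i = ∑ i, w i • z i := by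
  obtain ⟨e⟩ := Function.Embedding.nonempty_of_card_le (hn.trans (Fintype.card_fin n).ge)
  obtain ⟨i₀⟩ : Nonempty ι := by
    by_contra h
    simpa [not_nonempty_iff.1 h] using hw.2
  set w' : Fin n → ℝ := Function.extend e w 0
  set z' : Fin n → E := Function.extend e z fun _ => z i₀
  have hw'_out : ∀ j ∉ range e, w' j = 0 := fun j hj => by
    simp only [w', Function.extend_apply' _ _ _ (by simpa using hj), Pi.zero_apply]
  have hw'e : ∀ i, w i = w' (e i) := fun i => (e.injective.extend_apply _ _ _).symm
  have hz'e : ∀ i, z i = z' (e i) := fun i => (e.injective.extend_apply _ _ _).symm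
  refine ⟨w', ⟨fun j => ?_, ?_⟩, z', ?_, ?_⟩
  · by_cases hj : j ∈ range e
    · obtain ⟨i, rfl⟩ := hj
      exact hw'e i ▸ hw.1 i
    · exact (hw'_out j hj).ge
  · rw [← hw.2]
    exact (Fintype.sum_of_injective e e.injective w w' hw'_out hw'e).symm
  · rintro _ ⟨j, rfl⟩
    by_cases hj : j ∈ range e
    · obtain ⟨i, rfl⟩ := hj
      exact ⟨i, hz'e i⟩
    · simp only [z', Function.extend_apply' _ _ _ (by simpa using hj)]
      exact mem_range_self i₀
  · refine (Fintype.sum_of_injective e e.injective _ _ (fun j hj => ?_) fun i => ?_).symm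
    · rw [hw'_out j hj, zero_smul]
    · rw [hw'e, hz'e]

theorem exists_fin_sum_smul_eq_of_mem_convexHull {D : Set E} {N : ℕ}
    (hD : Module.rank ℝ (vectorSpan ℝ D) ≤ N) {x : E} (hx : x ∈ convexHull ℝ D) :
    ∃ w ∈ stdSimplex ℝ (Fin (N + 1)), ∃ z : Fin (N + 1) → E, (∀ i, z i ∈ D) ∧
      ∑ i, w i • z i = x := by
  obtain ⟨ι, _, z, w, hzD, hz, hw₀, hw₁, rfl⟩ := eq_pos_convex_span_of_mem_convexHull hx
  have : FiniteDimensional ℝ (vectorSpan ℝ D) :=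
    Module.rank_lt_aleph0_iff.1 (hD.trans_lt Cardinal.natCast_lt_aleph0)
  have hcard : Fintype.card ι ≤ N + 1 :=
    calc Fintype.card ι ≤ Module.finrank ℝ (vectorSpan ℝ (range z)) + 1 := hz.card_le_finrank_succ
      _ ≤ Module.finrank ℝ (vectorSpan ℝ D) + 1 := by
        gcongr
        exact Submodule.finrank_mono (vectorSpan_mono ℝ hzD)
      _ ≤ N + 1 := by simpa using Module.finrank_le_of_rank_le hD
  obtain ⟨w', hw', z', hz', hsum⟩ :=
    exists_fin_sum_smul_eq_of_card_le hcard ⟨fun i => (hw₀ i).le, hw₁⟩ z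
  exact ⟨w', hw', z', fun i => hzD (hz' (mem_range_self i)), hsum⟩

theorem Convex.finsetSum_smul_subset {ι : Type*} {C : Set E} (hC : Convex ℝ C) {s : Finset ι}
    {a : ι → ℝ} (ha₀ : ∀ i ∈ s, 0 ≤ a i) (ha₁ : ∑ i ∈ s, a i = 1) {S : ι → Set E}
    (hS : ∀ i ∈ s, S i ⊆ C) : ∑ i ∈ s, a i • S i ⊆ C := by
  intro y hy
  obtain ⟨z, hz, rfl⟩ := (mem_finsetSum_smul_iff s a S).1 hy
  exact hC.sum_mem ha₀ ha₁ fun i hi => hS i hi (hz i hi)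

theorem finsetSum_smul_sub_subset_convexHull {ι : Type*} {s : Finset ι} {a : ι → ℝ}
    (ha₀ : ∀ i ∈ s, 0 ≤ a i) (ha₁ : ∑ i ∈ s, a i = 1) (S : ι → Set E) :
    (∑ i ∈ s, a i • S i) - ∑ i ∈ s, a i • S i ⊆ convexHull ℝ (⋃ i ∈ s, S i - S i) := by
  rintro _ ⟨_, hy₁, _, hy₂, rfl⟩
  obtain ⟨z₁, hz₁, rfl⟩ := (mem_finsetSum_smul_iff s a S).1 hy₁
  obtain ⟨z₂, hz₂, rfl⟩ := (mem_finsetSum_smul_iff s a S).1 hy₂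
  dsimp only
  simp only [← Finset.sum_sub_distrib, ← smul_sub]
  exact (convex_convexHull ℝ _).sum_mem ha₀ ha₁ fun i hi =>
    subset_convexHull ℝ _ (mem_iUnion₂.2 ⟨i, hi, sub_mem_sub (hz₁ i hi) (hz₂ i hi)⟩)

end ConvexCombinations

theorem exists_nhds_zero_forall_sum_mem {M : Type*} [AddCommMonoid M] [TopologicalSpace M]
    [ContinuousAdd M] (k : ℕ) {V : Set M} (hV : V ∈ 𝓝 0) :
    ∃ W ∈ 𝓝 (0 : M), ∀ f : Fin k → M, (∀ i, f i ∈ W) → ∑ i, f i ∈ V := by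
  induction k generalizing V with
  | zero => exact ⟨V, hV, fun f _ => by simpa using mem_of_mem_nhds hV⟩
  | succ k ih =>
    obtain ⟨V', hV', hV'V⟩ := exists_nhds_zero_half hV
    obtain ⟨W, hW, hWV'⟩ := ih hV'
    refine ⟨W ∩ V', inter_mem hW hV', fun f hf => ?_⟩
    rw [Fin.sum_univ_succ]
    exact hV'V _ (hf 0).2 _ (hWV' _ fun i => (hf i.succ).1)

section TopologicalVectorSpace

variable {E : Type*} [AddCommGroup E] [Module ℝ E] [TopologicalSpace E] [ContinuousAdd E]
  [ContinuousSMul ℝ E]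

theorem IsCompact.convexHull_of_rank_le {K : Set E} {N : ℕ} (hK : IsCompact K)
    (hrank : Module.rank ℝ (vectorSpan ℝ K) ≤ N) : IsCompact (convexHull ℝ K) := by
  have : convexHull ℝ K = (fun q : (Fin (N + 1) → ℝ) × (Fin (N + 1) → E) => ∑ i, q.1 i • q.2 i) ''
      (stdSimplex ℝ (Fin (N + 1)) ×ˢ univ.pi fun _ => K) := by
    refine Subset.antisymm (fun x hx => ?_) ?_
    · obtain ⟨w, hw, z, hz, rfl⟩ := exists_fin_sum_smul_eq_of_mem_convexHull hrank hx
      exact ⟨(w, z), ⟨hw, fun i _ => hz i⟩, rfl⟩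
    · rintro _ ⟨⟨w, z⟩, ⟨⟨hw₀, hw₁⟩, hz⟩, rfl⟩
      exact mem_convexHull_of_exists_fintype w z hw₀ hw₁ (fun i => hz i (mem_univ i)) rfl
  rw [this]
  exact ((isCompact_stdSimplex ℝ _).prod (isCompact_univ_pi fun _ => hK)).image (by fun_prop)

theorem isCompact_finsetSum_smul {ι : Type*} (s : Finset ι) (a : ι → ℝ) {S : ι → Set E}
    (hS : ∀ i ∈ s, IsCompact (S i)) : IsCompact (∑ i ∈ s, a i • S i) := by
  classical
  induction s using Finset.induction_on with
  | empty => simp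
  | insert i s hi ih =>
    rw [Finset.sum_insert hi]
    exact ((hS i (s.mem_insert_self i)).smul (a i)).add
      (ih fun j hj => hS j (Finset.mem_insert_of_mem hj))

theorem exists_nhds_zero_forall_convexHull_sub_mem (N : ℕ) {V : Set E} (hV : V ∈ 𝓝 0) :
    ∃ W ∈ 𝓝 (0 : E), ∀ D : Set E, Module.rank ℝ (vectorSpan ℝ D) ≤ N → ∀ a : E,
      (∀ y ∈ D, y - a ∈ W) → ∀ y ∈ convexHull ℝ D, y - a ∈ V := by
  obtain ⟨W, hW, hWV⟩ := exists_nhds_zero_forall_sum_mem (N + 1) hV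
  refine ⟨balancedCore ℝ W, balancedCore_mem_nhds_zero hW, fun D hD a hDW y hy => ?_⟩
  obtain ⟨w, hw, z, hz, rfl⟩ := exists_fin_sum_smul_eq_of_mem_convexHull hD hy
  have : ∑ i, w i • z i - a = ∑ i, w i • (z i - a) := by
    simp only [smul_sub, Finset.sum_sub_distrib, ← Finset.sum_smul, hw.2, one_smul]
  rw [this]
  refine hWV _ fun i =>
    balancedCore_subset W ((balancedCore_balanced W).smul_mem ?_ (hDW _ (hz i)))
  rw [Real.norm_of_nonneg (hw.1 i)]
  exact (mem_Icc_of_mem_stdSimplex hw i).2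

end TopologicalVectorSpace

section SmallCombinations

variable {E : Type*} [AddCommGroup E] [Module ℝ E] [TopologicalSpace E] [IsTopologicalAddGroup E]
  [ContinuousSMul ℝ E]

theorem exists_nhds_zero_finsetSum_smul_sub_subset (N : ℕ) {V : Set E} (hV : V ∈ 𝓝 0) :
    ∃ W ∈ 𝓝 (0 : E), ∀ {ι : Type*} (s : Finset ι) (a : ι → ℝ), (∀ i ∈ s, 0 ≤ a i) →
      ∑ i ∈ s, a i = 1 → ∀ (S : ι → Set E) (z : ι → E) (C : Set E),
      Module.rank ℝ (vectorSpan ℝ C) ≤ N → (∀ i ∈ s, S i ⊆ C) →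
      (∀ i ∈ s, ∀ v ∈ S i, v - z i ∈ W) → (∑ i ∈ s, a i • S i) - ∑ i ∈ s, a i • S i ⊆ V := by
  obtain ⟨W₁, hW₁, hW₁V⟩ := exists_nhds_zero_forall_convexHull_sub_mem N hV
  obtain ⟨W, hW, hWW₁⟩ := exists_nhds_half_neg hW₁
  refine ⟨W, hW, fun s a ha₀ ha₁ S z C hC hSC hSW y hy => ?_⟩
  have hD : ⋃ i ∈ s, S i - S i ⊆ vectorSpan ℝ C := by
    simp only [iUnion_subset_iff]
    rintro i hi _ ⟨σ, hσ, τ, hτ, rfl⟩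
    exact vsub_mem_vectorSpan ℝ (hSC i hi hσ) (hSC i hi hτ)
  have hD_small : ∀ d ∈ ⋃ i ∈ s, S i - S i, d - 0 ∈ W₁ := by
    simp only [mem_iUnion]
    rintro _ ⟨i, hi, σ, hσ, τ, hτ, rfl⟩
    show σ - τ - 0 ∈ W₁
    rw [sub_zero, ← sub_sub_sub_cancel_right σ τ (z i)]
    exact hWW₁ _ (hSW i hi σ hσ) _ (hSW i hi τ hτ)
  simpa using hW₁V _ ((Submodule.rank_mono (vectorSpan_le_of_subset hD)).trans hC) 0 hD_small _
    (finsetSum_smul_sub_subset_convexHull ha₀ ha₁ S hy)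

end SmallCombinations

section LowerHemicontinuous

variable {X α β γ : Type*} [TopologicalSpace X] [TopologicalSpace α] [TopologicalSpace β]
  [TopologicalSpace γ]

theorem LowerHemicontinuous.eventually_inter_nonempty {F : X → Set α}
    (hF : LowerHemicontinuous F) {x : X} {u : Set α} (hu : IsOpen u) (hx : (F x ∩ u).Nonempty) :
    ∀ᶠ x' in 𝓝 x, (F x' ∩ u).Nonempty :=
  lowerHemicontinuousAt_iff.1 (hF x) u hu hx

theorem lowerHemicontinuous_of_forall_exists_eventuallyEq {F : X → Set α}
    (h : ∀ x, ∃ A : X → Set α, LowerHemicontinuous A ∧ A =ᶠ[𝓝 x] F) :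
    LowerHemicontinuous F := fun x => lowerHemicontinuousAt_iff.2 fun u hu hx => by
  obtain ⟨A, hA, hAF⟩ := h x
  filter_upwards [hA.eventually_inter_nonempty hu (hAF.eq_of_nhds ▸ hx), hAF] with x' hx' hAF'
  rwa [← hAF']

theorem LowerHemicontinuous.closure {F : X → Set α} (hF : LowerHemicontinuous F) :
    LowerHemicontinuous fun x => closure (F x) :=
  fun x => lowerHemicontinuousAt_iff.2 fun u hu hx => by
    simp only [closure_inter_open_nonempty_iff hu] at hx ⊢
    exact hF.eventually_inter_nonempty hu hx

theorem LowerHemicontinuous.iUnion {ι : Sort*} {F : ι → X → Set α}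
    (hF : ∀ i, LowerHemicontinuous (F i)) : LowerHemicontinuous fun x => ⋃ i, F i x :=
  fun x => lowerHemicontinuousAt_iff.2 fun u hu ⟨y, hy, hyu⟩ => by
    obtain ⟨i, hi⟩ := mem_iUnion.1 hy
    filter_upwards [(hF i).eventually_inter_nonempty hu ⟨y, hi, hyu⟩] with x' ⟨z, hz, hzu⟩
    exact ⟨z, mem_iUnion.2 ⟨i, hz⟩, hzu⟩

theorem LowerHemicontinuous.image2 {f : α → β → γ} (hf : Continuous (Function.uncurry f))
    {A : X → Set α} {B : X → Set β} (hA : LowerHemicontinuous A) (hB : LowerHemicontinuous B) :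
    LowerHemicontinuous fun x => image2 f (A x) (B x) :=
  fun x => lowerHemicontinuousAt_iff.2 fun u hu ⟨_, ⟨a, ha, b, hb, rfl⟩, habu⟩ => by
    obtain ⟨s, t, hs, ht, has, hbt, hst⟩ := isOpen_prod_iff.1 (hu.preimage hf) a b habu
    filter_upwards [hA.eventually_inter_nonempty hs ⟨a, ha, has⟩,
      hB.eventually_inter_nonempty ht ⟨b, hb, hbt⟩] with x' ⟨a', ha', has'⟩ ⟨b', hb', hbt'⟩
    exact ⟨f a' b', mem_image2_of_mem ha' hb', hst (mk_mem_prod has' hbt')⟩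

theorem LowerHemicontinuous.add [Add α] [ContinuousAdd α] {A B : X → Set α}
    (hA : LowerHemicontinuous A) (hB : LowerHemicontinuous B) :
    LowerHemicontinuous fun x => A x + B x := by
  simpa only [image2_add] using hA.image2 continuous_add hB

theorem LowerHemicontinuous.smul [SMul β α] [ContinuousSMul β α] {c : X → β} (hc : Continuous c)
    {A : X → Set α} (hA : LowerHemicontinuous A) : LowerHemicontinuous fun x => c x • A x := by
  simpa only [image2_smul, singleton_smul] using
    (lowerHemicontinuous_singleton_iff.2 hc).image2 continuous_smul hA

end LowerHemicontinuous

section LowerHemicontinuousConvex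

variable {X E : Type*} [TopologicalSpace X] [AddCommGroup E] [Module ℝ E] [TopologicalSpace E]
  [ContinuousAdd E] [ContinuousSMul ℝ E]

theorem LowerHemicontinuous.finsetSum_smul {ι : Type*} (s : Finset ι) {a : ι → X → ℝ}
    {F : ι → X → Set E} (ha : ∀ i ∈ s, Continuous (a i))
    (hF : ∀ i ∈ s, LowerHemicontinuous (F i)) :
    LowerHemicontinuous fun x => ∑ i ∈ s, a i x • F i x := by
  classical
  induction s using Finset.induction_on with
  | empty => simpa using LowerHemicontinuous.const
  | insert i s hi ih =>
    simp only [Finset.sum_insert hi]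
    exact ((hF i (s.mem_insert_self i)).smul (ha i (s.mem_insert_self i))).add
      (ih (fun j hj => ha j (Finset.mem_insert_of_mem hj))
        fun j hj => hF j (Finset.mem_insert_of_mem hj))

theorem LowerHemicontinuous.convexHull {F : X → Set E} (hF : LowerHemicontinuous F) :
    LowerHemicontinuous fun x => convexHull ℝ (F x) := by
  simp only [convexHull_eq_iUnion_sum_smul]
  exact .iUnion fun n => .iUnion fun w => .iUnion fun _ =>
    .finsetSum_smul _ (fun _ _ => continuous_const) fun _ _ => hF

theorem PartitionOfUnity.lowerHemicontinuous_finsetSum_smul {ι : Type*} {s : Set X}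
    (p : PartitionOfUnity ι X s) {U : ι → Set X} (hp : p.IsSubordinate U) (hU : ∀ i, IsOpen (U i))
    {H : ι → X → Set E} (hH : ∀ i, LowerHemicontinuous (H i))
    (hne : ∀ i, ∀ x ∈ U i, (H i x).Nonempty) :
    LowerHemicontinuous fun x => ∑ i ∈ p.finsupport x, p i x • H i x := by
  refine lowerHemicontinuous_of_forall_exists_eventuallyEq fun x₀ =>
    ⟨fun x => ∑ i ∈ p.fintsupport x₀, p i x • H i x,
      .finsetSum_smul _ (fun i _ => (p i).continuous) fun i _ => hH i, ?_⟩
  have hnear : ∀ᶠ x in 𝓝 x₀, ∀ i ∈ p.fintsupport x₀, x ∈ U i :=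
    (eventually_all_finset _).2 fun i hi =>
      (hU i).mem_nhds (hp i ((p.mem_fintsupport_iff x₀ i).1 hi))
  filter_upwards [p.eventually_finsupport_subset x₀, hnear] with x hsupp hxU
  -- the extra terms vanish only because `H i x` is nonempty: `0 • ∅ = ∅`
  refine (Finset.sum_subset hsupp fun i hi hi' => ?_).symm
  rw [show p i x = 0 by simpa [p.mem_finsupport] using hi', zero_smul_set (hne i x (hxU i hi))]

end LowerHemicontinuousConvex

theorem exists_continuous_forall_mem_of_forall_sub_mem {X E : Type*} [TopologicalSpace X]
    [AddCommGroup E] [TopologicalSpace E] [IsTopologicalAddGroup E] [T2Space E]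
    {G : ℕ → X → Set E} (hG : ∀ n, LowerHemicontinuous (G n)) (hne : ∀ n x, (G n x).Nonempty)
    (hcomp : ∀ n x, IsCompact (G n x)) (hanti : ∀ n x, G (n + 1) x ⊆ G n x)
    (hsmall : ∀ W ∈ 𝓝 (0 : E), ∃ n, ∀ x, ∀ a ∈ G n x, ∀ b ∈ G n x, a - b ∈ W) :
    ∃ f : X → E, Continuous f ∧ ∀ n x, f x ∈ G n x := by
  choose f hf using fun x => IsCompact.nonempty_iInter_of_sequence_nonempty_isCompact_isClosed _
    (fun n => hanti n x) (fun n => hne n x) (hcomp 0 x) fun n => (hcomp n x).isClosed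
  have hfG : ∀ n x, f x ∈ G n x := fun n x => mem_iInter.1 (hf x) n
  refine ⟨f, continuous_iff_continuousAt.2 fun x₀ => ?_, hfG⟩
  rw [ContinuousAt, ← tendsto_sub_nhds_zero_iff]
  intro W hW
  obtain ⟨W', hW', hW'W⟩ := exists_nhds_half_neg hW
  obtain ⟨n, hn⟩ := hsmall W' hW'
  have hnear : ∀ᶠ x in 𝓝 x₀, (G n x ∩ {q | f x₀ - q ∈ interior W'}).Nonempty :=
    (hG n).eventually_inter_nonempty (isOpen_interior.preimage (continuous_sub_left _))
      ⟨f x₀, hfG n x₀, by simpa using mem_interior_iff_mem_nhds.2 hW'⟩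
  rw [mem_map]
  filter_upwards [hnear] with x ⟨q, hq, hqx₀⟩
  rw [mem_preimage, ← sub_sub_sub_cancel_right (f x) (f x₀) q]
  exact hW'W _ (hn x _ (hfG n x) _ hq) _ (interior_subset hqx₀)

section Shrinking

variable {X E : Type*} [TopologicalSpace X] [AddCommGroup E] [Module ℝ E] [TopologicalSpace E]

structure IsCompactConvexLHC (N : ℕ) (G : X → Set E) : Prop where
  lowerHemicontinuous : LowerHemicontinuous G
  nonempty (x : X) : (G x).Nonempty
  isCompact (x : X) : IsCompact (G x)
  convex (x : X) : Convex ℝ (G x)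
  rank_le (x : X) : Module.rank ℝ (vectorSpan ℝ (G x)) ≤ N

namespace IsCompactConvexLHC

variable {N : ℕ} {G : X → Set E}

theorem rank_le_of_subset (hG : IsCompactConvexLHC N G) {x : X} {S : Set E} (hS : S ⊆ G x) :
    Module.rank ℝ (vectorSpan ℝ S) ≤ N :=
  (Submodule.rank_mono (vectorSpan_mono ℝ hS)).trans (hG.rank_le x)

theorem closure_inter_subset [T2Space E] (hG : IsCompactConvexLHC N G) (x : X) (O : Set E) :
    closure (G x ∩ O) ⊆ G x :=
  closure_minimal inter_subset_left (hG.isCompact x).isClosed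

variable [IsTopologicalAddGroup E] [ContinuousSMul ℝ E]

theorem exists_isOpen_convexHull_closure_inter_sub_mem [T2Space E] (hG : IsCompactConvexLHC N G)
    {W : Set E} (hW : W ∈ 𝓝 0) :
    ∃ O ∈ 𝓝 (0 : E), IsOpen O ∧
      ∀ z x, ∀ v ∈ convexHull ℝ (closure (G x ∩ (· - z) ⁻¹' O)), v - z ∈ W := by
  obtain ⟨W', hW', hW'W⟩ := exists_nhds_zero_forall_convexHull_sub_mem N hW
  obtain ⟨K, ⟨hK, hKclosed⟩, hKW'⟩ := (closed_nhds_basis (0 : E)).mem_iff.1 hW'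
  refine ⟨interior K, interior_mem_nhds.2 hK, isOpen_interior, fun z x =>
    hW'W _ (hG.rank_le_of_subset (hG.closure_inter_subset x _)) z fun v hv => hKW' ?_⟩
  exact closure_minimal (t := (· - z) ⁻¹' K) (fun _ hw => interior_subset (s := K) hw.2)
    (hKclosed.preimage (continuous_sub_right z)) hv

theorem finsetSum_smul_of_isSubordinate {ι : Type*} (hG : IsCompactConvexLHC N G)
    (p : PartitionOfUnity ι X univ) {U : ι → Set X} (hp : p.IsSubordinate U)
    (hU : ∀ i, IsOpen (U i)) {H : ι → X → Set E} (hH : ∀ i, LowerHemicontinuous (H i))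
    (hHne : ∀ i, ∀ x ∈ U i, (H i x).Nonempty) (hHcomp : ∀ i x, IsCompact (H i x))
    (hHconv : ∀ i x, Convex ℝ (H i x)) (hHG : ∀ i x, H i x ⊆ G x) :
    IsCompactConvexLHC N fun x => ∑ i ∈ p.finsupport x, p i x • H i x where
  lowerHemicontinuous := p.lowerHemicontinuous_finsetSum_smul hp hU hH hHne
  nonempty x := by
    choose! σ hσ using fun i (hi : i ∈ p.finsupport x) =>
      hHne i x (hp i (subset_closure ((p.mem_finsupport x).1 hi)))
    exact ⟨_, (mem_finsetSum_smul_iff _ _ _).2 ⟨σ, hσ, rfl⟩⟩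
  isCompact x := isCompact_finsetSum_smul _ _ fun i _ => hHcomp i x
  convex x := convex_sum _ fun i _ => (hHconv i x).smul _
  rank_le x := hG.rank_le_of_subset <| (hG.convex x).finsetSum_smul_subset
    (fun i _ => p.nonneg i x) (p.sum_finsupport (mem_univ x)) fun i _ => hHG i x

theorem exists_subset_sub_mem [NormalSpace X] [ParacompactSpace X] [T2Space E]
    (hG : IsCompactConvexLHC N G) {V : Set E} (hV : V ∈ 𝓝 0) :
    ∃ G' : X → Set E, IsCompactConvexLHC N G' ∧ (∀ x, G' x ⊆ G x) ∧
      ∀ x, ∀ a ∈ G' x, ∀ b ∈ G' x, a - b ∈ V := by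
  obtain ⟨W, hW, hWV⟩ := exists_nhds_zero_finsetSum_smul_sub_subset N hV
  obtain ⟨O, hO, hOopen, hOW⟩ := hG.exists_isOpen_convexHull_closure_inter_sub_mem hW
  choose z hz using hG.nonempty
  set H : X → X → Set E := fun c x => convexHull ℝ (closure (G x ∩ (· - z c) ⁻¹' O))
  set U : X → Set X := fun c => {x | (G x ∩ (· - z c) ⁻¹' O).Nonempty}
  have hU : ∀ c, IsOpen (U c) := fun c => lowerHemicontinuous_iff_isOpen_inter_nonempty.1
    hG.lowerHemicontinuous _ (hOopen.preimage (continuous_sub_right _))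
  have hH : ∀ c, LowerHemicontinuous (H c) := fun c =>
    (hG.lowerHemicontinuous.inter_hasOpenCGraph
      (.const (hOopen.preimage (continuous_sub_right _)))).closure.convexHull
  have hHne : ∀ c, ∀ x ∈ U c, (H c x).Nonempty := fun c x hx =>
    hx.mono (subset_closure.trans (subset_convexHull ℝ _))
  have hHcomp : ∀ c x, IsCompact (H c x) := fun c x =>
    ((hG.isCompact x).of_isClosed_subset isClosed_closure (hG.closure_inter_subset x _))
      |>.convexHull_of_rank_le (hG.rank_le_of_subset (hG.closure_inter_subset x _))
  have hHG : ∀ c x, H c x ⊆ G x := fun c x =>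
    convexHull_min (hG.closure_inter_subset x _) (hG.convex x)
  obtain ⟨p, hp⟩ := PartitionOfUnity.exists_isSubordinate isClosed_univ U hU fun c _ =>
    mem_iUnion.2 ⟨c, z c, hz c, by simpa using mem_of_mem_nhds hO⟩
  refine ⟨_, hG.finsetSum_smul_of_isSubordinate p hp hU hH hHne hHcomp
      (fun c x => convex_convexHull ℝ _) hHG, fun x => ?_, fun x a ha b hb =>
    hWV _ _ (fun i _ => p.nonneg i x) (p.sum_finsupport (mem_univ x)) _ z (G x) (hG.rank_le x)
      (fun i _ => hHG i x) (fun i _ => hOW (z i) x) (sub_mem_sub ha hb)⟩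
  exact (hG.convex x).finsetSum_smul_subset (fun i _ => p.nonneg i x)
    (p.sum_finsupport (mem_univ x)) fun i _ => hHG i x

end IsCompactConvexLHC

end Shrinking

theorem dobrowolski_vanMill_selection_general
    {X E : Type*} [TopologicalSpace X] [TopologicalSpace.MetrizableSpace X]
    [AddCommGroup E] [Module ℝ E] [TopologicalSpace E]
    [IsTopologicalAddGroup E] [ContinuousSMul ℝ E] [TopologicalSpace.MetrizableSpace E]
    (F : X → Set E)
    (hLSC : ∀ U : Set E, IsOpen U → IsOpen {x : X | (F x ∩ U).Nonempty})
    (hne : ∀ x : X, (F x).Nonempty)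
    (hcomp : ∀ x : X, IsCompact (F x))
    (hconv : ∀ x : X, Convex ℝ (F x))
    (N : ℕ) (hdim : ∀ x : X, Module.rank ℝ (vectorSpan ℝ (F x)) ≤ N) :
    ∃ f : X → E, Continuous f ∧ ∀ x : X, f x ∈ F x := by
  let _ := TopologicalSpace.metrizableSpaceMetric X
  obtain ⟨V, hV⟩ := (𝓝 (0 : E)).exists_antitone_basis
  choose! shrink hshrink using fun (n : ℕ) (G : X → Set E) (hG : IsCompactConvexLHC N G) =>
    hG.exists_subset_sub_mem (hV.mem n)
  let G : ℕ → X → Set E := fun n => Nat.rec F (fun k Gk => shrink k Gk) n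
  have hG : ∀ n, IsCompactConvexLHC N (G n) := fun n => Nat.rec
    ⟨lowerHemicontinuous_iff_isOpen_inter_nonempty.2 hLSC, hne, hcomp, hconv, hdim⟩
    (fun k hk => (hshrink k _ hk).1) n
  have hsmall : ∀ W ∈ 𝓝 (0 : E), ∃ n, ∀ x, ∀ a ∈ G n x, ∀ b ∈ G n x, a - b ∈ W := fun W hW => by
    obtain ⟨n, hn⟩ := hV.mem_iff.1 hW
    exact ⟨n + 1, fun x a ha b hb => hn ((hshrink n _ (hG n)).2.2 x a ha b hb)⟩
  obtain ⟨f, hf, hfG⟩ := exists_continuous_forall_mem_of_forall_sub_mem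
    (fun n => (hG n).lowerHemicontinuous) (fun n => (hG n).nonempty) (fun n => (hG n).isCompact)
    (fun n => (hshrink n _ (hG n)).2.1) hsmall
  exact ⟨f, hf, hfG 0⟩

/-- The Dobrowolski–van Mill selection theorem: a LSC mapping from a metrizable
space into a convex subset of a metrizable topological vector space, with
nonempty compact convex values of uniformly bounded dimension, admits a
continuous singlevalued selection. -/
theorem dobrowolski_vanMill_selection
    {X E : Type*} [TopologicalSpace X] [TopologicalSpace.MetrizableSpace X]
    [AddCommGroup E] [Module ℝ E] [TopologicalSpace E]
    [IsTopologicalAddGroup E] [ContinuousSMul ℝ E] [TopologicalSpace.MetrizableSpace E]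
    (Y : Set E) (hYconv : Convex ℝ Y)
    (F : X → Set E)
    (hLSC : ∀ U : Set E, IsOpen U → IsOpen {x : X | (F x ∩ U).Nonempty})
    (hsub : ∀ x : X, F x ⊆ Y)
    (hne : ∀ x : X, (F x).Nonempty)
    (hcomp : ∀ x : X, IsCompact (F x))
    (hconv : ∀ x : X, Convex ℝ (F x))
    (N : ℕ) (hdim : ∀ x : X, Module.rank ℝ (vectorSpan ℝ (F x)) ≤ N) :
    ∃ f : X → E, Continuous f ∧ ∀ x : X, f x ∈ F x :=
  dobrowolski_vanMill_selection_general F hLSC hne hcomp hconv N hdim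
end

section
/- Arvanitakis' theorem: let X be a paracompact Hausdorff space which is a k-space (compactly generated), (Y,d) a complete metric space, and E a Hausdorff locally convex real topological vector space in which the closure of the convex hull of every compact set is compact. Let F be a lower semicontinuous multivalued mapping from X to Y with nonempty closed values. Then there exists a continuous linear operator S : C(Y,E) → C(X,E), where both spaces of continuous maps carry the topology of uniform convergence on compact subsets (the compact-open topology), such that S(f)(x) ∈ closure(convexHull(f(F(x)))) for every f ∈ C(Y,E) and every x ∈ X. -/
/-!
Lower semicontinuity and paracompactness give a tower of locally finite partitions of unity
`P n` on `X`, indexed by chains `b = (y₀, …, yₙ)` of points of `Y`: `P n b` lives where `F x`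
meets the ball of radius `2⁻ⁿ⁻¹` about `yₙ`, and its weight is split among the chains `(b, y)`
with `dist y yₙ < 2⁻ⁿ⁻¹`. For `Sₙ f x = ∑ b, P n b x • f yₙ`, the difference `Sₙ f x - Sₙ₊ₖ f x`
is then a convex combination of differences `f v - f u` with `dist u v ≤ 2⁻ⁿ` and `u` among the
last points of the chains active on a compact `L ⊆ X`, a totally bounded set. Hence `Sₙ f` is
uniformly Cauchy on compacta for the convex neighbourhoods of `0`, and converges pointwise since
its values stay in a compact closed convex hull. The limit `S` is linear, `S f` is continuous on
the k-space `X`, and the same convexity bound, controlling `S f` on `L` by `f` on a compact set,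
makes `S` continuous for the compact-open topologies. Moving each `yₙ` to a point of `F x` at
distance `< 2⁻ⁿ⁻¹` shows `S f x ∈ closure (convexHull ℝ (f '' F x))`.
-/

open Set Filter Topology Function Metric

section TopologicalAddGroup

variable {E : Type*} [AddCommGroup E] [TopologicalSpace E] [IsTopologicalAddGroup E]

theorem IsCompact.exists_pos_forall_dist_lt_sub_mem {Y : Type*} [PseudoMetricSpace Y]
    {f : Y → E} (hf : Continuous f) {K : Set Y} (hK : IsCompact K) {V : Set E}
    (hV : V ∈ 𝓝 0) : ∃ δ > 0, ∀ u ∈ K, ∀ v, dist u v < δ → f v - f u ∈ V := by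
  let := IsTopologicalAddGroup.rightUniformSpace E
  have := isUniformAddGroup_of_addCommGroup (G := E)
  have hr : {p : E × E | p.2 - p.1 ∈ V} ∈ uniformity E := by
    rw [uniformity_eq_comap_nhds_zero E]
    exact preimage_mem_comap hV
  obtain ⟨δ, hδ, h⟩ := Metric.mem_uniformity_dist.1
    (hK.uniformContinuousAt_of_continuousAt f (fun _ _ => hf.continuousAt) hr)
  exact ⟨δ, hδ, fun u hu v huv => h huv hu⟩

theorem IsCompact.exists_tendsto_of_forall_sub_mem {C : Set E} (hC : IsCompact C) {s : ℕ → E}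
    (hs : ∀ n, s n ∈ C) (hcauchy : ∀ V ∈ 𝓝 (0 : E), ∃ N, ∀ m ≥ N, ∀ n ≥ N, s m - s n ∈ V) :
    ∃ z, Tendsto s atTop (𝓝 z) := by
  let := IsTopologicalAddGroup.rightUniformSpace E
  have := isUniformAddGroup_of_addCommGroup (G := E)
  obtain ⟨z, -, hz⟩ := cauchySeq_tendsto_of_isComplete hC.isComplete hs <| by
    rw [cauchySeq_iff_tendsto, uniformity_eq_comap_nhds_zero, tendsto_comap_iff]
    intro V hV
    obtain ⟨N, hN⟩ := hcauchy V hV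
    exact mem_map.2 (mem_of_superset (Ici_mem_atTop (N, N)) fun p hp => hN _ hp.2 _ hp.1)
  exact ⟨z, hz⟩

end TopologicalAddGroup

theorem continuous_of_forall_isCompact_continuousOn {X Z : Type*} [TopologicalSpace X]
    [CompactlyGeneratedSpace X] [T2Space X] [TopologicalSpace Z] {f : X → Z}
    (hf : ∀ K, IsCompact K → ContinuousOn f K) : Continuous f :=
  continuous_iff_isClosed.2 fun _ hC => CompactlyGeneratedSpace.isClosed fun _ hK =>
    inter_comm _ _ ▸ (hf _ hK).preimage_isClosed_of_isClosed hK.isClosed hC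

theorem isCompact_closure_iUnion_of_forall_dist_le {Y : Type*} [PseudoMetricSpace Y]
    [CompleteSpace Y] {G : ℕ → Set Y} (hG : ∀ n, (G n).Finite) {ε : ℕ → ℝ}
    (hε : Tendsto ε atTop (𝓝 0)) (h : ∀ n k, ∀ z ∈ G (n + k), ∃ w ∈ G n, dist z w ≤ ε n) :
    IsCompact (closure (⋃ n, G n)) := by
  refine (totallyBounded_closure.2 ?_).isCompact_of_isClosed isClosed_closure
  refine Metric.totallyBounded_iff.2 fun δ hδ => ?_
  obtain ⟨N, hN⟩ := (hε.eventually (gt_mem_nhds hδ)).exists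
  refine ⟨⋃ n ≤ N, G n, (finite_le_nat N).biUnion fun n _ => hG n, ?_⟩
  rintro z ⟨_, ⟨m, rfl⟩, hz⟩
  rcases le_or_gt m N with hm | hm
  · exact mem_iUnion₂.2 ⟨z, mem_iUnion₂.2 ⟨m, hm, hz⟩, mem_ball_self hδ⟩
  · obtain ⟨k, rfl⟩ := Nat.exists_eq_add_of_le hm.le
    obtain ⟨w, hw, hzw⟩ := h N k z hz
    exact mem_iUnion₂.2 ⟨w, mem_iUnion₂.2 ⟨N, le_rfl, hw⟩, hzw.trans_lt hN⟩

theorem LocallyFinite.prod_inter {ι κ X : Type*} [TopologicalSpace X] {f : ι → Set X}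
    {g : ι → κ → Set X} (hf : LocallyFinite f) (hg : ∀ i, LocallyFinite (g i)) :
    LocallyFinite fun b : ι × κ => f b.1 ∩ g b.1 b.2 := by
  intro x
  obtain ⟨N, hN, hNfin⟩ := hf x
  choose M hM hMfin using fun i => hg i x
  refine ⟨N ∩ ⋂ i ∈ hNfin.toFinset, M i, inter_mem hN ((biInter_finset_mem _).2 fun i _ => hM i),
    (hNfin.biUnion fun i _ => (hMfin i).image (Prod.mk i)).subset ?_⟩
  rintro ⟨i, k⟩ ⟨y, ⟨hyf, hyg⟩, hyN, hyM⟩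
  have hi : i ∈ {i | (f i ∩ N).Nonempty} := ⟨y, hyf, hyN⟩
  exact mem_iUnion₂.2 ⟨i, hi, k, ⟨y, hyg, mem_iInter₂.1 hyM i (hNfin.mem_toFinset.2 hi)⟩, rfl⟩

namespace PartitionOfUnity

variable {ι κ X : Type*} [TopologicalSpace X] {s : Set X}

theorem hasFiniteSupport_smul {M : Type*} [AddCommMonoid M] [Module ℝ M]
    (ρ : PartitionOfUnity ι X s) (x : X) (g : ι → M) :
    HasFiniteSupport fun i => ρ i x • g i :=
  (ρ.locallyFinite.point_finite x).subset fun _ hi => left_ne_zero_of_smul hi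

theorem finsum_smul_sub {M : Type*} [AddCommGroup M] [Module ℝ M] (ρ : PartitionOfUnity ι X s)
    (x : X) (g h : ι → M) :
    ∑ᶠ i, ρ i x • g i - ∑ᶠ i, ρ i x • h i = ∑ᶠ i, ρ i x • (g i - h i) := by
  simp_rw [smul_sub]
  exact (finsum_sub_distrib (ρ.hasFiniteSupport_smul x g) (ρ.hasFiniteSupport_smul x h)).symm

theorem exists_refinement [NormalSpace X] [ParacompactSpace X] (ρ : PartitionOfUnity ι X s)
    (U : ι → κ → Set X) (hUo : ∀ i k, IsOpen (U i k)) (hU : ∀ i, tsupport (ρ i) ⊆ ⋃ k, U i k) :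
    ∃ ρ' : PartitionOfUnity (ι × κ) X s, (∀ b, tsupport (ρ' b) ⊆ U b.1 b.2) ∧
      (∀ b, support (ρ' b) ⊆ support (ρ b.1)) ∧ ∀ i x, ∑ᶠ k, ρ' (i, k) x = ρ i x := by
  choose σ hσ using fun i => exists_isSubordinate (isClosed_tsupport (ρ i)) (U i) (hUo i) (hU i)
  have hsum : ∀ i x, ∑ᶠ k, ρ i x * σ i k x = ρ i x := fun i x => by
    rw [← mul_finsum]
    by_cases hx : ρ i x = 0
    · rw [hx, zero_mul]
    · rw [(σ i).sum_eq_one (subset_tsupport _ hx), mul_one]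
  have hLF : LocallyFinite fun b : ι × κ => support (ρ b.1 * σ b.1 b.2 : C(X, ℝ)) :=
    (ρ.locallyFinite.prod_inter fun i => (σ i).locallyFinite).subset fun b =>
      (support_mul (ρ b.1 : X → ℝ) (σ b.1 b.2)).subset
  have hsum' : ∀ x, ∑ᶠ b : ι × κ, (ρ b.1 * σ b.1 b.2 : C(X, ℝ)) x = ∑ᶠ i, ρ i x := fun x => by
    rw [finsum_curry _ (hLF.point_finite x)]
    exact finsum_congr fun i => hsum i x
  refine ⟨⟨fun b => ρ b.1 * σ b.1 b.2, hLF, fun b x => mul_nonneg (ρ.nonneg _ _) ((σ _).nonneg _ _),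
    fun x hx => (hsum' x).trans (ρ.sum_eq_one hx), fun x => (hsum' x).trans_le (ρ.sum_le_one x)⟩,
    fun b => ?_, fun b => ?_, hsum⟩
  · exact tsupport_mul_subset_right.trans (hσ b.1 b.2)
  · exact support_mul_subset_left _ _

end PartitionOfUnity

def HasConvexCompactness (E : Type*) [AddCommGroup E] [Module ℝ E] [TopologicalSpace E] : Prop :=
  ∀ K : Set E, IsCompact K → IsCompact (closure (convexHull ℝ K))

universe u

def PointChain (Y : Type u) : ℕ → Type u
  | 0 => Y
  | n + 1 => PointChain Y n × Y

namespace PointChain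

variable {Y : Type u}

def last : ∀ {n : ℕ}, PointChain Y n → Y
  | 0, y => y
  | _ + 1, b => b.2

def dropLast {n : ℕ} : ∀ k : ℕ, PointChain Y (n + k) → PointChain Y n
  | 0, b => b
  | k + 1, b => dropLast k b.1

end PointChain

def lowerInverse {X Y : Type*} (F : X → Set Y) (U : Set Y) : Set X := {x | (F x ∩ U).Nonempty}

structure SelectionTower {X Y : Type*} [TopologicalSpace X] [PseudoMetricSpace Y]
    (F : X → Set Y) where
  P : ∀ n, PartitionOfUnity (PointChain Y n) X
  tsupport_subset :
    ∀ n b, tsupport (P n b) ⊆ lowerInverse F (ball b.last ((1 / 2 : ℝ) ^ (n + 1)))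
  apply_parent_ne_zero : ∀ n (b : PointChain Y (n + 1)) x, P (n + 1) b x ≠ 0 → P n b.1 x ≠ 0
  dist_last_parent_lt : ∀ n (b : PointChain Y (n + 1)) x, P (n + 1) b x ≠ 0 →
    dist b.last b.1.last < (1 / 2 : ℝ) ^ (n + 1)
  finsum_children : ∀ n a x, ∑ᶠ y, P (n + 1) (a, y) x = P n a x

namespace SelectionTower

variable {X Y : Type*} [TopologicalSpace X] [PseudoMetricSpace Y] {F : X → Set Y}

theorem exists_succ_level [NormalSpace X] [ParacompactSpace X]
    (hLSC : ∀ U, IsOpen U → IsOpen (lowerInverse F U)) {n : ℕ}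
    (P : PartitionOfUnity (PointChain Y n) X)
    (hP : ∀ b, tsupport (P b) ⊆ lowerInverse F (ball b.last ((1 / 2 : ℝ) ^ (n + 1)))) :
    ∃ P' : PartitionOfUnity (PointChain Y (n + 1)) X,
      (∀ b, tsupport (P' b) ⊆ lowerInverse F (ball b.last ((1 / 2 : ℝ) ^ (n + 1 + 1)))) ∧
      (∀ b x, P' b x ≠ 0 → P b.1 x ≠ 0) ∧
      (∀ b x, P' b x ≠ 0 → dist b.last b.1.last < (1 / 2 : ℝ) ^ (n + 1)) ∧
      ∀ a x, ∑ᶠ y, P' (a, y) x = P a x := by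
  obtain ⟨P', hsub, hsupp, hsum⟩ := P.exists_refinement
    (fun a y => {x | dist y a.last < (1 / 2 : ℝ) ^ (n + 1) ∧
      (F x ∩ ball y ((1 / 2 : ℝ) ^ (n + 1 + 1))).Nonempty})
    (fun a y => by rw [ofPred_and]; exact isOpen_const.inter (hLSC _ isOpen_ball))
    (fun a x hx => by
      obtain ⟨z, hzF, hz⟩ := hP a hx
      exact mem_iUnion.2 ⟨z, mem_ball.1 hz, z, hzF, mem_ball_self (by positivity)⟩)
  exact ⟨P', fun b => (hsub b).trans fun x hx => hx.2, fun b x hx => hsupp b hx,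
    fun b x hx => (hsub b (subset_tsupport _ hx)).1, hsum⟩

theorem nonempty [ParacompactSpace X] [T2Space X]
    (hLSC : ∀ U, IsOpen U → IsOpen (lowerInverse F U)) (hne : ∀ x, (F x).Nonempty) :
    Nonempty (SelectionTower F) := by
  have base : ∃ P : PartitionOfUnity (PointChain Y 0) X,
      ∀ b, tsupport (P b) ⊆ lowerInverse F (ball b.last ((1 / 2 : ℝ) ^ (0 + 1))) :=
    PartitionOfUnity.exists_isSubordinate isClosed_univ _ (fun _ => hLSC _ isOpen_ball)
      fun x _ => let ⟨y, hy⟩ := hne x; mem_iUnion.2 ⟨y, y, hy, mem_ball_self (by positivity)⟩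
  let levels : ∀ n, {P : PartitionOfUnity (PointChain Y n) X //
      ∀ b, tsupport (P b) ⊆ lowerInverse F (ball b.last ((1 / 2 : ℝ) ^ (n + 1)))} :=
    fun n => Nat.rec ⟨base.choose, base.choose_spec⟩
      (fun _ Q => ⟨_, (exists_succ_level hLSC Q.1 Q.2).choose_spec.1⟩) n
  have next (n : ℕ) := (exists_succ_level hLSC _ (levels n).2).choose_spec
  exact ⟨{ P := fun n => (levels n).1
           tsupport_subset := fun n => (levels n).2
           apply_parent_ne_zero := fun n => (next n).2.1
           dist_last_parent_lt := fun n => (next n).2.2.1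
           finsum_children := fun n => (next n).2.2.2 }⟩

variable (T : SelectionTower F)

theorem exists_mem_dist_lt {n : ℕ} {b : PointChain Y n} {x : X} (h : T.P n b x ≠ 0) :
    ∃ z ∈ F x, dist b.last z < (1 / 2 : ℝ) ^ (n + 1) := by
  obtain ⟨z, hzF, hz⟩ := T.tsupport_subset n b (subset_tsupport _ h)
  exact ⟨z, hzF, by rw [dist_comm]; exact hz⟩

theorem apply_dropLast_ne_zero {n : ℕ} (k : ℕ) {b : PointChain Y (n + k)} {x : X}
    (h : T.P (n + k) b x ≠ 0) : T.P n (b.dropLast k) x ≠ 0 := by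
  induction k with
  | zero => exact h
  | succ k ih => exact ih (T.apply_parent_ne_zero _ b x h)

theorem dist_last_dropLast_le {n : ℕ} (k : ℕ) {b : PointChain Y (n + k)} {x : X}
    (h : T.P (n + k) b x ≠ 0) : dist b.last (b.dropLast k).last ≤ (1 / 2 : ℝ) ^ n := by
  suffices ∀ k (b : PointChain Y (n + k)), T.P (n + k) b x ≠ 0 →
      dist b.last (b.dropLast k).last ≤ (1 / 2 : ℝ) ^ n - (1 / 2 : ℝ) ^ (n + k) from
    (this k b h).trans (sub_le_self _ (by positivity))
  intro k
  induction k with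
  | zero => intro b _; simp [PointChain.dropLast]
  | succ k ih =>
    intro b hb
    calc dist b.last (b.dropLast (k + 1)).last
        ≤ dist b.last b.1.last + dist b.1.last (b.1.dropLast k).last := dist_triangle _ _ _
      _ ≤ (1 / 2 : ℝ) ^ (n + k + 1) + ((1 / 2 : ℝ) ^ n - (1 / 2 : ℝ) ^ (n + k)) :=
        add_le_add (T.dist_last_parent_lt _ b x hb).le (ih b.1 (T.apply_parent_ne_zero _ b x hb))
      _ = (1 / 2 : ℝ) ^ n - (1 / 2 : ℝ) ^ (n + (k + 1)) := by ring

theorem finsum_smul_parent {M : Type*} [AddCommGroup M] [Module ℝ M] (n : ℕ) (x : X)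
    (g : PointChain Y n → M) :
    ∑ᶠ b : PointChain Y (n + 1), T.P (n + 1) b x • g b.1 = ∑ᶠ a, T.P n a x • g a := by
  refine (finsum_curry (fun b : PointChain Y n × Y => T.P (n + 1) b x • g b.1)
    ((T.P (n + 1)).hasFiniteSupport_smul x _)).trans (finsum_congr fun a => ?_)
  exact (finsum_smul _ _).symm.trans (congrArg (· • g a) (T.finsum_children n a x))

theorem finsum_smul_dropLast {M : Type*} [AddCommGroup M] [Module ℝ M] (n k : ℕ) (x : X)
    (g : PointChain Y n → M) :
    ∑ᶠ b, T.P (n + k) b x • g (b.dropLast k) = ∑ᶠ a, T.P n a x • g a := by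
  induction k with
  | zero => rfl
  | succ k ih => exact (T.finsum_smul_parent (n + k) x _).trans ih

def activePoints (L : Set X) : Set Y :=
  ⋃ n, PointChain.last '' {b : PointChain Y n | (support (T.P n b) ∩ L).Nonempty}

theorem last_mem_activePoints {L : Set X} {n : ℕ} {b : PointChain Y n} {x : X} (hx : x ∈ L)
    (h : T.P n b x ≠ 0) : b.last ∈ T.activePoints L :=
  mem_iUnion.2 ⟨n, b, ⟨x, h, hx⟩, rfl⟩

theorem isCompact_closure_activePoints [CompleteSpace Y] {L : Set X} (hL : IsCompact L) :
    IsCompact (closure (T.activePoints L)) := by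
  refine isCompact_closure_iUnion_of_forall_dist_le
    (fun n => ((T.P n).locallyFinite.finite_nonempty_inter_compact hL).image _)
    (tendsto_pow_atTop_nhds_zero_of_lt_one (r := (1 / 2 : ℝ)) (by norm_num) (by norm_num)) ?_
  rintro n k _ ⟨b, ⟨x, hx, hxL⟩, rfl⟩
  exact ⟨_, ⟨b.dropLast k, ⟨x, T.apply_dropLast_ne_zero k hx, hxL⟩, rfl⟩,
    T.dist_last_dropLast_le k hx⟩

section Approximation

variable {E : Type*} [AddCommGroup E] [Module ℝ E]

noncomputable def approx (n : ℕ) (f : Y → E) (x : X) : E := ∑ᶠ b, T.P n b x • f b.last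

noncomputable def limit [TopologicalSpace E] (f : Y → E) (x : X) : E :=
  limUnder atTop fun n => T.approx n f x

theorem approx_add (n : ℕ) (f g : Y → E) (x : X) :
    T.approx n (f + g) x = T.approx n f x + T.approx n g x := by
  simp only [approx, Pi.add_apply, smul_add]
  exact finsum_add_distrib ((T.P n).hasFiniteSupport_smul x _)
    ((T.P n).hasFiniteSupport_smul x _)

theorem approx_smul (n : ℕ) (c : ℝ) (f : Y → E) (x : X) :
    T.approx n (c • f) x = c • T.approx n f x := by
  simp only [approx, Pi.smul_apply, smul_finsum, smul_comm c]

theorem approx_mem_convexHull {L : Set X} {x : X} (hx : x ∈ L) (n : ℕ) (f : Y → E) :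
    T.approx n f x ∈ convexHull ℝ (f '' T.activePoints L) :=
  (T.P n).finsum_smul_mem_convex (g := fun b _ => f b.last) (mem_univ x)
    (fun _ hb => subset_convexHull ℝ _ (mem_image_of_mem f (T.last_mem_activePoints hx hb)))
    (convex_convexHull ℝ _)

theorem approx_sub_approx_add_mem {L : Set X} {x : X} (hx : x ∈ L) (n k : ℕ) {f : Y → E}
    {W : Set E} (hW : Convex ℝ W)
    (hf : ∀ u ∈ T.activePoints L, ∀ v, dist u v ≤ (1 / 2 : ℝ) ^ n → f v - f u ∈ W) :
    T.approx n f x - T.approx (n + k) f x ∈ W := by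
  rw [approx, approx, ← T.finsum_smul_dropLast n k x fun a => f a.last,
    PartitionOfUnity.finsum_smul_sub]
  exact (T.P (n + k)).finsum_smul_mem_convex (g := fun b _ => f (b.dropLast k).last - f b.last)
    (mem_univ x)
    (fun b hb => hf _ (T.last_mem_activePoints hx hb) _ (T.dist_last_dropLast_le k hb)) hW

theorem exists_mem_convexHull_sub_approx_mem {L : Set X} {x : X} (hx : x ∈ L) (n : ℕ)
    {f : Y → E} {W : Set E} (hW : Convex ℝ W)
    (hf : ∀ u ∈ T.activePoints L, ∀ v, dist u v < (1 / 2 : ℝ) ^ (n + 1) → f v - f u ∈ W) :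
    ∃ a ∈ convexHull ℝ (f '' F x), a - T.approx n f x ∈ W := by
  have : ∀ b : PointChain Y n, ∃ z, T.P n b x ≠ 0 →
      z ∈ F x ∧ dist b.last z < (1 / 2 : ℝ) ^ (n + 1) := fun b => by
    by_cases h : T.P n b x = 0
    · exact ⟨b.last, fun h' => absurd h h'⟩
    · obtain ⟨z, hz⟩ := T.exists_mem_dist_lt h
      exact ⟨z, fun _ => hz⟩
  choose z hz using this
  refine ⟨∑ᶠ b, T.P n b x • f (z b), (T.P n).finsum_smul_mem_convex (g := fun b _ => f (z b))
    (mem_univ x) (fun b hb => subset_convexHull ℝ _ (mem_image_of_mem f (hz b hb).1))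
    (convex_convexHull ℝ _), ?_⟩
  rw [approx, PartitionOfUnity.finsum_smul_sub]
  exact (T.P n).finsum_smul_mem_convex (g := fun b _ => f (z b) - f b.last) (mem_univ x)
    (fun b hb => hf _ (T.last_mem_activePoints hx hb) _ (hz b hb).2) hW

variable [TopologicalSpace E] [IsTopologicalAddGroup E]

theorem continuous_approx [ContinuousSMul ℝ E] (n : ℕ) (f : Y → E) :
    Continuous (T.approx n f) :=
  (T.P n).continuous_finsum_smul fun _ _ _ => continuousAt_const

variable [CompleteSpace Y]

theorem exists_forall_approx_sub_mem {f : Y → E} (hf : Continuous f) {L : Set X}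
    (hL : IsCompact L) {W : Set E} (hW0 : W ∈ 𝓝 0) (hW : Convex ℝ W) :
    ∃ N, ∀ n ≥ N, ∀ m ≥ n, ∀ x ∈ L, T.approx n f x - T.approx m f x ∈ W := by
  obtain ⟨δ, hδ, hfδ⟩ :=
    (T.isCompact_closure_activePoints hL).exists_pos_forall_dist_lt_sub_mem hf hW0
  obtain ⟨N, hN⟩ := exists_pow_lt_of_lt_one hδ (by norm_num : (1 / 2 : ℝ) < 1)
  refine ⟨N, fun n hn m hm x hx => ?_⟩
  obtain ⟨k, rfl⟩ := Nat.exists_eq_add_of_le hm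
  refine T.approx_sub_approx_add_mem hx n k hW fun u hu v huv => hfδ u (subset_closure hu) v ?_
  calc dist u v ≤ (1 / 2 : ℝ) ^ n := huv
    _ ≤ (1 / 2 : ℝ) ^ N := pow_le_pow_of_le_one (by norm_num) (by norm_num) hn
    _ < δ := hN

variable [ContinuousSMul ℝ E] [LocallyConvexSpace ℝ E]

theorem tendsto_approx_limit (hE : HasConvexCompactness E) {f : Y → E} (hf : Continuous f)
    (x : X) : Tendsto (fun n => T.approx n f x) atTop (𝓝 (T.limit f x)) := by
  have hK := T.isCompact_closure_activePoints (isCompact_singleton (x := x))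
  refine tendsto_nhds_limUnder ((hE _ (hK.image hf)).exists_tendsto_of_forall_sub_mem
    (fun n => subset_closure (convexHull_mono (image_mono subset_closure)
      (T.approx_mem_convexHull (mem_singleton x) n f))) fun V hV => ?_)
  obtain ⟨W, ⟨hW0, hWb, hWc⟩, hWV⟩ := (nhds_hasBasis_absConvex ℝ E).mem_iff.1 hV
  obtain ⟨N, hN⟩ := T.exists_forall_approx_sub_mem hf isCompact_singleton hW0 hWc
  refine ⟨N, fun m hm n hn => hWV ?_⟩
  rcases le_total m n with h | h
  · exact hN m hm n h x rfl
  · rw [← neg_sub]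
    exact hWb.neg_mem_iff.2 (hN n hn m h x rfl)

theorem exists_forall_approx_sub_limit_mem (hE : HasConvexCompactness E) {f : Y → E}
    (hf : Continuous f) {L : Set X} (hL : IsCompact L) {W : Set E} (hW0 : W ∈ 𝓝 0)
    (hWcl : IsClosed W) (hW : Convex ℝ W) :
    ∃ N, ∀ n ≥ N, ∀ x ∈ L, T.approx n f x - T.limit f x ∈ W := by
  obtain ⟨N, hN⟩ := T.exists_forall_approx_sub_mem hf hL hW0 hW
  exact ⟨N, fun n hn x hx => hWcl.mem_of_tendsto
    (tendsto_const_nhds.sub (T.tendsto_approx_limit hE hf x))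
    ((eventually_ge_atTop n).mono fun m hm => hN n hn m hm x hx)⟩

theorem continuous_limit [CompactlyGeneratedSpace X] [T2Space X] (hE : HasConvexCompactness E)
    {f : Y → E} (hf : Continuous f) : Continuous (T.limit f) := by
  refine continuous_of_forall_isCompact_continuousOn fun L hL x₀ hx₀ => ?_
  rw [ContinuousWithinAt, ← tendsto_sub_nhds_zero_iff]
  refine fun U hU => mem_map.2 ?_
  obtain ⟨V, hV, hVU⟩ := exists_nhds_zero_quarter hU
  obtain ⟨W, ⟨hW0, hWcl, hWb, hWc⟩, hWV⟩ := (nhds_hasBasis_absConvex_closed ℝ E).mem_iff.1 hV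
  obtain ⟨N, hN⟩ := T.exists_forall_approx_sub_limit_mem hE hf hL hW0 hWcl hWc
  have hnear : ∀ᶠ x in 𝓝 x₀, T.approx N f x - T.approx N f x₀ ∈ W :=
    tendsto_sub_nhds_zero_iff.2 ((T.continuous_approx N f).tendsto x₀) hW0
  filter_upwards [self_mem_nhdsWithin, nhdsWithin_le_nhds hnear] with x hxL hx
  have := hVU (hWV (hWb.neg_mem_iff.2 (hN N le_rfl x hxL))) (hWV hx)
    (hWV (hN N le_rfl x₀ hx₀)) (mem_of_mem_nhds hV)
  show T.limit f x - T.limit f x₀ ∈ U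
  convert this using 1
  abel

theorem limit_add [T2Space E] (hE : HasConvexCompactness E) {f g : Y → E} (hf : Continuous f)
    (hg : Continuous g) (x : X) : T.limit (f + g) x = T.limit f x + T.limit g x :=
  tendsto_nhds_unique (T.tendsto_approx_limit hE (hf.add hg) x) <| by
    simpa only [T.approx_add] using
      (T.tendsto_approx_limit hE hf x).add (T.tendsto_approx_limit hE hg x)

theorem limit_smul [T2Space E] (hE : HasConvexCompactness E) (c : ℝ) {f : Y → E}
    (hf : Continuous f) (x : X) : T.limit (c • f) x = c • T.limit f x :=
  tendsto_nhds_unique (T.tendsto_approx_limit hE (hf.const_smul c) x) <| by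
    simpa only [T.approx_smul] using (T.tendsto_approx_limit hE hf x).const_smul c

theorem mapsTo_limit (hE : HasConvexCompactness E) {f : Y → E} (hf : Continuous f) {L : Set X}
    {W : Set E} (hWcl : IsClosed W) (hW : Convex ℝ W) (hfW : MapsTo f (T.activePoints L) W) :
    MapsTo (T.limit f) L W := fun x hx =>
  hWcl.mem_of_tendsto (T.tendsto_approx_limit hE hf x) <| Eventually.of_forall fun n =>
    convexHull_min hfW.image_subset hW (T.approx_mem_convexHull hx n f)

theorem limit_mem_closure_convexHull (hE : HasConvexCompactness E) {f : Y → E}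
    (hf : Continuous f) (x : X) : T.limit f x ∈ closure (convexHull ℝ (f '' F x)) := by
  refine mem_closure_iff_nhds_zero.2 fun U hU => ?_
  obtain ⟨V, hV, hVU⟩ := exists_nhds_zero_half hU
  obtain ⟨W, ⟨hW0, hWc⟩, hWV⟩ := (LocallyConvexSpace.convex_basis_zero ℝ E).mem_iff.1 hV
  have hK := T.isCompact_closure_activePoints (isCompact_singleton (x := x))
  obtain ⟨δ, hδ, hfδ⟩ := hK.exists_pos_forall_dist_lt_sub_mem hf hW0
  obtain ⟨n, hnδ, hnV⟩ := (((tendsto_pow_atTop_nhds_zero_of_lt_one (r := (1 / 2 : ℝ))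
    (by norm_num) (by norm_num)).eventually (gt_mem_nhds hδ)).and
    (tendsto_sub_nhds_zero_iff.2 (T.tendsto_approx_limit hE hf x) hV)).exists
  obtain ⟨a, ha, haW⟩ := T.exists_mem_convexHull_sub_approx_mem (mem_singleton x) n hWc
    fun u hu v huv => hfδ u (subset_closure hu) v <|
      huv.trans ((pow_le_pow_of_le_one (by norm_num) (by norm_num) n.le_succ).trans_lt hnδ)
  exact ⟨a, ha, sub_add_sub_cancel a (T.approx n f x) _ ▸ hVU _ (hWV haW) _ hnV⟩

variable [T2Space E] [CompactlyGeneratedSpace X] [T2Space X]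

noncomputable def selectionOperator (hE : HasConvexCompactness E) : C(Y, E) →ₗ[ℝ] C(X, E) where
  toFun f := ⟨T.limit f, T.continuous_limit hE f.continuous⟩
  map_add' f g := ContinuousMap.ext (T.limit_add hE f.continuous g.continuous)
  map_smul' c f := ContinuousMap.ext (T.limit_smul hE c f.continuous)

theorem continuous_selectionOperator (hE : HasConvexCompactness E) :
    Continuous (T.selectionOperator hE) := by
  refine continuous_of_continuousAt_zero (T.selectionOperator hE) ?_
  rw [ContinuousAt, map_zero, ContinuousMap.tendsto_nhds_compactOpen]
  intro L hL U hU h0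
  by_cases hU0 : (0 : E) ∈ U
  · obtain ⟨W, ⟨hW0, hWcl, -, hWc⟩, hWU⟩ :=
      (nhds_hasBasis_absConvex_closed ℝ E).mem_iff.1 (hU.mem_nhds hU0)
    filter_upwards [(ContinuousMap.isOpen_setOfPred_mapsTo (T.isCompact_closure_activePoints hL)
      isOpen_interior).mem_nhds fun _ _ => mem_interior_iff_mem_nhds.2 hW0] with f hf
    exact (T.mapsTo_limit hE f.continuous hWcl hWc
      fun y hy => interior_subset (hf (subset_closure hy))).mono_right hWU
  · exact Eventually.of_forall fun f x hx => absurd (h0 hx) hU0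

end Approximation

end SelectionTower

theorem arvanitakis_selection_extension_general
    {X Y E : Type*} [TopologicalSpace X] [ParacompactSpace X] [T2Space X]
    [MetricSpace Y] [CompleteSpace Y]
    [AddCommGroup E] [Module ℝ E] [TopologicalSpace E]
    [IsTopologicalAddGroup E] [ContinuousSMul ℝ E] [LocallyConvexSpace ℝ E] [T2Space E]
    (hk : ∀ A : Set X, (∀ K : Set X, IsCompact K → IsClosed (A ∩ K)) → IsClosed A)
    (hE : ∀ K : Set E, IsCompact K → IsCompact (closure (convexHull ℝ K)))
    (F : X → Set Y)
    (hLSC : ∀ U : Set Y, IsOpen U → IsOpen {x : X | (F x ∩ U).Nonempty})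
    (hne : ∀ x : X, (F x).Nonempty) :
    ∃ S : C(Y, E) →L[ℝ] C(X, E),
      ∀ (f : C(Y, E)) (x : X), S f x ∈ closure (convexHull ℝ (f '' F x)) := by
  have : CompactlyGeneratedSpace X := compactlyGeneratedSpace_of_isClosed_of_t2 hk
  obtain ⟨T⟩ := SelectionTower.nonempty hLSC hne
  exact ⟨⟨T.selectionOperator hE, T.continuous_selectionOperator hE⟩,
    fun f x => T.limit_mem_closure_convexHull hE f.continuous x⟩

/-- Arvanitakis' theorem: for a LSC closedvalued mapping `F` from a paracompact
Hausdorff k-space `X` into a complete metric space `Y`, and a Hausdorff locally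
convex space `E` in which closed convex hulls of compacta are compact, there is
a continuous linear operator `S : C(Y,E) → C(X,E)` (compact-open topologies)
with `S f x ∈ closure (convexHull (f '' F x))` for all `f` and `x`. -/
theorem arvanitakis_selection_extension
    {X Y E : Type*} [TopologicalSpace X] [ParacompactSpace X] [T2Space X]
    [MetricSpace Y] [CompleteSpace Y]
    [AddCommGroup E] [Module ℝ E] [TopologicalSpace E]
    [IsTopologicalAddGroup E] [ContinuousSMul ℝ E] [LocallyConvexSpace ℝ E] [T2Space E]
    (hk : ∀ A : Set X, (∀ K : Set X, IsCompact K → IsClosed (A ∩ K)) → IsClosed A)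
    (hE : ∀ K : Set E, IsCompact K → IsCompact (closure (convexHull ℝ K)))
    (F : X → Set Y)
    (hLSC : ∀ U : Set Y, IsOpen U → IsOpen {x : X | (F x ∩ U).Nonempty})
    (hne : ∀ x : X, (F x).Nonempty)
    (hclosed : ∀ x : X, IsClosed (F x)) :
    ∃ S : C(Y, E) →L[ℝ] C(X, E),
      ∀ (f : C(Y, E)) (x : X), S f x ∈ closure (convexHull ℝ (f '' F x)) :=
  arvanitakis_selection_extension_general hk hE F hLSC hne
end

section
/- Khamsi–Kirk–Yanez theorem: let (Y,d) be a hyperconvex metric space, S an arbitrary set, and F a mapping assigning to each s ∈ S a nonempty externally hyperconvex subset F(s) ⊆ Y. Then there exists a singlevalued selection f : S → Y with f(s) ∈ F(s) for every s ∈ S such that d(f(x), f(y)) ≤ Hd(F(x), F(y)) for all x, y ∈ S, where Hd denotes the Hausdorff distance between subsets of Y. -/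
/-!
Well-order `S` and choose `f s` by transfinite recursion. At stage `s` the closed balls around
the earlier values `f t` with radii `Hd(F s, F t)` are pairwise compatible, since
`d(f t, f u) ≤ Hd(F t, F u) ≤ Hd(F s, F t) + Hd(F s, F u)`, and each of them reaches `F s`,
because `f t ∈ F t`. External hyperconvexity of `F s` then provides a point of `F s` in all of
them, which keeps the selection nonexpansive.
-/

section TransfiniteSelection

variable {S Y : Type*} {P : S → Y → Prop} {R : S → S → Y → Y → Prop}

theorem exists_forall_pairwise_of_extend (hR_symm : ∀ s t y z, R s t y z → R t s z y)
    (hR_refl : ∀ s y, R s s y y) (hP : ∀ s, ∃ y, P s y)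
    (hextend : ∀ s (A : Set S) (g : S → Y), (∀ t ∈ A, P t (g t)) →
      (∀ t ∈ A, ∀ u ∈ A, R t u (g t) (g u)) → ∃ y, P s y ∧ ∀ t ∈ A, R s t y (g t)) :
    ∃ f : S → Y, (∀ s, P s (f s)) ∧ ∀ s t, R s t (f s) (f t) := by
  classical
  let r : S → S → Prop := WellOrderingRel
  have pairwise_of_lt : ∀ (f : S → Y) (A : Set S),
      (∀ s ∈ A, ∀ t ∈ A, r t s → R s t (f s) (f t)) → ∀ s ∈ A, ∀ t ∈ A, R s t (f s) (f t) := by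
    intro f A h s hs t ht
    rcases trichotomous_of r s t with hst | rfl | hts
    · exact hR_symm _ _ _ _ (h t ht s hs hst)
    · exact hR_refl _ _
    · exact h s hs t ht hts
  -- the fallback `(hP s).choose` is never taken, as shown by `hf_spec`
  let f : S → Y := IsWellFounded.fix r fun s g =>
    if h : ∃ y, P s y ∧ ∀ t (ht : r t s), R s t y (g t ht) then h.choose else (hP s).choose
  have hf (s : S) : f s = if h : ∃ y, P s y ∧ ∀ t, r t s → R s t y (f t) then h.choose
      else (hP s).choose :=
    IsWellFounded.fix_eq _ _ s
  have hf_spec (s : S) : P s (f s) ∧ ∀ t, r t s → R s t (f s) (f t) := by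
    induction s using IsWellFounded.induction r with
    | _ s IH =>
    have h : ∃ y, P s y ∧ ∀ t, r t s → R s t y (f t) :=
      hextend s {t | r t s} f (fun t ht => (IH t ht).1)
        (pairwise_of_lt f _ fun t ht u _ hut => (IH t ht).2 u hut)
    rw [hf, dif_pos h]
    exact h.choose_spec
  exact ⟨f, fun s => (hf_spec s).1, fun s t =>
    pairwise_of_lt f Set.univ (fun s _ t _ => (hf_spec s).2 t) s trivial t trivial⟩

end TransfiniteSelection

section ExternalHyperconvexity

open Metric

open scoped ENNReal

variable {Y : Type*} [PseudoMetricSpace Y]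

def IsExternallyHyperconvex (Z : Set Y) : Prop :=
  ∀ T : Set (Y × ℝ), (∀ p ∈ T, infDist p.1 Z ≤ p.2) →
    (∀ p ∈ T, ∀ q ∈ T, dist p.1 q.1 ≤ p.2 + q.2) → ((⋂ p ∈ T, closedBall p.1 p.2) ∩ Z).Nonempty

theorem IsExternallyHyperconvex.exists_mem_forall_edist_le {Z : Set Y}
    (hZ : IsExternallyHyperconvex Z) {ι : Type*} (x : ι → Y) (r : ι → ℝ≥0∞)
    (hxZ : ∀ i, infEDist (x i) Z ≤ r i) (hx : ∀ i j, edist (x i) (x j) ≤ r i + r j) :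
    ∃ z ∈ Z, ∀ i, edist z (x i) ≤ r i := by
  -- balls of infinite radius impose no constraint
  obtain ⟨z, hz, hzZ⟩ := hZ ((fun i => (x i, (r i).toReal)) '' {i | r i ≠ ∞})
    (by
      rintro _ ⟨i, hi, rfl⟩
      exact ENNReal.toReal_mono hi (hxZ i))
    (by
      rintro _ ⟨i, hi, rfl⟩ _ ⟨j, hj, rfl⟩
      rw [dist_edist, ← ENNReal.toReal_add hi hj]
      exact ENNReal.toReal_mono (ENNReal.add_ne_top.2 ⟨hi, hj⟩) (hx i j))
  refine ⟨z, hzZ, fun i => ?_⟩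
  by_cases hi : r i = ∞
  · simp [hi]
  · have hzi : dist z (x i) ≤ (r i).toReal := Set.mem_iInter₂.1 hz _ ⟨i, hi, rfl⟩
    rw [edist_dist]
    exact (ENNReal.ofReal_le_iff_le_toReal hi).2 hzi

theorem IsExternallyHyperconvex.exists_mem_forall_edist_le_hausdorffEDist {Z : Set Y}
    (hZ : IsExternallyHyperconvex Z) {S : Type*} (F : S → Set Y) (A : Set S) (g : S → Y)
    (hg : ∀ t ∈ A, g t ∈ F t)
    (hgg : ∀ t ∈ A, ∀ u ∈ A, edist (g t) (g u) ≤ hausdorffEDist (F t) (F u)) :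
    ∃ z ∈ Z, ∀ t ∈ A, edist z (g t) ≤ hausdorffEDist Z (F t) := by
  obtain ⟨z, hzZ, hz⟩ := hZ.exists_mem_forall_edist_le (fun t : A => g t)
    (fun t => hausdorffEDist Z (F t))
    (fun t => hausdorffEDist_comm (s := Z) ▸ infEDist_le_hausdorffEDist_of_mem (hg t t.2))
    (fun t u => calc
      edist (g t) (g u) ≤ hausdorffEDist (F t) (F u) := hgg t t.2 u u.2
      _ ≤ hausdorffEDist (F t) Z + hausdorffEDist Z (F u) := hausdorffEDist_triangle
      _ = hausdorffEDist Z (F t) + hausdorffEDist Z (F u) := by rw [hausdorffEDist_comm])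
  exact ⟨z, hzZ, fun t ht => hz ⟨t, ht⟩⟩

end ExternalHyperconvexity

theorem khamsi_kirk_yanez_selection_general
    {Y : Type*} [MetricSpace Y]
    {S : Type*} (F : S → Set Y)
    (hne : ∀ s : S, (F s).Nonempty)
    (hext : ∀ s : S, ∀ T : Set (Y × ℝ),
      (∀ p ∈ T, Metric.infDist p.1 (F s) ≤ p.2) →
      (∀ p ∈ T, ∀ q ∈ T, dist p.1 q.1 ≤ p.2 + q.2) →
      ((⋂ p ∈ T, Metric.closedBall p.1 p.2) ∩ F s).Nonempty) :
    ∃ f : S → Y, (∀ s : S, f s ∈ F s) ∧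
      ∀ x y : S, edist (f x) (f y) ≤ EMetric.hausdorffEdist (F x) (F y) :=
  exists_forall_pairwise_of_extend (P := fun s y => y ∈ F s)
    (R := fun s t y z => edist y z ≤ Metric.hausdorffEDist (F s) (F t))
    (fun _ _ _ _ h => by rwa [edist_comm, Metric.hausdorffEDist_comm])
    (fun _ _ => by simp) hne
    fun s => IsExternallyHyperconvex.exists_mem_forall_edist_le_hausdorffEDist (hext s) F

/-- The Khamsi–Kirk–Yanez theorem: a mapping from an arbitrary set into a
hyperconvex metric space whose values are nonempty externally hyperconvex sets
admits a singlevalued selection which is nonexpansive with respect to the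
Hausdorff (extended) distance between the values. -/
theorem khamsi_kirk_yanez_selection
    {Y : Type*} [MetricSpace Y]
    (hhyper : ∀ S : Set (Y × ℝ), (∀ p ∈ S, 0 ≤ p.2) →
      (∀ p ∈ S, ∀ q ∈ S, dist p.1 q.1 ≤ p.2 + q.2) →
      (⋂ p ∈ S, Metric.closedBall p.1 p.2).Nonempty)
    {S : Type*} (F : S → Set Y)
    (hne : ∀ s : S, (F s).Nonempty)
    (hext : ∀ s : S, ∀ T : Set (Y × ℝ),
      (∀ p ∈ T, Metric.infDist p.1 (F s) ≤ p.2) →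
      (∀ p ∈ T, ∀ q ∈ T, dist p.1 q.1 ≤ p.2 + q.2) →
      ((⋂ p ∈ T, Metric.closedBall p.1 p.2) ∩ F s).Nonempty) :
    ∃ f : S → Y, (∀ s : S, f s ∈ F s) ∧
      ∀ x y : S, edist (f x) (f y) ≤ EMetric.hausdorffEdist (F x) (F y) :=
  khamsi_kirk_yanez_selection_general F hne hext
end

section
/- Continuous choice of retractions onto paraconvex sets: let 0 ≤ α < 1/2, let B be a real Banach space, X a paracompact Hausdorff space, and F a multivalued mapping from X to B such that every value F(x) is a nonempty bounded α-paraconvex subset of B, and F is continuous with respect to the Hausdorff distance (for every x₀ ∈ X and ε > 0 there is a neighborhood U of x₀ with Hd(F(x), F(x₀)) < ε for all x ∈ U). Then there exists a continuous map 𝔉 : X → C_b(B,B), where C_b(B,B) is the space of bounded continuous maps from B to B with the supremum metric, such that for every x ∈ X the map 𝔉(x) : B → B is a retraction of B onto F(x), i.e. 𝔉(x)(b) ∈ F(x) for every b ∈ B and 𝔉(x)(b) = b for every b ∈ F(x). -/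
/-!
Retractions onto `P` are sought among the bounded continuous maps into `P` whose displacement
`dist (f b) b` tends to `0` uniformly as `b` approaches `P`. Michael's iteration for
paraconvex-valued maps, each step dividing the error by a factor `γ < 1/2`, pushes any continuous
map `h` into an `α`-paraconvex `P` while moving it by at most `2 · infDist (h ·) P`. Pushing convex
combinations of such retractions shows that they form a `2α`-paraconvex subset of `C_b(B, B)`;
pushing a blend of a retraction onto `P` with the identity near a Hausdorff-close `Q` shows that
they depend lower hemicontinuously on `P`. As `2α < 1`, Michael's selection theorem for
paraconvex-valued maps applies to `x ↦ {retractions onto F x}` and gives the continuous choice.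
-/

open Metric Set Filter Topology Pointwise BoundedContinuousFunction

theorem lowerHemicontinuous_iff_eventually_exists_dist_lt {Z Y : Type*} [TopologicalSpace Z]
    [PseudoMetricSpace Y] {G : Z → Set Y} :
    LowerHemicontinuous G ↔
      ∀ z₀, ∀ p ∈ G z₀, ∀ r > 0, ∀ᶠ z in 𝓝 z₀, ∃ q ∈ G z, dist q p < r := by
  simp only [lowerHemicontinuous_iff, lowerHemicontinuousAt_iff]
  constructor
  · intro hG z₀ p hp r hr
    exact hG z₀ (ball p r) isOpen_ball ⟨p, hp, mem_ball_self hr⟩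
  · rintro hG z₀ u hu ⟨p, hp, hpu⟩
    obtain ⟨r, hr, hru⟩ := isOpen_iff.1 hu p hpu
    filter_upwards [hG z₀ p hp r hr] with z ⟨q, hq, hqp⟩
    exact ⟨q, hq, hru hqp⟩

theorem ContinuousAt.of_dist_le {X Y : Type*} [TopologicalSpace X] [MetricSpace Y]
    {f g : X → Y} {u : X → ℝ} {x : X} (hf : ContinuousAt f x) (hu : ContinuousAt u x)
    (hux : u x = 0) (h : ∀ y, dist (g y) (f y) ≤ u y) : ContinuousAt g x := by
  have hgx : g x = f x := dist_le_zero.1 (hux ▸ h x)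
  rw [ContinuousAt, hgx]
  have hu0 : Tendsto u (𝓝 x) (𝓝 0) := hux ▸ hu
  refine hf.congr_dist (squeeze_zero (fun _ => dist_nonneg) (fun y => ?_) hu0)
  exact (dist_comm _ _).trans_le (h y)

theorem continuous_of_dist_le_mul_pow {X Y : Type*} [TopologicalSpace X] [PseudoMetricSpace Y]
    {g : ℕ → X → Y} {H : X → Y} {u : X → ℝ} {γ : ℝ} (hg : ∀ n, Continuous (g n))
    (hu : Continuous u) (hγ0 : 0 ≤ γ) (hγ1 : γ < 1) (h : ∀ n x, dist (g n x) (H x) ≤ u x * γ ^ n) :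
    Continuous H := by
  refine TendstoLocallyUniformly.continuous (p := atTop) ?_ (Frequently.of_forall hg)
  refine Metric.tendstoLocallyUniformly_iff.2 fun δ hδ x₀ => ?_
  refine ⟨{x | u x < u x₀ + 1}, (isOpen_lt hu continuous_const).mem_nhds (lt_add_one (u x₀)), ?_⟩
  have hpow : Tendsto (fun n => (u x₀ + 1) * γ ^ n) atTop (𝓝 0) := by
    simpa using (tendsto_pow_atTop_nhds_zero_of_lt_one hγ0 hγ1).const_mul (u x₀ + 1)
  filter_upwards [hpow.eventually (gt_mem_nhds hδ)] with n hn x hx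
  calc dist (H x) (g n x) ≤ u x * γ ^ n := by rw [dist_comm]; exact h n x
    _ ≤ (u x₀ + 1) * γ ^ n := by gcongr
    _ < δ := hn

theorem diam_le_diam_add_two_mul_hausdorffDist {Y : Type*} [PseudoMetricSpace Y] {s t : Set Y}
    (ht : Bornology.IsBounded t) (hfin : hausdorffEDist s t ≠ ⊤) :
    diam s ≤ diam t + 2 * hausdorffDist s t := by
  have h0 : 0 ≤ diam t + 2 * hausdorffDist s t :=
    add_nonneg diam_nonneg (mul_nonneg zero_le_two hausdorffDist_nonneg)
  refine diam_le_of_forall_dist_le h0 fun a ha b hb => ?_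
  refine le_of_forall_pos_le_add fun τ hτ => ?_
  have hlt : hausdorffDist s t < hausdorffDist s t + τ / 2 := by linarith
  obtain ⟨a', ha', haa'⟩ := exists_dist_lt_of_hausdorffDist_lt ha hlt hfin
  obtain ⟨b', hb', hbb'⟩ := exists_dist_lt_of_hausdorffDist_lt hb hlt hfin
  calc dist a b ≤ dist a a' + dist a' b' + dist b b' := by
        rw [dist_comm b b']; exact dist_triangle4 _ _ _ _
    _ ≤ diam t + 2 * hausdorffDist s t + τ := by
        linarith [dist_le_diam_of_mem ht ha' hb']

theorem continuous_diam_of_hausdorffDist {X Y : Type*} [TopologicalSpace X] [PseudoMetricSpace Y]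
    {F : X → Set Y} (hne : ∀ x, (F x).Nonempty) (hbdd : ∀ x, Bornology.IsBounded (F x))
    (hF : ∀ x₀ : X, ∀ ε : ℝ, 0 < ε → ∃ U ∈ 𝓝 x₀, ∀ x ∈ U, hausdorffDist (F x) (F x₀) < ε) :
    Continuous fun x => diam (F x) := by
  refine continuous_iff_continuousAt.2 fun x₀ => Metric.tendsto_nhds.2 fun η hη => ?_
  obtain ⟨U, hU, hUF⟩ := hF x₀ (η / 2) (half_pos hη)
  filter_upwards [hU] with x hx
  have hfin := hausdorffEDist_ne_top_of_nonempty_of_bounded (hne x) (hne x₀) (hbdd x) (hbdd x₀)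
  have h₁ := diam_le_diam_add_two_mul_hausdorffDist (hbdd x₀) hfin
  have h₂ := diam_le_diam_add_two_mul_hausdorffDist (hbdd x) (by rwa [hausdorffEDist_comm])
  rw [hausdorffDist_comm] at h₂
  rw [Real.dist_eq, abs_sub_lt_iff]
  constructor <;> linarith [hUF x hx]

section ParaConvex

variable {E : Type*} [NormedAddCommGroup E] [NormedSpace ℝ E]

def ParaConvex (α : ℝ) (P : Set E) : Prop :=
  ∀ r : ℝ, 0 < r → ∀ c : E, ∀ q ∈ convexHull ℝ (P ∩ ball c r), infDist q P ≤ α * r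

theorem ParaConvex.nonneg {α : ℝ} {P : Set E} (hP : ParaConvex α P) (hne : P.Nonempty) :
    0 ≤ α := by
  obtain ⟨p, hp⟩ := hne
  have := hP 1 one_pos p p (subset_convexHull ℝ _ ⟨hp, mem_ball_self one_pos⟩)
  rw [infDist_zero_of_mem hp] at this
  linarith

theorem ParaConvex.infDist_le_of_mem_convexHull {α R r : ℝ} {P S : Set E} {c p : E}
    (hP : ParaConvex α P) (hR : 0 < R) (hS : ∀ s ∈ S, ∃ q ∈ P ∩ ball c R, dist s q ≤ r)
    (hp : p ∈ convexHull ℝ S) : infDist p P ≤ α * R + r := by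
  have hsub : convexHull ℝ S ⊆ convexHull ℝ (P ∩ ball c R) + closedBall (0 : E) r := by
    refine convexHull_min (fun s hs => ?_) ((convex_convexHull ℝ _).add (convex_closedBall _ _))
    obtain ⟨q, hq, hsq⟩ := hS s hs
    refine ⟨q, subset_convexHull ℝ _ hq, s - q, ?_, add_sub_cancel q s⟩
    simpa [dist_eq_norm] using hsq
  obtain ⟨a, ha, w, hw, rfl⟩ := hsub hp
  calc infDist (a + w) P ≤ infDist a P + dist (a + w) a := infDist_le_infDist_add_dist
    _ ≤ α * R + r := add_le_add (hP R hR c a ha) (by simpa [dist_eq_norm] using hw)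

section Selection

variable {Z : Type*} [TopologicalSpace Z] [NormalSpace Z] [ParacompactSpace Z]
  {G : Z → Set E} {β γ : ℝ}

theorem exists_continuous_dist_le_infDist_lt (hβ0 : 0 ≤ β) (hβγ : β < γ)
    (hG : LowerHemicontinuous G) (hpc : ∀ z, ParaConvex β (G z)) (hne : ∀ z, (G z).Nonempty)
    {f : Z → E} (hf : Continuous f) {ε : Z → ℝ} (hε : Continuous ε) (hεpos : ∀ z, 0 < ε z)
    (hd : ∀ z, infDist (f z) (G z) < ε z) :
    ∃ f' : Z → E, Continuous f' ∧
      ∀ z, dist (f' z) (f z) ≤ ε z ∧ infDist (f' z) (G z) < γ * ε z := by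
  set μ := (γ - β) / (β + 2)
  have hμ : 0 < μ := div_pos (by linarith) (by linarith)
  have hμγ : β * (1 + μ) + μ < γ := by
    have : μ * (β + 2) = γ - β := div_mul_cancel₀ _ (by linarith)
    nlinarith
  set S : Z → Set E := fun y => {p | dist p (f y) < ε y ∧ ∃ q ∈ G y, dist p q < μ * ε y}
  have hloc : ∀ z₀, ∃ c, ∀ᶠ y in 𝓝 z₀, c ∈ convexHull ℝ (S y) := by
    intro z₀
    obtain ⟨c, hc, hcf⟩ := (infDist_lt_iff (hne z₀)).1 (hd z₀)
    have hμε : 0 < μ / 2 * ε z₀ := by have := hεpos z₀; positivity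
    have h₁ : ∀ᶠ y in 𝓝 z₀, dist c (f y) < ε y :=
      (continuous_const.dist hf).continuousAt.eventually_lt hε.continuousAt
        (by rwa [dist_comm])
    have h₂ : ∀ᶠ y in 𝓝 z₀, μ / 2 * ε z₀ < μ * ε y :=
      continuousAt_const.eventually_lt (hε.continuousAt.const_mul μ)
        (by have := hεpos z₀; nlinarith)
    refine ⟨c, ?_⟩
    filter_upwards [h₁, h₂, (lowerHemicontinuous_iff_eventually_exists_dist_lt.1 hG) z₀ c hc _ hμε]
      with y hy₁ hy₂ ⟨q, hq, hqc⟩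
    exact subset_convexHull ℝ _ ⟨hy₁, q, hq, by rw [dist_comm]; linarith⟩
  obtain ⟨g, hg⟩ := exists_continuous_forall_mem_convex_of_local_const
    (fun y => convex_convexHull ℝ (S y)) hloc
  refine ⟨g, g.continuous, fun z => ⟨?_, ?_⟩⟩
  · exact mem_closedBall.1 <| convexHull_min (fun p hp => mem_closedBall.2 hp.1.le)
      (convex_closedBall _ _) (hg z)
  · have hεz := hεpos z
    calc infDist (g z) (G z) ≤ β * ((1 + μ) * ε z) + μ * ε z := by
          refine (hpc z).infDist_le_of_mem_convexHull (c := f z) (by positivity)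
            (fun p hp => ?_) (hg z)
          obtain ⟨hpf, q, hq, hpq⟩ := hp
          refine ⟨q, ⟨hq, mem_ball.2 ?_⟩, hpq.le⟩
          linarith [dist_triangle_left q (f z) p]
      _ < γ * ε z := by nlinarith

theorem exists_continuous_selection_dist_le [CompleteSpace E] (hβ0 : 0 ≤ β) (hβγ : β < γ)
    (hγ1 : γ < 1) (hG : LowerHemicontinuous G) (hpc : ∀ z, ParaConvex β (G z))
    (hne : ∀ z, (G z).Nonempty) (hcl : ∀ z, IsClosed (G z))
    {f : Z → E} (hf : Continuous f) {ε : Z → ℝ} (hε : Continuous ε) (hεpos : ∀ z, 0 < ε z)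
    (hd : ∀ z, infDist (f z) (G z) < ε z) :
    ∃ H : Z → E, Continuous H ∧ ∀ z, H z ∈ G z ∧ dist (H z) (f z) ≤ ε z / (1 - γ) := by
  have hγ0 : 0 < γ := hβ0.trans_lt hβγ
  let Approx (n : ℕ) := {g : Z → E // Continuous g ∧ ∀ z, infDist (g z) (G z) < γ ^ n * ε z}
  have hstep : ∀ n (g : Approx n), ∃ g' : Approx (n + 1),
      ∀ z, dist (g'.1 z) (g.1 z) ≤ γ ^ n * ε z := by
    rintro n ⟨g, hg, hgG⟩
    obtain ⟨g', hg', hg'G⟩ := exists_continuous_dist_le_infDist_lt hβ0 hβγ hG hpc hne hg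
      (hε.const_mul _) (fun z => mul_pos (pow_pos hγ0 n) (hεpos z)) hgG
    exact ⟨⟨g', hg', fun z => by simpa [pow_succ, mul_assoc, mul_comm γ] using (hg'G z).2⟩,
      fun z => (hg'G z).1⟩
  choose next hnext using hstep
  let g : ∀ n, Approx n := fun n => Nat.rec ⟨f, hf, by simpa using hd⟩ next n
  have hgeom : ∀ z n, dist ((g n).1 z) ((g (n + 1)).1 z) ≤ ε z * γ ^ n := fun z n => by
    rw [dist_comm, mul_comm]; exact hnext n (g n) z
  choose H hH using fun z => cauchySeq_tendsto_of_complete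
    (cauchySeq_of_le_geometric γ (ε z) hγ1 (hgeom z))
  have hdist : ∀ n z, dist ((g n).1 z) (H z) ≤ ε z / (1 - γ) * γ ^ n := fun n z =>
    (dist_le_of_le_geometric_of_tendsto γ (ε z) hγ1 (hgeom z) (hH z) n).trans_eq (by ring)
  refine ⟨H, continuous_of_dist_le_mul_pow (fun n => (g n).2.1) (hε.div_const _) hγ0.le hγ1 hdist,
    fun z => ⟨?_, by rw [dist_comm]; exact (hdist 0 z).trans_eq (by simp)⟩⟩
  have hlim : Tendsto (fun n => infDist ((g n).1 z) (G z)) atTop (𝓝 0) := by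
    refine squeeze_zero (fun _ => infDist_nonneg) (fun n => ((g n).2.2 z).le) ?_
    simpa using (tendsto_pow_atTop_nhds_zero_of_lt_one hγ0.le hγ1).mul_const (ε z)
  rw [(hcl z).mem_iff_infDist_zero (hne z)]
  exact tendsto_nhds_unique (((continuous_infDist_pt _).tendsto _).comp (hH z)) hlim

theorem exists_continuous_selection_of_paraConvex [CompleteSpace E] (hβ0 : 0 ≤ β) (hβ1 : β < 1)
    (hG : LowerHemicontinuous G) (hpc : ∀ z, ParaConvex β (G z)) (hne : ∀ z, (G z).Nonempty)
    (hcl : ∀ z, IsClosed (G z)) {D : Z → ℝ} (hD : Continuous D)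
    (hdiam : ∀ z, ∀ p ∈ G z, ∀ q ∈ G z, dist p q ≤ D z) :
    ∃ H : Z → E, Continuous H ∧ ∀ z, H z ∈ G z := by
  obtain ⟨f₀, hf₀⟩ := exists_continuous_forall_mem_convex_of_local_const
    (t := fun z => convexHull ℝ {p | ∃ q ∈ G z, dist p q < 1}) (fun z => convex_convexHull ℝ _)
    fun z₀ => by
      obtain ⟨p, hp⟩ := hne z₀
      refine ⟨p, ?_⟩
      filter_upwards [lowerHemicontinuous_iff_eventually_exists_dist_lt.1 hG z₀ p hp 1 one_pos]
        with z ⟨q, hq, hqp⟩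
      exact subset_convexHull ℝ _ ⟨q, hq, by rwa [dist_comm]⟩
  have hd₀ : ∀ z, infDist (f₀ z) (G z) < β * (D z + 1) + 2 := by
    intro z
    obtain ⟨c, hc⟩ := hne z
    have hD0 : 0 ≤ D z := dist_nonneg.trans (hdiam z c hc c hc)
    calc infDist (f₀ z) (G z) ≤ β * (D z + 1) + 1 := by
          refine (hpc z).infDist_le_of_mem_convexHull (c := c) (by linarith) (fun p hp => ?_)
            (hf₀ z)
          obtain ⟨q, hq, hpq⟩ := hp
          exact ⟨q, ⟨hq, mem_ball.2 (by linarith [hdiam z q hq c hc])⟩, hpq.le⟩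
      _ < β * (D z + 1) + 2 := by linarith
  obtain ⟨H, hHc, hH⟩ := exists_continuous_selection_dist_le (γ := (β + 1) / 2) hβ0
    (by linarith) (by linarith) hG hpc hne hcl f₀.continuous (by fun_prop)
    (fun z => infDist_nonneg.trans_lt (hd₀ z)) hd₀
  exact ⟨H, hHc, fun z => (hH z).1⟩

end Selection

theorem ParaConvex.exists_continuous_mem_dist_le [CompleteSpace E] {Z : Type*} [MetricSpace Z]
    {α : ℝ} {P : Set E} (hP : ParaConvex α P) (hα : α < 1 / 2) (hne : P.Nonempty)
    (hcl : IsClosed P) {f : Z → E} (hf : Continuous f) :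
    ∃ H : Z → E, Continuous H ∧ ∀ z, H z ∈ P ∧ dist (H z) (f z) ≤ 2 * infDist (f z) P := by
  set d : Z → ℝ := fun z => infDist (f z) P
  have hd : Continuous d := (continuous_infDist_pt P).comp hf
  have hd0 : ∀ z, ¬0 < d z → d z = 0 := fun z hz => le_antisymm (not_lt.1 hz) infDist_nonneg
  set U : Set Z := {z | 0 < d z}
  obtain ⟨γ, hαγ, hγ⟩ := exists_between hα
  have h1γ : (1 : ℝ) - γ ≠ 0 := by linarith
  -- off `U` the map `f` already lands in `P`; on `U` the error `d` is positive, and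
  -- `ε = 2 (1 - γ) d > d` turns the bound `ε / (1 - γ)` into `2 d`
  obtain ⟨HU, hHUc, hHU⟩ := exists_continuous_selection_dist_le (Z := U) (G := fun _ => P)
    (hP.nonneg hne) hαγ (by linarith) Semicontinuous.const (fun _ => hP) (fun _ => hne)
    (fun _ => hcl) (hf.comp continuous_subtype_val) (ε := fun z => 2 * (1 - γ) * d z)
    (by fun_prop) (fun z => mul_pos (by linarith) z.2)
    (fun z => by have : 0 < d z := z.2; show d z < _; nlinarith)
  classical
  set H : Z → E := fun z => if h : z ∈ U then HU ⟨z, h⟩ else f z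
  have hH : ∀ z, H z ∈ P ∧ dist (H z) (f z) ≤ 2 * d z := by
    intro z
    by_cases hz : z ∈ U
    · simp only [H, dif_pos hz]
      refine ⟨(hHU _).1, (hHU _).2.trans_eq ?_⟩
      field_simp
    · simp only [H, dif_neg hz, dist_self, hd0 z hz, mul_zero, le_refl, and_true]
      exact (hcl.mem_iff_infDist_zero hne).2 (hd0 z hz)
  refine ⟨H, continuous_iff_continuousAt.2 fun z => ?_, hH⟩
  by_cases hz : z ∈ U
  · have hHU' : ContinuousOn H U := by
      rw [continuousOn_iff_continuous_domRestrict]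
      convert hHUc using 1
      funext z
      exact dif_pos z.2
    exact hHU'.continuousAt ((isOpen_lt continuous_const hd).mem_nhds hz)
  · exact hf.continuousAt.of_dist_le (hd.const_mul 2).continuousAt
      (by simp only [hd0 z hz, mul_zero]) fun z => (hH z).2

end ParaConvex

section TameRetractions

variable {B : Type*} [MetricSpace B]

/-- The uniform control of `dist (f b) b` near `P` is what makes `P ↦ tameRetractions P` lower
hemicontinuous for the Hausdorff distance. -/
def tameRetractions (P : Set B) : Set (B →ᵇ B) :=
  {f | (∀ b, f b ∈ P) ∧ Tendsto (fun b => dist (f b) b) (comap (infDist · P) (𝓝 0)) (𝓝 0)}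

theorem isClosed_setOf_tendsto_dist (l : Filter B) :
    IsClosed {f : B →ᵇ B | Tendsto (fun b => dist (f b) b) l (𝓝 0)} := by
  refine isClosed_of_closure_subset fun f hf => Metric.tendsto_nhds.2 fun η hη => ?_
  obtain ⟨f', hf', hff'⟩ := Metric.mem_closure_iff.1 hf (η / 2) (half_pos hη)
  filter_upwards [hf'.eventually (gt_mem_nhds (half_pos hη))] with b hb
  rw [Real.dist_0_eq_abs, abs_of_nonneg dist_nonneg]
  calc dist (f b) b ≤ dist (f b) (f' b) + dist (f' b) b := dist_triangle _ _ _
    _ ≤ dist f f' + dist (f' b) b := by gcongr; exact dist_coe_le_dist b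
    _ < η := by linarith

theorem isClosed_tameRetractions {P : Set B} (hP : IsClosed P) : IsClosed (tameRetractions P) := by
  show IsClosed ({f : B →ᵇ B | ∀ b, f b ∈ P} ∩ _)
  refine IsClosed.inter ?_ (isClosed_setOf_tendsto_dist _)
  rw [ofPred_forall]
  exact isClosed_iInter fun b => hP.preimage (continuous_eval_const b)

theorem apply_eq_of_mem_tameRetractions {P : Set B} {f : B →ᵇ B} (hf : f ∈ tameRetractions P)
    {b : B} (hb : b ∈ P) : f b = b := by
  have hpure : pure b ≤ comap (infDist · P) (𝓝 0) := by
    rw [← map_le_iff_le_comap, map_pure, infDist_zero_of_mem hb]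
    exact pure_le_nhds 0
  exact dist_eq_zero.1 (tendsto_nhds_unique (tendsto_pure_nhds _ b) (hf.2.mono_left hpure))

theorem dist_le_diam_of_mem_tameRetractions {P : Set B} (hbdd : Bornology.IsBounded P)
    {f g : B →ᵇ B} (hf : f ∈ tameRetractions P) (hg : g ∈ tameRetractions P) :
    dist f g ≤ diam P :=
  (dist_le diam_nonneg).2 fun b => dist_le_diam_of_mem hbdd (hf.1 b) (hg.1 b)

end TameRetractions

section NormedTameRetractions

variable {B : Type*} [NormedAddCommGroup B] [NormedSpace ℝ B]

theorem convex_setOf_tendsto_dist (l : Filter B) :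
    Convex ℝ {f : B →ᵇ B | Tendsto (fun b => dist (f b) b) l (𝓝 0)} := by
  intro f hf g hg s t hs ht hst
  refine squeeze_zero (fun _ => dist_nonneg) (fun b => ?_)
    (by simpa using (hf.const_mul s).add (hg.const_mul t))
  have : (s • f + t • g) b - b = s • (f b - b) + t • (g b - b) := by
    simp only [coe_add, coe_smul, Pi.add_apply]
    linear_combination (norm := module) hst • b
  rw [dist_eq_norm, this, dist_eq_norm, dist_eq_norm]
  refine (norm_add_le _ _).trans_eq ?_
  rw [norm_smul, norm_smul, Real.norm_of_nonneg hs, Real.norm_of_nonneg ht]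

theorem exists_continuous_dist_le_tendsto_of_dist_le {f : B → B} (hf : Continuous f)
    {Q : Set B} {ρ η : ℝ} (hρ : 0 < ρ) (hη : 0 ≤ η)
    (hnear : ∀ b, infDist b Q < ρ → dist (f b) b ≤ η) :
    ∃ h : B → B, Continuous h ∧ (∀ b, dist (h b) (f b) ≤ η) ∧
      Tendsto (fun b => dist (h b) b) (comap (infDist · Q) (𝓝 0)) (𝓝 0) := by
  -- slide each `b` towards `f b`, all the way once `b` is `ρ`-far from `Q`, not at all on `Q`
  set κ : B → ℝ := fun b => min 1 (infDist b Q / ρ)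
  have hκ0 : ∀ b, 0 ≤ κ b := fun b => le_min zero_le_one (div_nonneg infDist_nonneg hρ.le)
  refine ⟨fun b => AffineMap.lineMap b (f b) (κ b), continuous_id.lineMap hf
    (continuous_const.min ((continuous_infDist_pt Q).div_const ρ)), fun b => ?_, ?_⟩
  · rw [dist_lineMap_right, Real.norm_of_nonneg (sub_nonneg.2 (min_le_left _ _))]
    rcases lt_or_ge (infDist b Q) ρ with hb | hb
    · rw [dist_comm]
      nlinarith [hκ0 b, hnear b hb, dist_nonneg (x := f b) (y := b)]
    · simp [min_eq_left ((one_le_div hρ).2 hb), hη]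
  · have hQ0 : Tendsto (infDist · Q) (comap (infDist · Q) (𝓝 0)) (𝓝 0) := tendsto_comap
    refine squeeze_zero' (Eventually.of_forall fun _ => dist_nonneg) ?_
      (by simpa using (hQ0.div_const ρ).mul_const η)
    filter_upwards [hQ0.eventually (gt_mem_nhds hρ)] with b hb
    rw [dist_lineMap_left, Real.norm_of_nonneg (hκ0 b), dist_comm]
    exact mul_le_mul (min_le_right _ _) (hnear b hb) dist_nonneg
      (div_nonneg infDist_nonneg hρ.le)

variable [CompleteSpace B] {α : ℝ} {P : Set B}

theorem ParaConvex.exists_mem_tameRetractions_dist_le (hP : ParaConvex α P) (hα : α < 1 / 2)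
    (hne : P.Nonempty) (hcl : IsClosed P) (hbdd : Bornology.IsBounded P) {h : B → B}
    (hh : Continuous h)
    (hnear : Tendsto (fun b => dist (h b) b) (comap (infDist · P) (𝓝 0)) (𝓝 0)) :
    ∃ g ∈ tameRetractions P, ∀ b, dist (g b) (h b) ≤ 2 * infDist (h b) P := by
  obtain ⟨H, hHc, hH⟩ := hP.exists_continuous_mem_dist_le hα hne hcl hh
  refine ⟨⟨⟨H, hHc⟩, isBounded_range_iff.1 (hbdd.subset (range_subset_iff.2 fun b => (hH b).1))⟩,
    ⟨fun b => (hH b).1, ?_⟩, fun b => (hH b).2⟩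
  have hP0 : Tendsto (infDist · P) (comap (infDist · P) (𝓝 0)) (𝓝 0) := tendsto_comap
  refine squeeze_zero (fun _ => dist_nonneg) (fun b => ?_)
    (by simpa using (hP0.const_mul 2).add (hnear.const_mul 3))
  calc dist (H b) b ≤ dist (H b) (h b) + dist (h b) b := dist_triangle _ _ _
    _ ≤ 2 * (infDist b P + dist (h b) b) + dist (h b) b := by
        gcongr
        exact (hH b).2.trans (by gcongr; exact infDist_le_infDist_add_dist)
    _ = 2 * infDist b P + 3 * dist (h b) b := by ring

theorem nonempty_tameRetractions (hP : ParaConvex α P) (hα : α < 1 / 2)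
    (hne : P.Nonempty) (hcl : IsClosed P) (hbdd : Bornology.IsBounded P) :
    (tameRetractions P).Nonempty :=
  let ⟨g, hg, _⟩ := hP.exists_mem_tameRetractions_dist_le hα hne hcl hbdd continuous_id
    (by simpa using tendsto_const_nhds)
  ⟨g, hg⟩

theorem paraConvex_tameRetractions (hP : ParaConvex α P) (hα : α < 1 / 2) (hne : P.Nonempty)
    (hcl : IsClosed P) (hbdd : Bornology.IsBounded P) :
    ParaConvex (2 * α) (tameRetractions P) := by
  intro r hr g₀ q hq
  have hval : ∀ b, q b ∈ convexHull ℝ (P ∩ ball (g₀ b) r) := by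
    intro b
    have hev : IsLinearMap ℝ fun f : B →ᵇ B => f b := ⟨fun _ _ => rfl, fun _ _ => rfl⟩
    have : q b ∈ convexHull ℝ ((· b) '' (tameRetractions P ∩ ball g₀ r)) :=
      hev.image_convexHull _ ▸ mem_image_of_mem _ hq
    refine convexHull_mono ?_ this
    rintro _ ⟨f, ⟨hfP, hfg₀⟩, rfl⟩
    exact ⟨hfP.1 b, (dist_coe_le_dist b).trans_lt hfg₀⟩
  set l := comap (infDist · P) (𝓝 0)
  have hnear : q ∈ {f : B →ᵇ B | Tendsto (fun b => dist (f b) b) l (𝓝 0)} :=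
    convexHull_min (fun _ hf => hf.1.2) (convex_setOf_tendsto_dist l) hq
  obtain ⟨g, hg, hgq⟩ := hP.exists_mem_tameRetractions_dist_le hα hne hcl hbdd q.continuous hnear
  calc infDist q (tameRetractions P) ≤ dist q g := infDist_le_dist_of_mem hg
    _ ≤ 2 * α * r := dist_le_iff_of_nonempty.2 fun b => by
        rw [dist_comm, mul_assoc]
        exact (hgq b).trans (by gcongr; exact hP r hr (g₀ b) (q b) (hval b))

theorem exists_mem_tameRetractions_dist_le_of_hausdorffDist_lt (hα : α < 1 / 2)
    (hne : P.Nonempty) (hbdd : Bornology.IsBounded P) {f : B →ᵇ B} (hf : f ∈ tameRetractions P)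
    {η : ℝ} (hη : 0 < η) :
    ∃ ρ > 0, ∀ Q : Set B, ParaConvex α Q → Q.Nonempty → IsClosed Q → Bornology.IsBounded Q →
      hausdorffDist P Q < ρ → ∃ g ∈ tameRetractions Q, dist g f ≤ η := by
  obtain ⟨s, hs, hfs⟩ : ∃ s > 0, ∀ b, infDist b P < s → dist (f b) b < η / 5 := by
    obtain ⟨s, hs, h⟩ := (nhds_basis_ball.comap _).eventually_iff.1
      (hf.2.eventually (gt_mem_nhds (by positivity : 0 < η / 5)))
    refine ⟨s, hs, fun b hb => h ?_⟩
    rwa [mem_preimage, mem_ball, Real.dist_0_eq_abs, abs_of_nonneg infDist_nonneg]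
  set ρ := min (s / 2) (η / 5)
  have hρ : 0 < ρ := by positivity
  refine ⟨ρ, hρ, fun Q hQ hQne hQcl hQbdd hPQ => ?_⟩
  have hfin := hausdorffEDist_ne_top_of_nonempty_of_bounded hne hQne hbdd hQbdd
  have hnear : ∀ b, infDist b Q < ρ → dist (f b) b ≤ η / 5 := fun b hb => (hfs b <| by
    have : infDist b P ≤ infDist b Q + hausdorffDist P Q := by
      rw [hausdorffDist_comm]
      exact infDist_le_infDist_add_hausdorffDist (by rwa [hausdorffEDist_comm])
    linarith [min_le_left (s / 2) (η / 5)]).le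
  obtain ⟨h, hhc, hhf, hhb⟩ :=
    exists_continuous_dist_le_tendsto_of_dist_le f.continuous hρ (by positivity) hnear
  obtain ⟨g, hg, hgh⟩ := hQ.exists_mem_tameRetractions_dist_le hα hQne hQcl hQbdd hhc hhb
  refine ⟨g, hg, (dist_le hη.le).2 fun b => ?_⟩
  have hfQ : infDist (f b) Q < ρ := (infDist_le_hausdorffDist_of_mem (hf.1 b) hfin).trans_lt hPQ
  calc dist (g b) (f b) ≤ dist (g b) (h b) + dist (h b) (f b) := dist_triangle _ _ _
    _ ≤ 2 * (infDist (f b) Q + dist (h b) (f b)) + dist (h b) (f b) := by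
        gcongr
        exact (hgh b).trans (by gcongr; exact infDist_le_infDist_add_dist)
    _ ≤ η := by linarith [min_le_right (s / 2) (η / 5), hhf b]

theorem lowerHemicontinuous_tameRetractions {X : Type*} [TopologicalSpace X] (hα : α < 1 / 2)
    {F : X → Set B} (hpara : ∀ x, ParaConvex α (F x)) (hne : ∀ x, (F x).Nonempty)
    (hcl : ∀ x, IsClosed (F x)) (hbdd : ∀ x, Bornology.IsBounded (F x))
    (hF : ∀ x₀ : X, ∀ ε : ℝ, 0 < ε → ∃ U ∈ 𝓝 x₀, ∀ x ∈ U, hausdorffDist (F x) (F x₀) < ε) :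
    LowerHemicontinuous fun x => tameRetractions (F x) := by
  refine lowerHemicontinuous_iff_eventually_exists_dist_lt.2 fun x₀ f hf r hr => ?_
  obtain ⟨ρ, hρ, happrox⟩ := exists_mem_tameRetractions_dist_le_of_hausdorffDist_lt hα (hne x₀)
    (hbdd x₀) hf (half_pos hr)
  obtain ⟨U, hU, hUF⟩ := hF x₀ ρ hρ
  filter_upwards [hU] with x hx
  obtain ⟨g, hg, hgf⟩ := happrox (F x) (hpara x) (hne x) (hcl x) (hbdd x)
    (by rw [hausdorffDist_comm]; exact hUF x hx)
  exact ⟨g, hg, hgf.trans_lt (half_lt_self hr)⟩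

end NormedTameRetractions

/-- Continuous choice of retractions onto paraconvex sets: for `0 ≤ α < 1/2`, a
Hausdorff-continuous multivalued mapping from a paracompact Hausdorff space into a
Banach space whose values are nonempty closed bounded α-paraconvex sets admits a
continuous assignment `x ↦ Ret x` of bounded continuous retractions of `B` onto `F x`. -/
theorem continuous_choice_of_retractions_paraconvex
    {X B : Type*} [TopologicalSpace X] [ParacompactSpace X] [T2Space X]
    [NormedAddCommGroup B] [NormedSpace ℝ B] [CompleteSpace B]
    (α : ℝ) (hα0 : 0 ≤ α) (hα : α < 1 / 2)
    (F : X → Set B)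
    (hne : ∀ x : X, (F x).Nonempty)
    (hclosed : ∀ x : X, IsClosed (F x))
    (hbdd : ∀ x : X, Bornology.IsBounded (F x))
    (hpara : ∀ x : X, ∀ r : ℝ, 0 < r → ∀ c : B,
      ∀ q ∈ convexHull ℝ (F x ∩ Metric.ball c r), Metric.infDist q (F x) ≤ α * r)
    (hHcont : ∀ x₀ : X, ∀ ε : ℝ, 0 < ε → ∃ U ∈ nhds x₀,
      ∀ x ∈ U, Metric.hausdorffDist (F x) (F x₀) < ε) :
    ∃ Ret : X → BoundedContinuousFunction B B, Continuous Ret ∧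
      ∀ x : X, (∀ b : B, Ret x b ∈ F x) ∧ ∀ b ∈ F x, Ret x b = b := by
  obtain ⟨Ret, hRet, hmem⟩ := exists_continuous_selection_of_paraConvex
    (G := fun x => tameRetractions (F x)) (by positivity) (by linarith)
    (lowerHemicontinuous_tameRetractions hα hpara hne hclosed hbdd hHcont)
    (fun x => paraConvex_tameRetractions (hpara x) hα (hne x) (hclosed x) (hbdd x))
    (fun x => nonempty_tameRetractions (hpara x) hα (hne x) (hclosed x) (hbdd x))
    (fun x => isClosed_tameRetractions (hclosed x))
    (continuous_diam_of_hausdorffDist hne hbdd hHcont)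
    (fun x _ hf _ hg => dist_le_diam_of_mem_tameRetractions (hbdd x) hf hg)
  exact ⟨Ret, hRet, fun x => ⟨(hmem x).1, fun b hb => apply_eq_of_mem_tameRetractions (hmem x) hb⟩⟩
end
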